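/- arXiv:1001.3070 — 11 statements merged into one kernel-verified Lean document; each statement's English description precedes it below -/
import Mathlib

section
/- Let B be a compact Hausdorff space and let f, g ∈ C(B) with f ≠ 0. Then τ₊(f, g) = max_{x ∈ A_f} sgn(f(x))·g(x), i.e. the one-sided Gateaux derivative of the uniform norm at f in the direction g equals the maximum of sgn(f(x))·g(x) over the set A_f of points where |f| attains its norm. -/
/-- The one-sided Gateaux derivative of the norm at `f` in the direction `g`:
`τ₊(f,g) = lim_{t→0⁺} (‖f + t•g‖ - ‖f‖)/t`, which exists and equals the infimum of
the difference quotients over `t > 0`. -/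
noncomputable def tauPlus {X : Type*} [NormedAddCommGroup X] [NormedSpace ℝ X]
    (f g : X) : ℝ :=
  ⨅ t : Set.Ioi (0 : ℝ), (‖f + (t : ℝ) • g‖ - ‖f‖) / (t : ℝ)

set_option maxHeartbeats 1000000 in
/-- For `f g ∈ C(B)` with `f ≠ 0` on a compact Hausdorff space `B`,
the one-sided Gateaux derivative of the uniform norm satisfies
`τ₊(f, g) = max_{x ∈ A_f} sgn(f(x))·g(x)`, where `A_f = {x : |f(x)| = ‖f‖}`;
in particular, the maximum is attained. -/
theorem stmt_2 {B : Type*} [TopologicalSpace B] [CompactSpace B] [T2Space B]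
    (f g : C(B, ℝ)) (hf : f ≠ 0) :
    IsGreatest ((fun x => Real.sign (f x) * g x) '' {x : B | |f x| = ‖f‖})
      (tauPlus f g) := by
  have hB : Nonempty B := by
    by_contra h
    exact hf (by ext x; exact absurd ⟨x⟩ h)
  have hfpos : 0 < ‖f‖ := norm_pos_iff.mpr hf
  have habs : ∀ x : B, |f x| ≤ ‖f‖ := fun x => by
    simpa [Real.norm_eq_abs] using f.norm_coe_le_norm x
  have hgabs : ∀ x : B, |g x| ≤ ‖g‖ := fun x => by
    simpa [Real.norm_eq_abs] using g.norm_coe_le_norm x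
  -- A_f
  set Af : Set B := {x : B | |f x| = ‖f‖} with hAf
  have hAfne : Af.Nonempty := by
    obtain ⟨x, -, hx⟩ := isCompact_univ.exists_isMaxOn Set.univ_nonempty
      ((continuous_abs.comp f.continuous).continuousOn)
    refine ⟨x, le_antisymm (habs x) ?_⟩
    exact (ContinuousMap.norm_le f (abs_nonneg _)).mpr
      (fun y => by simpa [Real.norm_eq_abs] using hx (Set.mem_univ y))
  have hAfclosed : IsClosed Af :=
    isClosed_eq (continuous_abs.comp f.continuous) continuous_const
  -- maximize f x * g x over Af
  obtain ⟨z, hzA, hz'⟩ := hAfclosed.isCompact.exists_isMaxOn hAfne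
    ((f.continuous.mul g.continuous).continuousOn)
  have hz : ∀ x ∈ Af, f x * g x ≤ f z * g z := fun x hx => hz' hx
  set m : ℝ := f z * g z / ‖f‖ with hm
  have hmmul : f z * g z = m * ‖f‖ := by rw [hm, div_mul_cancel₀ _ hfpos.ne']
  -- sign formula on Af
  have hsign : ∀ x ∈ Af, Real.sign (f x) * g x = f x * g x / ‖f‖ := by
    intro x hx
    rcases (abs_eq hfpos.le).mp hx with h | h
    · rw [Real.sign_of_pos (h ▸ hfpos), h]; field_simp
    · rw [Real.sign_of_neg (by rw [h]; linarith), h]; field_simp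
  -- lower bound: every difference quotient is ≥ f x * g x / ‖f‖ for x ∈ Af
  have hD : ∀ x ∈ Af, ∀ t : Set.Ioi (0 : ℝ),
      f x * g x / ‖f‖ ≤ (‖f + (t : ℝ) • g‖ - ‖f‖) / (t : ℝ) := by
    rintro x hx ⟨t, ht⟩
    have ht : (0 : ℝ) < t := ht
    have hN : |f x + t * g x| ≤ ‖f + t • g‖ := by
      simpa [Real.norm_eq_abs, smul_eq_mul] using (f + t • g).norm_coe_le_norm x
    rcases (abs_eq hfpos.le).mp hx with h | h
    · have h1 : f x + t * g x ≤ ‖f + t • g‖ := (le_abs_self _).trans hN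
      rw [h] at h1
      rw [div_le_div_iff₀ hfpos ht, h]
      nlinarith
    · have h1 : -(f x + t * g x) ≤ ‖f + t • g‖ := (neg_le_abs _).trans hN
      rw [h] at h1
      rw [div_le_div_iff₀ hfpos ht, h]
      nlinarith
  have hbdd : BddBelow (Set.range fun t : Set.Ioi (0 : ℝ) =>
      (‖f + (t : ℝ) • g‖ - ‖f‖) / (t : ℝ)) := by
    refine ⟨m, ?_⟩
    rintro _ ⟨t, rfl⟩
    exact hD z hzA t
  have hlow : m ≤ tauPlus f g := le_ciInf (hD z hzA)
  -- key: for every ε > 0 there is δ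
  have key : ∀ ε : ℝ, 0 < ε → ∃ δ : ℝ, 0 < δ ∧ δ < ‖f‖ ∧
      ∀ x : B, ‖f‖ - δ ≤ |f x| → f x * g x ≤ (m + ε) * |f x| := by
    intro ε hε
    by_contra hcon
    push_neg at hcon
    set F : ℕ → Set B := fun n =>
      {x | ‖f‖ - min (‖f‖ / 2) (1 / (n + 1)) ≤ |f x| ∧ (m + ε) * |f x| ≤ f x * g x} with hF
    have hFclosed : ∀ n, IsClosed (F n) := by
      intro n
      exact (isClosed_le continuous_const (continuous_abs.comp f.continuous)).inter
        (isClosed_le (continuous_const.mul (continuous_abs.comp f.continuous))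
          (f.continuous.mul g.continuous))
    have hFne : ∀ n : ℕ, (F n).Nonempty := by
      intro n
      have hd1 : (0 : ℝ) < min (‖f‖ / 2) (1 / (n + 1)) := by
        apply lt_min (by linarith)
        positivity
      have hd2 : min (‖f‖ / 2) (1 / (n + 1)) < ‖f‖ :=
        lt_of_le_of_lt (min_le_left _ _) (by linarith)
      obtain ⟨x, hx1, hx2⟩ := hcon _ hd1 hd2
      exact ⟨x, hx1, hx2.le⟩
    have hFsub : ∀ n, F (n + 1) ⊆ F n := by
      intro n x hx
      have hmin : min (‖f‖ / 2) (1 / ((n:ℝ) + 1 + 1)) ≤ min (‖f‖ / 2) (1 / ((n:ℝ) + 1)) := by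
        refine min_le_min le_rfl (one_div_le_one_div_of_le (by positivity) (by linarith))
      refine ⟨le_trans (by push_cast; linarith [hmin]) hx.1, hx.2⟩
    obtain ⟨x, hx⟩ := IsCompact.nonempty_iInter_of_sequence_nonempty_isCompact_isClosed
      F hFsub hFne (hFclosed 0).isCompact hFclosed
    simp only [Set.mem_iInter] at hx
    have hxAf : x ∈ Af := by
      have : ‖f‖ ≤ |f x| := by
        refine le_of_forall_pos_le_add fun η hη => ?_
        obtain ⟨n, hn⟩ := exists_nat_one_div_lt hη
        have := (hx n).1
        have : min (‖f‖ / 2) (1 / (n + 1)) ≤ 1 / ((n : ℝ) + 1) := min_le_right _ _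
        linarith [(hx n).1]
      exact le_antisymm (habs x) this
    have h1 : (m + ε) * ‖f‖ ≤ f x * g x := by
      have := (hx 0).2
      rwa [hxAf] at this
    have h2 : f x * g x ≤ m * ‖f‖ := hmmul ▸ hz x hxAf
    nlinarith
  -- upper bound: tauPlus ≤ m
  have hup : tauPlus f g ≤ m := by
    refine le_of_forall_pos_le_add fun ε hε => ?_
    obtain ⟨δ, hδ0, hδf, hδ⟩ := key ε hε
    set C : ℝ := ‖g‖ + |m| + ε + 1 with hC
    have hC1 : 1 ≤ C := by
      have : (0:ℝ) ≤ ‖g‖ := norm_nonneg _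
      have : (0:ℝ) ≤ |m| := abs_nonneg _
      simp only [hC]; linarith
    set t : ℝ := δ / (2 * C) with hts
    have ht : 0 < t := by positivity
    have htC : t * C = δ / 2 := by rw [hts, div_mul_eq_mul_div, mul_div_mul_right _ _ (by linarith : C ≠ 0)]
    have htg : t * ‖g‖ ≤ δ / 2 := by nlinarith [abs_nonneg m]
    have htm : t * (|m| + ε) ≤ δ / 2 := by nlinarith [norm_nonneg g]
    have htme : -(δ / 2) ≤ t * (m + ε) := by
      nlinarith [neg_abs_le m, abs_nonneg m]
    have hbound : ∀ x : B, |f x + t * g x| ≤ ‖f‖ + t * (m + ε) := by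
      intro x
      have hgx := abs_le.mp (hgabs x)
      have htgx1 : t * g x ≤ δ / 2 := by nlinarith
      have htgx2 : -(δ / 2) ≤ t * g x := by nlinarith
      rcases le_or_gt (|f x|) (‖f‖ - δ) with hcase | hcase
      · calc |f x + t * g x| ≤ |f x| + |t * g x| := abs_add_le _ _
          _ ≤ (‖f‖ - δ) + t * |g x| := by rw [abs_mul, abs_of_pos ht]; linarith
          _ ≤ (‖f‖ - δ) + δ / 2 := by nlinarith [mul_le_mul_of_nonneg_left (hgabs x) ht.le]
          _ ≤ ‖f‖ + t * (m + ε) := by linarith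
      · have hk := hδ x hcase.le
        have hfx := abs_le.mp (habs x)
        rw [abs_le]
        constructor
        · rcases le_or_gt 0 (f x) with hs | hs
          · linarith
          · have hfa : |f x| = -f x := abs_of_neg hs
            rw [hfa] at hcase hk
            have hgm : 0 ≤ g x + (m + ε) := by
              by_contra h
              push_neg at h
              nlinarith
            nlinarith [mul_nonneg ht.le hgm]
        · rcases le_or_gt 0 (f x) with hs | hs
          · have hfa : |f x| = f x := abs_of_nonneg hs
            rw [hfa] at hcase hk
            have hfx0 : 0 < f x := by linarith
            have hgm : g x ≤ m + ε := by
              by_contra h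
              push_neg at h
              nlinarith
            nlinarith [mul_le_mul_of_nonneg_left hgm ht.le]
          · have hfa : |f x| = -f x := abs_of_neg hs
            rw [hfa] at hcase hk
            linarith
    have hnorm : ‖f + t • g‖ ≤ ‖f‖ + t * (m + ε) := by
      refine (ContinuousMap.norm_le _ (by linarith)).mpr fun x => ?_
      simpa [Real.norm_eq_abs, smul_eq_mul] using hbound x
    calc tauPlus f g ≤ (‖f + t • g‖ - ‖f‖) / t := ciInf_le hbdd ⟨t, ht⟩
      _ ≤ m + ε := by rw [div_le_iff₀ ht]; linarith
  have heq : tauPlus f g = m := le_antisymm hup hlow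
  constructor
  · exact ⟨z, hzA, by show Real.sign (f z) * g z = tauPlus f g; rw [hsign z hzA, heq]⟩
  · rintro y ⟨x, hx, rfl⟩
    show Real.sign (f x) * g x ≤ tauPlus f g
    rw [hsign x hx, heq, hm]
    have := hz x hx
    gcongr
end

section
/- Let B be a compact Hausdorff space and M a finite-dimensional subspace of C(B). Then the set of functions with a strongly unique best approximant from M is dense in the set of functions with a unique best approximant from M: for every f ∈ C(B) having a unique best approximant from M and every ε > 0, there exists g ∈ C(B) with ‖f − g‖ < ε such that g has a strongly unique best approximant from M. -/
set_option maxHeartbeats 2000000 in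
/-- Let `M` be a finite-dimensional subspace of `C(B)`, `B` compact
Hausdorff.  The set of functions with a strongly unique best approximant from `M` is
dense in the set of functions with a unique best approximant from `M`: if `f` has a
unique best approximant from `M` and `ε > 0`, then there is `g` with `‖f - g‖ < ε`
having a strongly unique best approximant from `M`. -/
theorem stmt_4 {B : Type*} [TopologicalSpace B] [CompactSpace B] [T2Space B]
    (M : Submodule ℝ C(B, ℝ)) [FiniteDimensional ℝ M]
    (f : C(B, ℝ))
    (hf : ∃! mstar : C(B, ℝ), mstar ∈ M ∧ ∀ m ∈ M, ‖f - mstar‖ ≤ ‖f - m‖)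
    (ε : ℝ) (hε : 0 < ε) :
    ∃ g : C(B, ℝ), ‖f - g‖ < ε ∧
      ∃ mstar ∈ M, ∃ γ : ℝ, 0 < γ ∧
        ∀ m ∈ M, γ * ‖m - mstar‖ ≤ ‖g - m‖ - ‖g - mstar‖ := by
  classical
  obtain ⟨mstar, ⟨hmM, hbest⟩, huniq⟩ := hf
  set e : C(B, ℝ) := f - mstar with he
  set d : ℝ := ‖e‖ with hd
  by_cases hd0 : d = 0
  · -- f = mstar, take g = f
    have hfe : f = mstar := by
      have h0 : e = 0 := norm_eq_zero.mp hd0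
      have := sub_eq_zero.mp (he ▸ h0 : f - mstar = 0)
      exact this
    refine ⟨f, by simpa using hε, mstar, hmM, 1, one_pos, ?_⟩
    intro m hm
    rw [hfe]
    simp [norm_sub_rev]
  have hdpos : 0 < d := lt_of_le_of_ne (norm_nonneg _) (Ne.symm hd0)
  -- nontrivial M case split
  by_cases hMtriv : ∀ m ∈ M, m = (0 : C(B, ℝ))
  · -- then mstar = 0 and strong uniqueness is trivial with g = f
    refine ⟨f, by simpa using hε, mstar, hmM, 1, one_pos, ?_⟩
    intro m hm
    rw [hMtriv m hm, hMtriv mstar hmM]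
    simp
  push_neg at hMtriv
  obtain ⟨m₀, hm₀M, hm₀⟩ := hMtriv
  set δ : ℝ := min (ε / 2) (d / 2) with hδ
  have hδpos : 0 < δ := lt_min (by linarith) (by linarith)
  have hδd : δ ≤ d / 2 := min_le_right _ _
  have hδε : δ ≤ ε / 2 := min_le_left _ _
  have hdd : 0 < d - δ := by linarith
  set c : ℝ := d / (d - δ) with hc
  have hc1 : 1 ≤ c := by
    rw [hc, le_div_iff₀ hdd]; linarith
  have hcd : c * (d - δ) = d := by
    rw [hc]; exact div_mul_cancel₀ d hdd.ne'
  -- the clamp function ψ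
  set ψ : ℝ → ℝ := fun t => max (-d) (min d (c * t)) with hψ
  have hψcont : Continuous ψ := by fun_prop
  have hψle : ∀ t, |ψ t| ≤ d := by
    intro t
    rw [abs_le]
    constructor
    · exact le_max_left _ _
    · exact max_le (by linarith) (min_le_left _ _)
  have hψhigh : ∀ t, d - δ ≤ t → ψ t = d := by
    intro t ht
    have h1 : d ≤ c * t := by
      calc d = c * (d - δ) := hcd.symm
      _ ≤ c * t := by nlinarith
    rw [hψ]
    simp only
    rw [min_eq_left h1, max_eq_right (by linarith)]
  have hψlow : ∀ t, t ≤ -(d - δ) → ψ t = -d := by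
    intro t ht
    have h1 : c * t ≤ -d := by nlinarith
    rw [hψ]
    simp only
    rw [min_eq_right (by linarith), max_eq_left h1]
  have hψclose : ∀ t, |t| ≤ d → |ψ t - t| ≤ δ := by
    intro t ht
    rw [abs_le] at ht
    rcases le_or_gt (d - δ) t with h1 | h1
    · rw [hψhigh t h1, abs_le]; constructor <;> linarith
    rcases le_or_gt t (-(d - δ)) with h2 | h2
    · rw [hψlow t h2, abs_le]; constructor <;> linarith
    · have habs : |t| < d - δ := abs_lt.mpr ⟨by linarith, h1⟩
      have hct : |c * t| < d := by
        rw [abs_mul, abs_of_nonneg (by linarith : (0:ℝ) ≤ c)]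
        calc c * |t| < c * (d - δ) := by nlinarith
        _ = d := hcd
      obtain ⟨hct1, hct2⟩ := abs_lt.mp hct
      have hψt : ψ t = c * t := by
        rw [hψ]
        simp only
        rw [min_eq_right hct2.le, max_eq_right hct1.le]
      rw [hψt]
      have heq : |c * t - t| = |t| * (c - 1) := by
        rw [show c * t - t = t * (c - 1) by ring, abs_mul,
          abs_of_nonneg (by linarith : (0:ℝ) ≤ c - 1)]
      rw [heq]
      have hc1' : c - 1 = δ / (d - δ) := by
        rw [hc, div_sub_one hdd.ne']
        congr 1
        ring
      rw [hc1']
      have h5 : |t| * (δ / (d - δ)) ≤ (d - δ) * (δ / (d - δ)) :=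
        mul_le_mul_of_nonneg_right habs.le (div_nonneg hδpos.le hdd.le)
      have h6 : (d - δ) * (δ / (d - δ)) = δ := by field_simp
      linarith
  -- the perturbed function
  set eg : C(B, ℝ) := ⟨fun x => ψ (e x), by fun_prop⟩ with heg
  set g : C(B, ℝ) := mstar + eg with hg
  have hgms : g - mstar = eg := by rw [hg]; abel
  have hfg : f - g = e - eg := by rw [hg, he]; abel
  have hgm : ∀ m : C(B, ℝ), g - m = eg + (mstar - m) := by
    intro m; rw [hg]; abel
  -- pointwise bound on e
  have hept : ∀ x, |e x| ≤ d := by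
    intro x
    have := e.norm_coe_le_norm x
    rwa [Real.norm_eq_abs] at this
  -- ‖f - g‖ < ε
  have hfg_lt : ‖f - g‖ < ε := by
    rw [hfg]
    have : ‖e - eg‖ ≤ δ := by
      rw [ContinuousMap.norm_le _ hδpos.le]
      intro x
      have : (e - eg) x = e x - ψ (e x) := by simp [heg]
      rw [this, Real.norm_eq_abs, abs_sub_comm]
      exact hψclose _ (hept x)
    linarith
  -- critical set
  set E' : Set B := {x | d - δ ≤ |e x|} with hE'
  -- sign function
  set s : B → ℝ := fun x => if 0 < e x then 1 else -1 with hs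
  have hsabs : ∀ x, |s x| = 1 := by
    intro x
    rw [hs]
    by_cases h : 0 < e x <;> simp [h]
  have hskey : ∀ x ∈ E', s x * eg x = d := by
    intro x hx
    have hx' : d - δ ≤ |e x| := hx
    by_cases h : 0 < e x
    · have : d - δ ≤ e x := by rwa [abs_of_pos h] at hx'
      have heq : eg x = d := hψhigh _ this
      rw [hs]; simp [h, heq]
    · push_neg at h
      have : e x ≤ -(d - δ) := by
        rw [abs_of_nonpos h] at hx'
        linarith
      have heq : eg x = -d := hψlow _ this
      rw [hs]; simp [h.not_gt, heq]
  -- there is a point where |e| attains d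
  obtain ⟨x₀, hx₀⟩ : ∃ x₀, ∀ x, |e x| ≤ |e x₀| := by
    have hne : Nonempty B := by
      by_contra hB
      rw [not_nonempty_iff] at hB
      have : ‖e‖ ≤ 0 := by
        rw [ContinuousMap.norm_le _ le_rfl]
        intro x
        exact absurd (Nonempty.intro x) (not_nonempty_iff.mpr hB)
      exact absurd (le_antisymm this (norm_nonneg _)) (by rw [← hd]; exact hd0)
    obtain ⟨x₀, -, hx₀⟩ := isCompact_univ.exists_isMaxOn Set.univ_nonempty
      (continuous_abs.comp e.continuous).continuousOn
    exact ⟨x₀, fun x => hx₀ (Set.mem_univ x)⟩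
  have hx₀d : |e x₀| = d := by
    refine le_antisymm (hept x₀) ?_
    rw [hd, ContinuousMap.norm_le _ (abs_nonneg _)]
    intro x
    rw [Real.norm_eq_abs]
    exact hx₀ x
  have hx₀E : x₀ ∈ E' := by
    rw [hE']
    show d - δ ≤ |e x₀|
    rw [hx₀d]; linarith
  -- ‖g - mstar‖ = d
  have hgmsd : ‖g - mstar‖ = d := by
    rw [hgms]
    refine le_antisymm ?_ ?_
    · rw [ContinuousMap.norm_le _ hdpos.le]
      intro x
      rw [Real.norm_eq_abs]
      exact hψle _
    · have h1 : |eg x₀| = d := by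
        have := hskey x₀ hx₀E
        calc |eg x₀| = |s x₀| * |eg x₀| := by rw [hsabs]; ring
        _ = |s x₀ * eg x₀| := (abs_mul _ _).symm
        _ = d := by rw [this, abs_of_pos hdpos]
      calc d = |eg x₀| := h1.symm
      _ = ‖eg x₀‖ := (Real.norm_eq_abs _).symm
      _ ≤ ‖eg‖ := eg.norm_coe_le_norm x₀
  -- KEY LEMMA: uniqueness kills nonzero m with s * m ≤ 0 on E'
  have keyA : ∀ m : C(B, ℝ), m ∈ M → (∀ x ∈ E', s x * m x ≤ 0) → m = 0 := by
    intro m hmMem hle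
    by_contra hm0
    have hmn : 0 < ‖m‖ := norm_pos_iff.mpr hm0
    set t : ℝ := δ / ‖m‖ with ht
    have htpos : 0 < t := div_pos hδpos hmn
    have htm : ∀ x, t * |m x| ≤ δ := by
      intro x
      have h1 : |m x| ≤ ‖m‖ := by
        have := m.norm_coe_le_norm x
        rwa [Real.norm_eq_abs] at this
      rw [ht]
      rw [div_mul_eq_mul_div, div_le_iff₀ hmn]
      nlinarith
    have hbound : ∀ x, |e x + t * m x| ≤ d := by
      intro x
      by_cases hx : x ∈ E'
      · have hsm := hle x hx
        by_cases hex : 0 < e x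
        · have hs1 : s x = 1 := by rw [hs]; simp [hex]
          rw [hs1, one_mul] at hsm
          have hge : d - δ ≤ e x := by
            have : d - δ ≤ |e x| := hx
            rwa [abs_of_pos hex] at this
          rw [abs_le]
          constructor
          · have : t * m x ≥ -(t * |m x|) := by
              have : t * m x ≥ t * (-|m x|) := by
                apply mul_le_mul_of_nonneg_left (neg_abs_le _) htpos.le
              linarith
            have h2 := htm x
            linarith
          · have : t * m x ≤ 0 := mul_nonpos_of_nonneg_of_nonpos htpos.le hsm
            have := hept x
            rw [abs_le] at this
            linarith
        · push_neg at hex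
          have hs1 : s x = -1 := by rw [hs]; simp [hex.not_gt]
          rw [hs1, neg_mul, one_mul, neg_nonpos] at hsm
          have hge : e x ≤ -(d - δ) := by
            have h2 : d - δ ≤ |e x| := hx
            rw [abs_of_nonpos hex] at h2
            linarith
          rw [abs_le]
          constructor
          · have : t * m x ≥ 0 := mul_nonneg htpos.le hsm
            have := hept x
            rw [abs_le] at this
            linarith
          · have h3 : t * m x ≤ t * |m x| := by
              apply mul_le_mul_of_nonneg_left (le_abs_self _) htpos.le
            have h2 := htm x
            linarith
      · have hxlt : |e x| < d - δ := by
          rw [hE'] at hx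
          simpa using not_le.mp hx
        have h3 : t * |m x| ≤ δ := htm x
        calc |e x + t * m x| ≤ |e x| + |t * m x| := abs_add_le _ _
        _ = |e x| + t * |m x| := by rw [abs_mul, abs_of_pos htpos]
        _ ≤ d := by linarith
    -- mstar - t • m is another best approximant
    have hn : (mstar - t • m) ∈ M := sub_mem hmM (M.smul_mem t hmMem)
    have hnb : ‖f - (mstar - t • m)‖ ≤ d := by
      have heq : f - (mstar - t • m) = e + t • m := by rw [he]; abel
      rw [heq, ContinuousMap.norm_le _ hdpos.le]
      intro x
      have : (e + t • m) x = e x + t * m x := by simp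
      rw [this, Real.norm_eq_abs]
      exact hbound x
    have : mstar - t • m = mstar := by
      apply huniq
      exact ⟨hn, fun p hp => le_trans hnb (hbest p hp)⟩
    have : t • m = 0 := by
      have := sub_eq_self.mp this
      exact this
    rcases smul_eq_zero.mp this with h | h
    · exact absurd h htpos.ne'
    · exact hm0 h
  -- the sup function on the submodule
  set F : ↥M → ℝ := fun u => sSup ((fun x => s x * (u : C(B, ℝ)) x) '' E') with hF
  have hE'ne : E'.Nonempty := ⟨x₀, hx₀E⟩
  have himne : ∀ u : ↥M, ((fun x => s x * (u : C(B, ℝ)) x) '' E').Nonempty :=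
    fun u => hE'ne.image _
  have hbdd : ∀ u : ↥M, BddAbove ((fun x => s x * (u : C(B, ℝ)) x) '' E') := by
    intro u
    refine ⟨‖u‖, ?_⟩
    rintro y ⟨x, -, rfl⟩
    calc s x * (u : C(B, ℝ)) x ≤ |s x * (u : C(B, ℝ)) x| := le_abs_self _
    _ = |(u : C(B, ℝ)) x| := by rw [abs_mul, hsabs, one_mul]
    _ ≤ ‖(u : C(B, ℝ))‖ := by
        have := (u : C(B, ℝ)).norm_coe_le_norm x
        rwa [Real.norm_eq_abs] at this
    _ = ‖u‖ := rfl
  have hFle : ∀ u v : ↥M, F u ≤ F v + ‖u - v‖ := by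
    intro u v
    apply csSup_le (himne u)
    rintro y ⟨x, hxE, rfl⟩
    show s x * (u : C(B, ℝ)) x ≤ F v + ‖u - v‖
    have h1 : s x * (v : C(B, ℝ)) x ≤ F v := le_csSup (hbdd v) ⟨x, hxE, rfl⟩
    have h2 : s x * ((u : C(B, ℝ)) x - (v : C(B, ℝ)) x) ≤ ‖u - v‖ := by
      calc s x * ((u : C(B, ℝ)) x - (v : C(B, ℝ)) x)
          ≤ |s x * ((u : C(B, ℝ)) x - (v : C(B, ℝ)) x)| := le_abs_self _
      _ = |((u : C(B, ℝ)) - (v : C(B, ℝ))) x| := by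
          rw [abs_mul, hsabs, one_mul]; simp
      _ ≤ ‖(u : C(B, ℝ)) - (v : C(B, ℝ))‖ := by
          have := ((u : C(B, ℝ)) - (v : C(B, ℝ))).norm_coe_le_norm x
          rwa [Real.norm_eq_abs] at this
      _ = ‖u - v‖ := by rw [← Submodule.coe_sub]; rfl
    have h3 : s x * (u : C(B, ℝ)) x
        = s x * (v : C(B, ℝ)) x + s x * ((u : C(B, ℝ)) x - (v : C(B, ℝ)) x) := by ring
    linarith
  have hFcont : Continuous F := by
    apply LipschitzWith.continuous (K := 1)
    apply LipschitzWith.of_dist_le_mul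
    intro u v
    simp only [NNReal.coe_one, one_mul]
    rw [Real.dist_eq, dist_eq_norm, abs_sub_le_iff]
    constructor
    · have := hFle u v; exact sub_le_iff_le_add'.mpr this
    · have := hFle v u
      exact (sub_le_iff_le_add'.mpr this).trans_eq (norm_sub_rev v u)
  -- the sphere of M is compact and nonempty
  haveI : ProperSpace ↥M := FiniteDimensional.proper ℝ ↥M
  have hsphC : IsCompact (Metric.sphere (0 : ↥M) 1) := isCompact_sphere 0 1
  have hsphNe : (Metric.sphere (0 : ↥M) 1).Nonempty := by
    refine ⟨(‖(⟨m₀, hm₀M⟩ : ↥M)‖⁻¹ : ℝ) • (⟨m₀, hm₀M⟩ : ↥M), ?_⟩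
    have h0 : (⟨m₀, hm₀M⟩ : ↥M) ≠ 0 := by
      intro h
      apply hm₀
      have := congrArg (Subtype.val) h
      simpa using this
    rw [Metric.mem_sphere, dist_zero_right]
    exact norm_smul_inv_norm (𝕜 := ℝ) h0
  obtain ⟨umin, huminS, hmin⟩ := hsphC.exists_isMinOn hsphNe hFcont.continuousOn
  set γ₀ : ℝ := F umin with hγ₀
  have hγ₀pos : 0 < γ₀ := by
    have humin1 : ‖umin‖ = 1 := by
      exact mem_sphere_zero_iff_norm.mp huminS
    have humin0 : (umin : C(B, ℝ)) ≠ 0 := by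
      intro h
      have : umin = 0 := by ext1; rw [h]; rfl
      rw [this] at humin1; simp at humin1
    have : ¬ (∀ x ∈ E', s x * (umin : C(B, ℝ)) x ≤ 0) := by
      intro hcon
      exact humin0 (keyA _ umin.2 hcon)
    push_neg at this
    obtain ⟨x, hxE, hxpos⟩ := this
    calc (0 : ℝ) < s x * (umin : C(B, ℝ)) x := hxpos
    _ ≤ γ₀ := le_csSup (hbdd umin) ⟨x, hxE, rfl⟩
  -- conclude
  refine ⟨g, hfg_lt, mstar, hmM, γ₀ / 2, by linarith, ?_⟩
  intro m hm
  by_cases hmeq : m = mstar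
  · rw [hmeq]; simp
  have hmem : mstar - m ∈ M := sub_mem hmM hm
  set uh : ↥M := ⟨mstar - m, hmem⟩ with huh
  have huhn : ‖uh‖ = ‖mstar - m‖ := rfl
  have huh0 : 0 < ‖uh‖ := by
    rw [huhn]
    rw [norm_pos_iff, sub_ne_zero]
    exact fun h => hmeq h.symm
  set u : ↥M := (‖uh‖⁻¹) • uh with hu
  have huS : u ∈ Metric.sphere (0 : ↥M) 1 := by
    rw [Metric.mem_sphere, dist_zero_right, hu]
    exact norm_smul_inv_norm (𝕜 := ℝ) (norm_pos_iff.mp huh0)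
  have hFu : γ₀ ≤ F u := hmin huS
  have hlt : γ₀ / 2 < F u := by linarith
  obtain ⟨y, hy, hylt⟩ := exists_lt_of_lt_csSup (himne u) hlt
  obtain ⟨x, hxE, rfl⟩ := hy
  have hylt' : γ₀ / 2 < s x * (u : C(B, ℝ)) x := hylt
  have hux : (u : C(B, ℝ)) x = ‖uh‖⁻¹ * (mstar - m) x := by
    rw [hu]
    simp [huh]
  rw [hux] at hylt'
  have hkey : γ₀ / 2 * ‖mstar - m‖ < s x * (mstar - m) x := by
    have h2 : γ₀ / 2 * ‖uh‖ < s x * (‖uh‖⁻¹ * (mstar - m) x) * ‖uh‖ :=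
      mul_lt_mul_of_pos_right hylt' huh0
    have h3 : s x * (‖uh‖⁻¹ * (mstar - m) x) * ‖uh‖ = s x * (mstar - m) x := by
      rw [show s x * (‖uh‖⁻¹ * (mstar - m) x) * ‖uh‖
          = s x * (mstar - m) x * (‖uh‖⁻¹ * ‖uh‖) by ring,
        inv_mul_cancel₀ huh0.ne', mul_one]
    rw [h3, huhn] at h2
    exact h2
  -- now the norm estimate
  have hgmx : (g - m) x = eg x + (mstar - m) x := by
    rw [hgm m]; simp
  have hsgx : s x * ((g - m) x) = d + s x * (mstar - m) x := by
    rw [hgmx, mul_add, hskey x hxE]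
  have h1 : d + γ₀ / 2 * ‖mstar - m‖ ≤ ‖g - m‖ := by
    calc d + γ₀ / 2 * ‖mstar - m‖ ≤ d + s x * (mstar - m) x := by linarith
    _ = s x * ((g - m) x) := hsgx.symm
    _ ≤ |s x * ((g - m) x)| := le_abs_self _
    _ = |(g - m) x| := by rw [abs_mul, hsabs, one_mul]
    _ ≤ ‖g - m‖ := by
        have := (g - m).norm_coe_le_norm x
        rwa [Real.norm_eq_abs] at this
  rw [hgmsd, norm_sub_rev m mstar]
  linarith
end

section
/- Let m be a positive integer, equip ℝ^m with the sup norm ‖x‖ = max_{1≤i≤m} |x_i| (the space ℓ^m_∞), and let M be a linear subspace of ℝ^m. If m* ∈ M is the unique best approximant to a vector x ∈ ℝ^m from M, then m* is a strongly unique best approximant to x from M: there exists γ > 0 such that ‖x − v‖ − ‖x − m*‖ ≥ γ‖v − m*‖ for all v ∈ M. -/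
/-- In `ℓ^d_∞ = (Fin d → ℝ)` with the sup norm (`d ≥ 1`), every
unique best approximant from a linear subspace `M` is strongly unique: if `m* ∈ M`
is the unique best approximant to `x` from `M`, then there is `γ > 0` with
`‖x - v‖ - ‖x - m*‖ ≥ γ‖v - m*‖` for all `v ∈ M`. -/
theorem stmt_5 (d : ℕ) (hd : 0 < d) (M : Submodule ℝ (Fin d → ℝ))
    (x : Fin d → ℝ) (mstar : Fin d → ℝ) (hmem : mstar ∈ M)
    (hbest : ∀ v ∈ M, ‖x - mstar‖ ≤ ‖x - v‖)
    (huniq : ∀ v ∈ M, (∀ w ∈ M, ‖x - v‖ ≤ ‖x - w‖) → v = mstar) :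
    ∃ γ : ℝ, 0 < γ ∧ ∀ v ∈ M, γ * ‖v - mstar‖ ≤ ‖x - v‖ - ‖x - mstar‖ := by
  classical
  have : Nonempty (Fin d) := ⟨⟨0, hd⟩⟩
  set r := ‖x - mstar‖ with hrdef
  have hr0 : 0 ≤ r := norm_nonneg _
  set y := x - mstar with hydef
  -- the set of "critical pairs"
  set S : Finset (Fin d × Bool) :=
    Finset.univ.filter (fun p => (if p.2 then (1:ℝ) else -1) * y p.1 = r) with hSdef
  have hmemS : ∀ p : Fin d × Bool, p ∈ S ↔ (if p.2 then (1:ℝ) else -1) * y p.1 = r := by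
    intro p; simp [hSdef]
  -- S is nonempty: the sup norm is attained
  have hSne : S.Nonempty := by
    obtain ⟨i, -, hi⟩ := Finset.exists_max_image (Finset.univ : Finset (Fin d))
      (fun i => |y i|) ⟨⟨0, hd⟩, Finset.mem_univ _⟩
    have h1 : |y i| = r := by
      apply le_antisymm
      · simpa using norm_le_pi_norm y i
      · rw [hrdef]
        exact (pi_norm_le_iff_of_nonneg (abs_nonneg _)).2 fun j => by
          simpa using hi j (Finset.mem_univ j)
    rcases le_or_gt 0 (y i) with h | h
    · exact ⟨(i, true), (hmemS _).2 (by simpa [abs_of_nonneg h] using h1)⟩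
    · exact ⟨(i, false), (hmemS _).2 (by simp [← h1, abs_of_neg h])⟩
  set s : (Fin d → ℝ) → ℝ :=
    fun w => S.sup' hSne (fun p => -((if p.2 then (1:ℝ) else -1) * w p.1)) with hsdef
  -- key pointwise bound
  have hkey : ∀ v : Fin d → ℝ, s (v - mstar) ≤ ‖x - v‖ - r := by
    intro v
    apply Finset.sup'_le
    intro p hp
    have hcrit := (hmemS p).1 hp
    set σ : ℝ := if p.2 then (1:ℝ) else -1 with hσ
    have hσabs : ∀ z : ℝ, σ * z ≤ |z| := by
      intro z
      rw [hσ]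
      cases p.2
      · simpa using neg_le_abs z
      · simpa using le_abs_self z
    have h1 : σ * (x p.1 - v p.1) ≤ ‖x - v‖ := by
      calc σ * (x p.1 - v p.1) ≤ |x p.1 - v p.1| := hσabs _
        _ ≤ ‖x - v‖ := by simpa using norm_le_pi_norm (x - v) p.1
    have h2 : σ * (x p.1 - v p.1) = r - σ * ((v - mstar) p.1) := by
      rw [← hcrit]; simp [hydef]; ring
    linarith [h1, h2.symm.le]
  -- homogeneity
  have hhom : ∀ c : ℝ, 0 ≤ c → ∀ w, s (c • w) = c * s w := by
    intro c hc w
    have h : c * S.sup' hSne (fun p => -((if p.2 then (1:ℝ) else -1) * w p.1))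
        = S.sup' hSne (fun p => c * (-((if p.2 then (1:ℝ) else -1) * w p.1))) :=
      Finset.comp_sup'_eq_sup'_comp hSne (fun z => c * z)
        (fun a b => mul_max_of_nonneg a b hc)
    simp only [hsdef]
    rw [h]
    exact Finset.sup'_congr hSne rfl (fun p _ => by simp only [Pi.smul_apply, smul_eq_mul]; ring)
  -- positivity on M \ {0}
  have hpos : ∀ u, u ∈ M → u ≠ 0 → 0 < s u := by
    intro u huM hu0
    by_contra hle
    push_neg at hle
    have hsgn : ∀ p ∈ S, 0 ≤ (if p.2 then (1:ℝ) else -1) * u p.1 := by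
      intro p hp
      have := Finset.le_sup' (fun p : Fin d × Bool => -((if p.2 then (1:ℝ) else -1) * u p.1)) hp
      have := this.trans hle
      linarith
    -- case r = 0 : then every coordinate is critical in both signs, so u = 0
    rcases eq_or_lt_of_le hr0 with hr | hr
    · apply hu0
      funext i
      have hyi : y i = 0 := by
        have h1 : |y i| ≤ ‖y‖ := by simpa using norm_le_pi_norm y i
        have h2 : ‖y‖ = 0 := by rw [← hrdef]; exact hr.symm
        exact abs_eq_zero.1 (le_antisymm (h2 ▸ h1) (abs_nonneg _))
      have h1 : 0 ≤ u i := by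
        have := hsgn (i, true) ((hmemS _).2 (by simp [hyi, ← hr])); simpa using this
      have h2 : u i ≤ 0 := by
        have := hsgn (i, false) ((hmemS _).2 (by simp [hyi, ← hr])); simpa using this
      simpa using le_antisymm h2 h1
    -- case r > 0 : construct a small perturbation that is also a best approximant
    · have hu : 0 < ‖u‖ := norm_pos_iff.2 hu0
      set b : Fin d → ℝ := fun i => if |y i| = r then 2 * r else r - |y i| with hbdef
      have hbpos : ∀ i, 0 < b i := by
        intro i
        by_cases h : |y i| = r
        · simp [hbdef, h]; linarith
        · have : |y i| ≤ r := by simpa using norm_le_pi_norm y i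
          have : |y i| < r := lt_of_le_of_ne this h
          simp [hbdef, h]; linarith
      set t : ℝ := (Finset.univ.inf' Finset.univ_nonempty b) / ‖u‖ with htdef
      have htb : ∀ i, t * ‖u‖ ≤ b i := by
        intro i
        rw [htdef, div_mul_cancel₀ _ (ne_of_gt hu)]
        exact Finset.inf'_le b (Finset.mem_univ i)
      have ht : 0 < t := by
        apply div_pos _ hu
        exact (Finset.lt_inf'_iff _).2 fun i _ => hbpos i
      -- per coordinate bound
      have hcoord : ∀ i, |y i - t * u i| ≤ r := by
        intro i
        have hui : t * |u i| ≤ t * ‖u‖ := by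
          apply mul_le_mul_of_nonneg_left _ ht.le
          simpa using norm_le_pi_norm u i
        by_cases h : |y i| = r
        · -- critical coordinate
          have hb : b i = 2 * r := by simp [hbdef, h]
          have htu : t * |u i| ≤ 2 * r := by rw [← hb]; exact hui.trans (htb i)
          rcases le_or_gt 0 (y i) with hyi | hyi
          · have hyir : y i = r := by rwa [abs_of_nonneg hyi] at h
            have hu1 : 0 ≤ u i := by
              have := hsgn (i, true) ((hmemS _).2 (by simpa using hyir)); simpa using this
            rw [hyir, abs_le]
            constructor
            · have : t * u i ≤ t * |u i| :=
                mul_le_mul_of_nonneg_left (le_abs_self _) ht.le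
              linarith
            · nlinarith
          · have hyir : y i = -r := by
              have := abs_of_neg hyi; linarith [h, this]
            have hu1 : u i ≤ 0 := by
              have := hsgn (i, false) ((hmemS _).2 (by simp [hyir])); simpa using this
            have htun : t * (-u i) ≤ 2 * r := by rw [← abs_of_nonpos hu1]; exact htu
            have hpos' : 0 ≤ t * (-u i) := mul_nonneg ht.le (neg_nonneg.2 hu1)
            rw [hyir, abs_le]
            constructor <;> nlinarith
        · have hb : b i = r - |y i| := by simp [hbdef, h]
          have : t * |u i| ≤ r - |y i| := by rw [← hb]; exact hui.trans (htb i)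
          calc |y i - t * u i| ≤ |y i| + |t * u i| := abs_sub _ _
            _ = |y i| + t * |u i| := by rw [abs_mul, abs_of_pos ht]
            _ ≤ r := by linarith
      -- so mstar + t • u is also a best approximant
      set v' : Fin d → ℝ := mstar + t • u with hv'def
      have hv'M : v' ∈ M := M.add_mem hmem (M.smul_mem t huM)
      have hle' : ‖x - v'‖ ≤ r := by
        apply (pi_norm_le_iff_of_nonneg hr0).2
        intro i
        have : (x - v') i = y i - t * u i := by simp [hv'def, hydef]; ring
        rw [this]
        simpa using hcoord i
      have := huniq v' hv'M (fun w hw => hle'.trans (hbest w hw))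
      have : t • u = 0 := by
        have h := this; rw [hv'def] at h
        have : mstar + t • u - mstar = mstar - mstar := by rw [h]
        simpa using this
      exact hu0 (by simpa [smul_eq_zero, ne_of_gt ht] using this)
  -- handle the degenerate case M ⊆ {mstar}
  by_cases hM : ∀ v ∈ M, v = mstar
  · refine ⟨1, one_pos, fun v hv => ?_⟩
    rw [hM v hv]
    simp
    exact le_rfl
  push_neg at hM
  obtain ⟨v₀, hv₀M, hv₀⟩ := hM
  -- compactness: minimize s on the unit sphere of M
  set K : Set (Fin d → ℝ) := (M : Set (Fin d → ℝ)) ∩ Metric.sphere 0 1 with hKdef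
  have hKc : IsCompact K := (isCompact_sphere 0 1).inter_left M.closed_of_finiteDimensional
  have hKne : K.Nonempty := by
    refine ⟨‖v₀ - mstar‖⁻¹ • (v₀ - mstar), M.smul_mem _ (M.sub_mem hv₀M hmem), ?_⟩
    have h0 : v₀ - mstar ≠ 0 := sub_ne_zero.2 hv₀
    have hn : ‖v₀ - mstar‖ ≠ 0 := norm_ne_zero_iff.2 h0
    simp [norm_smul, abs_of_nonneg (inv_nonneg.2 (norm_nonneg _)), inv_mul_cancel₀ hn]
  have hcont : Continuous s := by
    rw [hsdef]
    apply Continuous.finset_sup'_apply hSne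
    intro p hp
    exact (continuous_const.mul (continuous_apply p.1)).neg
  obtain ⟨u₀, hu₀K, hu₀min'⟩ := hKc.exists_isMinOn hKne hcont.continuousOn
  have hu₀min : ∀ u ∈ K, s u₀ ≤ s u := fun u hu => hu₀min' hu
  have hu₀M : u₀ ∈ M := hu₀K.1
  have hu₀n : ‖u₀‖ = 1 := by simpa using hu₀K.2
  have hγ : 0 < s u₀ := hpos u₀ hu₀M (by intro h; rw [h] at hu₀n; simp at hu₀n)
  refine ⟨s u₀, hγ, fun v hv => ?_⟩
  by_cases hveq : v = mstar
  · rw [hveq]; simp; exact le_rfl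
  have h0 : v - mstar ≠ 0 := sub_ne_zero.2 hveq
  have hn : (0:ℝ) < ‖v - mstar‖ := norm_pos_iff.2 h0
  set u : Fin d → ℝ := ‖v - mstar‖⁻¹ • (v - mstar) with hudef
  have huK : u ∈ K := by
    refine ⟨M.smul_mem _ (M.sub_mem hv hmem), ?_⟩
    simp [hudef, norm_smul, abs_of_nonneg (inv_nonneg.2 (norm_nonneg _)),
      inv_mul_cancel₀ (ne_of_gt hn)]
  have hrec : v - mstar = ‖v - mstar‖ • u := by
    rw [hudef, smul_smul, mul_inv_cancel₀ (ne_of_gt hn), one_smul]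
  have h1 : s u₀ * ‖v - mstar‖ ≤ ‖v - mstar‖ * s u := by
    rw [mul_comm]
    exact mul_le_mul_of_nonneg_left (hu₀min u huK) hn.le
  have h2 : s (v - mstar) = ‖v - mstar‖ * s u := by
    conv_lhs => rw [hrec]
    exact hhom _ (norm_nonneg _) u
  have h3 := hkey v
  rw [← h2] at h1
  linarith
end

section
/- Let M be a subset of a real normed linear space X, let f ∈ X, and let m* ∈ M be a best approximant to f from M satisfying, for some γ > 0, ‖f − m‖ − ‖f − m*‖ ≥ γ‖m − m*‖ for all m ∈ M. Then for every g ∈ X and every best approximant m' ∈ M to g from M, one has ‖m* − m'‖ ≤ (2/γ)·‖f − g‖. -/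
/-- Strong uniqueness implies local Lipschitz continuity of the
best approximation operator: if `m* ∈ M` is a best approximant to `f` with
`‖f - m‖ - ‖f - m*‖ ≥ γ‖m - m*‖` for all `m ∈ M` (some `γ > 0`), then for every
`g` and every best approximant `m'` to `g` from `M`, `‖m* - m'‖ ≤ (2/γ)‖f - g‖`. -/
theorem stmt_6 {X : Type*} [NormedAddCommGroup X] [NormedSpace ℝ X]
    (M : Set X) (f : X) (mstar : X) (hmem : mstar ∈ M)
    (hbest : ∀ m ∈ M, ‖f - mstar‖ ≤ ‖f - m‖)
    (γ : ℝ) (hγ : 0 < γ)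
    (hsu : ∀ m ∈ M, γ * ‖m - mstar‖ ≤ ‖f - m‖ - ‖f - mstar‖)
    (g : X) (m' : X) (hm' : m' ∈ M)
    (hbest' : ∀ m ∈ M, ‖g - m'‖ ≤ ‖g - m‖) :
    ‖mstar - m'‖ ≤ (2 / γ) * ‖f - g‖ := by
  have h1 := hsu m' hm'
  have h2 : ‖f - m'‖ ≤ ‖f - g‖ + ‖g - m'‖ := norm_sub_le_norm_sub_add_norm_sub f g m'
  have h3 : ‖g - m'‖ ≤ ‖g - mstar‖ := hbest' mstar hmem
  have h4 : ‖g - mstar‖ ≤ ‖g - f‖ + ‖f - mstar‖ := norm_sub_le_norm_sub_add_norm_sub g f mstar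
  have h5 : ‖g - f‖ = ‖f - g‖ := norm_sub_rev g f
  have key : γ * ‖m' - mstar‖ ≤ 2 * ‖f - g‖ := by linarith
  rw [norm_sub_rev]
  rw [div_mul_eq_mul_div, le_div_iff₀ hγ]
  linarith [mul_comm γ ‖m' - mstar‖]
end

section
/- Let B be a compact Hausdorff space, let n ≥ 1, and let M be an n-dimensional subspace of C(B). Then every f ∈ C(B) has a unique best approximant from M if and only if M is a Haar space, i.e. no nonzero m ∈ M vanishes at more than n−1 distinct points of B. -/
lemma interp_bounded {B : Type*} [TopologicalSpace B] [CompactSpace B] [T2Space B]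
    {k : ℕ} (x : Fin k → B) (hx : Function.Injective x) (c : Fin k → ℝ)
    (hc : ∀ i, |c i| ≤ 1) :
    ∃ h : C(B, ℝ), (∀ y, |h y| ≤ 1) ∧ ∀ i, h (x i) = c i := by
  -- Urysohn bump at each point
  have he : ∀ i : Fin k, ∃ e : C(B, ℝ),
      (∀ y, e y ∈ Set.Icc (0:ℝ) 1) ∧ e (x i) = 1 ∧ ∀ j, j ≠ i → e (x j) = 0 := by
    intro i
    have hs : IsClosed (x '' {j | j ≠ i}) :=
      (Set.Finite.image x (Set.toFinite _)).isClosed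
    have ht : IsClosed ({x i} : Set B) := isClosed_singleton
    have hd : Disjoint (x '' {j | j ≠ i}) {x i} := by
      rw [Set.disjoint_singleton_right]
      rintro ⟨j, hj, hji⟩
      exact hj (hx hji)
    obtain ⟨e, he0, he1, hei⟩ := exists_continuous_zero_one_of_isClosed hs ht hd
    exact ⟨e, hei, he1 rfl, fun j hj => he0 ⟨j, hj, rfl⟩⟩
  choose e he01 he1 he0 using he
  set h₀ : C(B, ℝ) := ∑ i, c i • e i with hh₀
  have hval : ∀ j, h₀ (x j) = c j := by
    intro j
    simp only [hh₀, ContinuousMap.coe_sum, ContinuousMap.coe_smul, Finset.sum_apply,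
      Pi.smul_apply, smul_eq_mul]
    rw [Finset.sum_eq_single j]
    · rw [he1 j]; ring
    · intro i _ hij; rw [he0 i j (by exact fun hji => hij (hji ▸ rfl))]
      ring
    · simp
  refine ⟨⟨fun y => max (-1) (min 1 (h₀ y)),
    (continuous_const.max (continuous_const.min h₀.continuous))⟩, ?_, ?_⟩
  · intro y
    rw [abs_le]
    constructor
    · exact le_max_left _ _
    · exact max_le (by norm_num) (min_le_left _ _)
  · intro i
    have := hval i
    simp only [ContinuousMap.coe_mk]
    rw [this]
    have h1 := hc i
    rw [abs_le] at h1
    rw [min_eq_right h1.2, max_eq_right h1.1]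

lemma exists_best {E : Type*} [NormedAddCommGroup E] [NormedSpace ℝ E]
    (M : Submodule ℝ E) [FiniteDimensional ℝ M] (f : E) :
    ∃ g ∈ M, ∀ m ∈ M, ‖f - g‖ ≤ ‖f - m‖ := by
  have hcont : Continuous fun m : M => ‖f - (m : E)‖ :=
    (continuous_const.sub continuous_subtype_val).norm
  have hK : IsCompact (Metric.closedBall (0 : M) (2 * ‖f‖)) := isCompact_closedBall _ _
  have h0K : (0 : M) ∈ Metric.closedBall (0 : M) (2 * ‖f‖) := by
    simp
  obtain ⟨g, hgK, hgmin⟩ := hK.exists_isMinOn ⟨0, h0K⟩ hcont.continuousOn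
  refine ⟨g, g.2, fun m hm => ?_⟩
  by_cases hmK : (⟨m, hm⟩ : M) ∈ Metric.closedBall (0 : M) (2 * ‖f‖)
  · exact hgmin hmK
  · have h1 : ‖f - (g : E)‖ ≤ ‖f‖ := by simpa using hgmin h0K
    have h2 : 2 * ‖f‖ < ‖m‖ := by
      simpa [Metric.mem_closedBall, Submodule.norm_coe] using hmK
    have : ‖m‖ - ‖f‖ ≤ ‖f - m‖ := by
      rw [norm_sub_rev]; exact norm_sub_norm_le m f
    linarith

lemma exists_points {B : Type*} [TopologicalSpace B] (n : ℕ)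
    (M : Submodule ℝ C(B, ℝ)) (hdim : Module.finrank ℝ M = n) :
    ∃ x : Fin n → B, Function.Injective x := by
  by_cases hB : Infinite B
  · exact ⟨fun i => (Fin.valEmbedding.trans (Infinite.natEmbedding B)) i,
      (Fin.valEmbedding.trans (Infinite.natEmbedding B)).injective⟩
  · have : Finite B := not_infinite_iff_finite.mp hB
    have : Fintype B := Fintype.ofFinite B
    let J : M →ₗ[ℝ] (B → ℝ) :=
      { toFun := fun m => ⇑(m : C(B, ℝ))
        map_add' := by intros; rfl
        map_smul' := by intros; rfl }
    have hJ : Function.Injective J := by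
      intro a b h
      exact Subtype.ext (ContinuousMap.ext fun y => congrFun h y)
    have h1 : Module.finrank ℝ M ≤ Module.finrank ℝ (B → ℝ) :=
      LinearMap.finrank_le_finrank_of_injective hJ
    rw [hdim, Module.finrank_pi] at h1
    have : Nonempty (Fin n ↪ B) :=
      Function.Embedding.nonempty_of_card_le (by simpa using h1)
    obtain ⟨emb⟩ := this
    exact ⟨emb, emb.injective⟩

lemma haar_interp {B : Type*} [TopologicalSpace B] {n : ℕ} (hn : 1 ≤ n)
    (M : Submodule ℝ C(B, ℝ)) (hdim : Module.finrank ℝ M = n)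
    (haar : ∀ m ∈ M, m ≠ 0 →
      ¬ ∃ x : Fin n → B, Function.Injective x ∧ ∀ i, m (x i) = 0)
    (x : Fin n → B) (hx : Function.Injective x) (c : Fin n → ℝ) :
    ∃ m ∈ M, ∀ i, (m : C(B, ℝ)) (x i) = c i := by
  have : FiniteDimensional ℝ M := FiniteDimensional.of_finrank_pos (by omega)
  let ev : M →ₗ[ℝ] (Fin n → ℝ) :=
    { toFun := fun m i => (m : C(B, ℝ)) (x i)
      map_add' := by intros; rfl
      map_smul' := by intros; rfl }
  have hinj : Function.Injective ev := by
    rw [injective_iff_map_eq_zero]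
    intro m hm
    by_contra hm0
    have hval : (m : C(B, ℝ)) ≠ 0 := fun h => hm0 (Subtype.ext h)
    exact haar m m.2 hval ⟨x, hx, fun i => congrFun hm i⟩
  have hsurj : Function.Surjective ev :=
    (LinearMap.injective_iff_surjective_of_finrank_eq_finrank
      (by rw [hdim]; simp)).mp hinj
  obtain ⟨m, hm⟩ := hsurj c
  exact ⟨m, m.2, fun i => congrFun hm i⟩

lemma sign_abs_le (r : ℝ) : |Real.sign r| ≤ 1 := by
  rcases lt_trichotomy r 0 with h | h | h
  · rw [Real.sign_of_neg h]; norm_num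
  · rw [h, Real.sign_zero]; norm_num
  · rw [Real.sign_of_pos h]; norm_num

lemma mul_sign (r : ℝ) : r * Real.sign r = |r| := by
  rcases lt_trichotomy r 0 with h | h | h
  · rw [Real.sign_of_neg h, abs_of_neg h]; ring
  · simp [h]
  · rw [Real.sign_of_pos h, abs_of_pos h]; ring

lemma dir1 {B : Type*} [TopologicalSpace B] [CompactSpace B] [T2Space B]
    {n : ℕ} (hn : 1 ≤ n)
    (M : Submodule ℝ C(B, ℝ)) (hdim : Module.finrank ℝ M = n)
    (huniq : ∀ f : C(B, ℝ), ∃! mstar : C(B, ℝ),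
      mstar ∈ M ∧ ∀ m ∈ M, ‖f - mstar‖ ≤ ‖f - m‖) :
    ∀ m ∈ M, m ≠ 0 →
      ¬ ∃ x : Fin n → B, Function.Injective x ∧ ∀ i, m (x i) = 0 := by
  rintro m₀ hm₀M hm₀0 ⟨x, hx, hx0⟩
  have hFD : FiniteDimensional ℝ M := FiniteDimensional.of_finrank_pos (by omega)
  -- evaluation map
  let ev : M →ₗ[ℝ] (Fin n → ℝ) :=
    { toFun := fun m i => (m : C(B, ℝ)) (x i)
      map_add' := by intros; rfl
      map_smul' := by intros; rfl }
  -- its range is proper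
  have hrange : LinearMap.range ev < ⊤ := by
    rcases (le_top : LinearMap.range ev ≤ ⊤).lt_or_eq with h | h
    · exact h
    · exfalso
      have hsurj : Function.Surjective ev := LinearMap.range_eq_top.mp h
      have hinj : Function.Injective ev :=
        (LinearMap.injective_iff_surjective_of_finrank_eq_finrank
          (by rw [hdim]; simp)).mpr hsurj
      have : (⟨m₀, hm₀M⟩ : M) = 0 := by
        apply hinj
        ext i
        rw [map_zero]
        exact hx0 i
      exact hm₀0 (by simpa using congrArg Subtype.val this)
  obtain ⟨φ, hφ0, hφker⟩ := (LinearMap.range ev).exists_le_ker_of_lt_top hrange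
  set lam : Fin n → ℝ := fun i => φ (fun j => if i = j then 1 else 0) with hlam
  have hφ_eq : ∀ v : Fin n → ℝ, φ v = ∑ i, v i * lam i := by
    intro v
    conv_lhs => rw [pi_eq_sum_univ v, map_sum]
    simp [hlam, mul_comm]
  have hlam0 : lam ≠ 0 := by
    intro h
    apply hφ0
    apply LinearMap.ext
    intro v
    rw [hφ_eq v, h]
    simp
  set S : ℝ := ∑ i, |lam i| with hS
  have hSpos : 0 < S := by
    rcases Function.ne_iff.mp hlam0 with ⟨i, hi⟩
    exact Finset.sum_pos' (fun j _ => abs_nonneg _)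
      ⟨i, Finset.mem_univ i, abs_pos.mpr hi⟩
  set μ : Fin n → ℝ := fun i => lam i / S with hμ
  have hμsum : ∑ i, |μ i| = 1 := by
    simp only [hμ, abs_div, abs_of_pos hSpos]
    rw [← Finset.sum_div, ← hS, div_self hSpos.ne']
  have hμm : ∀ m ∈ M, ∑ i, μ i * (m : C(B, ℝ)) (x i) = 0 := by
    intro m hm
    have h1 : φ (ev ⟨m, hm⟩) = 0 := hφker ⟨⟨m, hm⟩, rfl⟩
    rw [hφ_eq] at h1
    have h2 : ∑ i, μ i * (m : C(B,ℝ)) (x i) = (∑ i, (ev ⟨m, hm⟩) i * lam i) / S := by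
      rw [Finset.sum_div]
      refine Finset.sum_congr rfl fun i _ => ?_
      have hev : (ev ⟨m, hm⟩) i = m (x i) := rfl
      rw [hev]
      simp only [hμ]
      ring
    rw [h2, h1, zero_div]
  -- the bounded interpolant
  obtain ⟨h, hh1, hhx⟩ := interp_bounded x hx (fun i => Real.sign (μ i))
    (fun i => sign_abs_le _)
  -- normalized m₀
  set σ : C(B, ℝ) := ‖m₀‖⁻¹ • m₀ with hσ
  have hσM : σ ∈ M := M.smul_mem _ hm₀M
  have hσx : ∀ i, σ (x i) = 0 := by
    intro i; simp [hσ, hx0 i]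
  have hσnorm : ‖σ‖ = 1 := by
    have h1 : ‖σ‖ = ‖(‖m₀‖⁻¹)‖ * ‖m₀‖ := norm_smul (‖m₀‖⁻¹) m₀
    rw [h1, norm_inv, norm_norm, inv_mul_cancel₀ (norm_ne_zero_iff.mpr hm₀0)]
  have hσle : ∀ y, |σ y| ≤ 1 := by
    intro y
    calc |σ y| ≤ ‖σ‖ := σ.norm_coe_le_norm y
    _ = 1 := hσnorm
  set f : C(B, ℝ) := ⟨fun y => h y * (1 - |σ y|),
    h.continuous.mul (continuous_const.sub σ.continuous.abs)⟩ with hf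
  have hfy : ∀ y, f y = h y * (1 - |σ y|) := fun y => rfl
  have hfb : ∀ y, |f y| ≤ 1 := by
    intro y
    rw [hfy y, abs_mul]
    have h2 : abs (1 - |σ y|) ≤ 1 := by
      rw [abs_le]
      constructor
      · linarith [hσle y, abs_nonneg (σ y)]
      · linarith [abs_nonneg (σ y)]
    calc |h y| * abs (1 - |σ y|) ≤ 1 * 1 :=
      mul_le_mul (hh1 y) h2 (abs_nonneg _) zero_le_one
    _ = 1 := one_mul 1
  have hfx : ∀ i, f (x i) = Real.sign (μ i) := by
    intro i
    rw [hfy, hσx i, hhx i]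
    simp
  -- lower bound on distance
  have hlow : ∀ m ∈ M, 1 ≤ ‖f - m‖ := by
    intro m hm
    have key : ∑ i, μ i * ((f - m) : C(B, ℝ)) (x i) = 1 := by
      have : ∀ i, μ i * ((f - m) : C(B, ℝ)) (x i)
          = μ i * f (x i) - μ i * m (x i) := by
        intro i; simp [mul_sub]
      rw [Finset.sum_congr rfl fun i _ => this i, Finset.sum_sub_distrib,
        hμm m hm, sub_zero]
      have : ∀ i, μ i * f (x i) = |μ i| := by
        intro i; rw [hfx i, mul_sign]
      rw [Finset.sum_congr rfl fun i _ => this i, hμsum]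
    have hub : ∑ i, μ i * ((f - m) : C(B, ℝ)) (x i) ≤ ‖f - m‖ := by
      calc ∑ i, μ i * ((f - m) : C(B, ℝ)) (x i)
          ≤ ∑ i, |μ i * ((f - m) : C(B, ℝ)) (x i)| :=
            Finset.sum_le_sum fun i _ => le_abs_self _
        _ ≤ ∑ i, |μ i| * ‖f - m‖ := by
            apply Finset.sum_le_sum
            intro i _
            rw [abs_mul]
            exact mul_le_mul_of_nonneg_left
              ((f - m).norm_coe_le_norm (x i)) (abs_nonneg _)
        _ = ‖f - m‖ := by rw [← Finset.sum_mul, hμsum, one_mul]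
    linarith [key ▸ hub]
  -- 0 is a best approximant
  have hbest0 : (0 : C(B, ℝ)) ∈ M ∧ ∀ m ∈ M, ‖f - 0‖ ≤ ‖f - m‖ := by
    refine ⟨M.zero_mem, fun m hm => ?_⟩
    rw [sub_zero]
    calc ‖f‖ ≤ 1 := (f.norm_le zero_le_one).mpr fun y => hfb y
    _ ≤ ‖f - m‖ := hlow m hm
  -- σ is a best approximant
  have hbestσ : σ ∈ M ∧ ∀ m ∈ M, ‖f - σ‖ ≤ ‖f - m‖ := by
    refine ⟨hσM, fun m hm => ?_⟩
    have : ‖f - σ‖ ≤ 1 := by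
      rw [(f - σ).norm_le zero_le_one]
      intro y
      have h1 : |f y - σ y| ≤ |f y| + |σ y| := abs_sub _ _
      have h2 : |f y| ≤ 1 - |σ y| := by
        rw [hfy y, abs_mul]
        have : abs (1 - |σ y|) = 1 - |σ y| := abs_of_nonneg (by linarith [hσle y])
        rw [this]
        calc |h y| * (1 - |σ y|) ≤ 1 * (1 - |σ y|) :=
          mul_le_mul_of_nonneg_right (hh1 y) (by linarith [hσle y])
        _ = 1 - |σ y| := one_mul _
      simp only [ContinuousMap.sub_apply, Real.norm_eq_abs]
      linarith
    linarith [hlow m hm]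
  obtain ⟨g, _, hgu⟩ := huniq f
  have h0σ : (0 : C(B, ℝ)) = σ := by
    rw [hgu 0 hbest0, hgu σ hbestσ]
  exact hm₀0 (by
    have : σ = 0 := h0σ.symm
    rw [hσ] at this
    have h2 := smul_eq_zero.mp this
    rcases h2 with h2 | h2
    · exact absurd h2 (inv_ne_zero (norm_ne_zero_iff.mpr hm₀0))
    · exact h2)

lemma abs_mean (a b d : ℝ) (ha : |a| ≤ d) (hb : |b| ≤ d) (hab : |a + b| = 2 * d) :
    a = b := by
  have hd : 0 ≤ d := le_trans (abs_nonneg a) ha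
  rw [abs_le] at ha hb
  rcases abs_eq (by linarith : (0:ℝ) ≤ 2 * d) |>.mp hab with h | h <;> linarith

lemma dir2 {B : Type*} [TopologicalSpace B] [CompactSpace B] [T2Space B]
    {n : ℕ} (hn : 1 ≤ n)
    (M : Submodule ℝ C(B, ℝ)) (hdim : Module.finrank ℝ M = n)
    (haar : ∀ m ∈ M, m ≠ 0 →
      ¬ ∃ x : Fin n → B, Function.Injective x ∧ ∀ i, m (x i) = 0) :
    ∀ f : C(B, ℝ), ∃! mstar : C(B, ℝ),
      mstar ∈ M ∧ ∀ m ∈ M, ‖f - mstar‖ ≤ ‖f - m‖ := by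
  intro f
  have hFD : FiniteDimensional ℝ M := FiniteDimensional.of_finrank_pos (by omega)
  obtain ⟨y₀, hy₀⟩ := exists_points n M hdim
  have hBne : Nonempty B := ⟨y₀ ⟨0, by omega⟩⟩
  obtain ⟨g, hgM, hgbest⟩ := exists_best M f
  -- uniqueness of best approximants
  have key : ∀ m₁ m₂ : C(B, ℝ),
      (m₁ ∈ M ∧ ∀ m ∈ M, ‖f - m₁‖ ≤ ‖f - m‖) →
      (m₂ ∈ M ∧ ∀ m ∈ M, ‖f - m₂‖ ≤ ‖f - m‖) → m₁ = m₂ := by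
    rintro m₁ m₂ ⟨h1M, h1b⟩ ⟨h2M, h2b⟩
    by_contra hne
    set d : ℝ := ‖f - m₁‖ with hd
    have hd2 : ‖f - m₂‖ = d := le_antisymm (h2b m₁ h1M) (h1b m₂ h2M)
    have hdpos : 0 < d := by
      by_contra hle
      push_neg at hle
      have h0 : d = 0 := le_antisymm hle (norm_nonneg _)
      have e1 : f = m₁ := norm_sub_eq_zero_iff.mp (hd ▸ h0 : ‖f - m₁‖ = 0)
      have e2 : f = m₂ := norm_sub_eq_zero_iff.mp (by rw [hd2, h0])
      exact hne (e1 ▸ e2)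
    set mmid : C(B, ℝ) := (1/2 : ℝ) • (m₁ + m₂) with hmmid
    have hmmidM : mmid ∈ M := M.smul_mem _ (M.add_mem h1M h2M)
    set E : C(B, ℝ) := f - mmid with hE
    have hEy : ∀ y, E y = f y - (m₁ y + m₂ y) / 2 := by
      intro y
      simp [hE, hmmid]
      ring
    have hEnorm_le : ‖E‖ ≤ d := by
      have : E = (1/2 : ℝ) • ((f - m₁) + (f - m₂)) := by
        rw [hE, hmmid]
        ext y
        simp
        ring
      have hns := norm_smul ((1:ℝ)/2) ((f - m₁) + (f - m₂))
      rw [this, hns, Real.norm_eq_abs, abs_of_pos (by norm_num : (0:ℝ) < 1/2)]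
      have hna := norm_add_le (f - m₁) (f - m₂)
      rw [hd2] at hna
      linarith
    have hEnorm : ‖E‖ = d := le_antisymm hEnorm_le (h1b mmid hmmidM)
    -- pointwise bounds
    have habs1 : ∀ y, |f y - m₁ y| ≤ d := by
      intro y
      have := (f - m₁).norm_coe_le_norm y
      simpa [Real.norm_eq_abs] using this
    have habs2 : ∀ y, |f y - m₂ y| ≤ d := by
      intro y
      have := (f - m₂).norm_coe_le_norm y
      rw [hd2] at this
      simpa [Real.norm_eq_abs] using this
    set A : Set B := {y | |E y| = d} with hA
    have hA12 : ∀ y ∈ A, m₁ y = m₂ y := by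
      intro y hy
      have hsum : |(f y - m₁ y) + (f y - m₂ y)| = 2 * d := by
        have : (f y - m₁ y) + (f y - m₂ y) = 2 * E y := by rw [hEy y]; ring
        rw [this, abs_mul, abs_two, hy]
      have := abs_mean _ _ _ (habs1 y) (habs2 y) hsum
      linarith
    -- no n distinct points inside A
    have hnopts : ¬ ∃ z : Fin n → B, Function.Injective z ∧ ∀ i, z i ∈ A := by
      rintro ⟨z, hzinj, hzA⟩
      have hne' : m₁ - m₂ ≠ 0 := sub_ne_zero.mpr hne
      exact haar (m₁ - m₂) (M.sub_mem h1M h2M) hne'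
        ⟨z, hzinj, fun i => by
          have := hA12 (z i) (hzA i)
          simp [this]⟩
    -- A is finite with at most n elements
    have hAfin : A.Finite := by
      by_contra hinf
      have hinf' : A.Infinite := hinf
      obtain ⟨emb⟩ : Nonempty (Fin n ↪ A) :=
        ⟨Fin.valEmbedding.trans (hinf'.natEmbedding)⟩
      exact hnopts ⟨fun i => (emb i : B),
        Subtype.val_injective.comp emb.injective, fun i => (emb i).2⟩
    classical
    set F : Finset B := hAfin.toFinset with hF
    have hFA : ∀ y ∈ F, y ∈ A := fun y hy => hAfin.mem_toFinset.mp hy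
    have hFcard : F.card ≤ n := by
      by_contra hlt
      push_neg at hlt
      obtain ⟨T, hTF, hTcard⟩ := Finset.exists_subset_card_eq hlt.le
      exact hnopts ⟨fun i => ((T.equivFinOfCardEq hTcard).symm i : B),
        Subtype.val_injective.comp (T.equivFinOfCardEq hTcard).symm.injective,
        fun i => hFA _ (hTF ((T.equivFinOfCardEq hTcard).symm i).2)⟩
    -- extend F to a set S of exactly n points
    set T₀ : Finset B := Finset.univ.image y₀ with hT₀
    have hT₀card : T₀.card = n := by
      rw [hT₀, Finset.card_image_of_injective _ hy₀, Finset.card_univ,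
        Fintype.card_fin]
    obtain ⟨S, hFS, _, hScard⟩ :=
      Finset.exists_subsuperset_card_eq (Finset.subset_union_left (s₂ := T₀))
        hFcard (le_trans (le_of_eq hT₀card.symm)
          (Finset.card_le_card Finset.subset_union_right))
    set z : Fin n → B := fun i => ((S.equivFinOfCardEq hScard).symm i : B) with hz
    have hzinj : Function.Injective z :=
      Subtype.val_injective.comp (S.equivFinOfCardEq hScard).symm.injective
    -- interpolate E at the points z
    obtain ⟨m, hmM, hmz⟩ := haar_interp hn M hdim haar z hzinj (fun i => E (z i))
    have hmA : ∀ y ∈ A, m y = E y := by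
      intro y hy
      have hyS : y ∈ S := hFS (hAfin.mem_toFinset.mpr hy)
      have : z ((S.equivFinOfCardEq hScard) ⟨y, hyS⟩) = y := by
        simp [hz]
      rw [← this, hmz]
    -- A is nonempty
    obtain ⟨ystar, -, hystar⟩ := isCompact_univ.exists_isMaxOn
      (Set.univ_nonempty) (continuous_abs.comp E.continuous).continuousOn
    have hystarA : ystar ∈ A := by
      have hle : |E ystar| ≤ d := by
        have := E.norm_coe_le_norm ystar
        rw [hEnorm] at this
        simpa [Real.norm_eq_abs] using this
      have hge : d ≤ |E ystar| := by
        rw [← hEnorm]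
        rw [E.norm_le (abs_nonneg _)]
        intro y
        have := hystar (Set.mem_univ y)
        simpa [Real.norm_eq_abs] using this
      exact le_antisymm hle hge
    have hm0 : m ≠ 0 := by
      intro h0
      have h1 := hmA ystar hystarA
      rw [h0] at h1
      have h2 : E ystar = 0 := by simpa using h1.symm
      have h3 : |E ystar| = d := hystarA
      rw [h2] at h3
      simp at h3
      linarith
    have hmpos : 0 < ‖m‖ := norm_pos_iff.mpr hm0
    -- the open set where E and m agree in sign
    set U : Set B := {y | 0 < E y * m y} with hU
    have hAU : A ⊆ U := by
      intro y hy
      have h1 : m y = E y := hmA y hy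
      have h2 : E y ≠ 0 := by
        intro h
        rw [hA] at hy
        rw [Set.mem_setOf_eq, h] at hy
        simp at hy
        linarith
      have h3 : (0:ℝ) < E y * E y := mul_self_pos.mpr h2
      show 0 < E y * m y
      rw [h1]
      exact h3
    -- bound for |E| off U
    obtain ⟨d', hd'lt, hd'b⟩ : ∃ d', d' < d ∧ ∀ y ∈ Uᶜ, |E y| ≤ d' := by
      rcases Set.eq_empty_or_nonempty Uᶜ with hKe | hKne
      · exact ⟨0, hdpos, fun y hy => by rw [hKe] at hy; exact absurd hy (Set.notMem_empty y)⟩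
      · have hUopen : IsOpen U :=
          isOpen_lt continuous_const (E.continuous.mul m.continuous)
        have hKcl : IsClosed Uᶜ := hUopen.isClosed_compl
        obtain ⟨yK, hyK, hyKmax⟩ := hKcl.isCompact.exists_isMaxOn hKne
          (continuous_abs.comp E.continuous).continuousOn
        refine ⟨|E yK|, ?_, fun y hy => hyKmax hy⟩
        have hle : |E yK| ≤ d := by
          have := E.norm_coe_le_norm yK
          rw [hEnorm] at this
          simpa [Real.norm_eq_abs] using this
        rcases hle.lt_or_eq with h | h
        · exact h
        · exact absurd (hAU (h : yK ∈ A)) hyK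
    -- choose a small ε
    set ε : ℝ := min (d - d') d / (2 * ‖m‖) with hε
    have hεpos : 0 < ε := by
      apply div_pos
      · exact lt_min (by linarith) hdpos
      · linarith
    have hεm : ε * ‖m‖ = min (d - d') d / 2 := by
      rw [hε]
      field_simp
    have hεm1 : ε * ‖m‖ < d - d' := by
      rw [hεm]
      have := min_le_left (d - d') d
      linarith
    have hεm2 : ε * ‖m‖ < d := by
      rw [hεm]
      have := min_le_right (d - d') d
      linarith
    -- pointwise strict bound
    have hpt : ∀ y, |E y - ε * m y| < d := by
      intro y
      have hmy : |m y| ≤ ‖m‖ := by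
        have := m.norm_coe_le_norm y
        simpa [Real.norm_eq_abs] using this
      have hmy' : ε * |m y| ≤ ε * ‖m‖ := mul_le_mul_of_nonneg_left hmy hεpos.le
      by_cases hyU : y ∈ U
      · have hprod : (0:ℝ) < E y * m y := hyU
        have hEyd : |E y| ≤ d := by
          have := E.norm_coe_le_norm y
          rw [hEnorm] at this
          simpa [Real.norm_eq_abs] using this
        rw [abs_le] at hEyd
        rw [abs_lt]
        rcases mul_pos_iff.mp hprod with ⟨hE1, hm1⟩ | ⟨hE1, hm1⟩
        · have h4 : 0 < ε * m y := mul_pos hεpos hm1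
          have h5 : m y ≤ |m y| := le_abs_self _
          have h6 : ε * m y ≤ ε * |m y| := mul_le_mul_of_nonneg_left h5 hεpos.le
          constructor <;> linarith
        · have h4 : ε * m y < 0 := mul_neg_of_pos_of_neg hεpos hm1
          have h5 : -m y ≤ |m y| := neg_le_abs _
          have h6 : ε * (-m y) ≤ ε * |m y| := mul_le_mul_of_nonneg_left h5 hεpos.le
          constructor <;> nlinarith
      · have hEyd : |E y| ≤ d' := hd'b y hyU
        rw [abs_le] at hEyd
        have h5 : -|m y| ≤ m y := neg_abs_le _
        have h6 : m y ≤ |m y| := le_abs_self _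
        rw [abs_lt]
        constructor <;> nlinarith
    -- contradiction with minimality
    have hlt : ‖E - ε • m‖ < d := by
      rw [(E - ε • m).norm_lt_iff hdpos]
      intro y
      have := hpt y
      simpa [Real.norm_eq_abs] using this
    have hmem : mmid + ε • m ∈ M := M.add_mem hmmidM (M.smul_mem _ hmM)
    have hge := h1b _ hmem
    have heq : f - (mmid + ε • m) = E - ε • m := by
      rw [hE, sub_add_eq_sub_sub]
    rw [heq] at hge
    exact absurd hge (not_le.mpr hlt)
  exact ⟨g, ⟨hgM, hgbest⟩, fun y hy => key y g hy ⟨hgM, hgbest⟩⟩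

/-- (Haar's theorem.)  Let `M` be an `n`-dimensional subspace of
`C(B)`, `n ≥ 1`, `B` compact Hausdorff.  Every `f ∈ C(B)` has a unique best
approximant from `M` iff `M` is a Haar space, i.e. no nonzero `m ∈ M` vanishes at
`n` (or more) distinct points of `B`. -/
theorem stmt_8 {B : Type*} [TopologicalSpace B] [CompactSpace B] [T2Space B]
    (n : ℕ) (hn : 1 ≤ n)
    (M : Submodule ℝ C(B, ℝ)) (hdim : Module.finrank ℝ M = n) :
    (∀ f : C(B, ℝ), ∃! mstar : C(B, ℝ), mstar ∈ M ∧ ∀ m ∈ M, ‖f - mstar‖ ≤ ‖f - m‖) ↔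
    (∀ m ∈ M, m ≠ 0 →
      ¬ ∃ x : Fin n → B, Function.Injective x ∧ ∀ i, m (x i) = 0) := by
  constructor
  · exact fun h => dir1 hn M hdim h
  · exact fun h => dir2 hn M hdim h
end

section
/- Let B be a compact Hausdorff space, let M be a finite-dimensional Haar subspace of C(B), let f ∈ C(B), and let m* ∈ M be a best approximant to f from M. Then m* is a strongly unique best approximant to f from M: there exists γ > 0 such that ‖f − m‖ − ‖f − m*‖ ≥ γ‖m − m*‖ for all m ∈ M. -/
open Module
set_option linter.unusedSectionVars false
section Aux

variable {B : Type*} [TopologicalSpace B] [CompactSpace B]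

/-- If `S.card < finrank M`, there is a point of `B` outside `S`. -/
lemma aux_exists_not_mem (n : ℕ) (M : Submodule ℝ C(B, ℝ)) (hdim : finrank ℝ M = n)
    (S : Finset B) (hS : S.card < n) : ∃ b : B, b ∉ S := by
  by_contra h
  push_neg at h
  have hfinB : Finite B := Finite.of_injective (fun b : B => (⟨b, h b⟩ : {x // x ∈ S}))
    (fun a b hab => congrArg Subtype.val hab)
  have : Fintype B := Fintype.ofFinite B
  have hcard : Fintype.card B ≤ S.card := by
    classical
    have : (Finset.univ : Finset B) ⊆ S := fun b _ => h b
    simpa using Finset.card_le_card this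
  let ι : C(B, ℝ) →ₗ[ℝ] (B → ℝ) :=
    { toFun := fun g => ⇑g
      map_add' := fun g h => rfl
      map_smul' := fun c g => rfl }
  have hι : Function.Injective ι := fun g₁ g₂ hg => ContinuousMap.ext (fun x => congrFun hg x)
  have : FiniteDimensional ℝ C(B, ℝ) := FiniteDimensional.of_injective ι hι
  have h1 : n ≤ finrank ℝ C(B, ℝ) := hdim ▸ Submodule.finrank_le M
  have h2 : finrank ℝ C(B, ℝ) ≤ finrank ℝ (B → ℝ) :=
    LinearMap.finrank_le_finrank_of_injective hι
  rw [Module.finrank_fintype_fun_eq_card] at h2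
  omega

lemma aux_superset (n : ℕ) (M : Submodule ℝ C(B, ℝ)) (hdim : finrank ℝ M = n) :
    ∀ (k : ℕ) (S : Finset B), S.card + k = n → ∃ W : Finset B, S ⊆ W ∧ W.card = n := by
  classical
  intro k
  induction k with
  | zero => intro S hS; exact ⟨S, Finset.Subset.refl S, by omega⟩
  | succ k ih =>
    intro S hS
    obtain ⟨b, hb⟩ := aux_exists_not_mem n M hdim S (by omega)
    obtain ⟨W, hW1, hW2⟩ := ih (insert b S) (by rw [Finset.card_insert_of_notMem hb]; omega)
    exact ⟨W, fun x hx => hW1 (Finset.mem_insert_of_mem hx), hW2⟩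



/-- The zero set of a nonzero element of a Haar space is a finite set of fewer
than `n` points. -/
lemma aux_zeros (n : ℕ) (m₀ : C(B, ℝ))
    (hHaar : ¬ ∃ x : Fin n → B, Function.Injective x ∧ ∀ i, m₀ (x i) = 0) :
    ∃ T : Finset B, (∀ x : B, m₀ x = 0 → x ∈ T) ∧ T.card < n := by
  classical
  set S : Set B := {x | m₀ x = 0} with hSdef
  have hfin : S.Finite := by
    by_contra hinf
    have hinf' : S.Infinite := hinf
    let emb := hinf'.natEmbedding
    refine hHaar ⟨fun i => (emb i.val : B), ?_, fun i => (emb i.val).2⟩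
    intro a b hab
    exact Fin.val_injective (emb.injective (Subtype.val_injective hab))
  refine ⟨hfin.toFinset, fun x hx => hfin.mem_toFinset.mpr hx, ?_⟩
  by_contra hc
  push_neg at hc
  obtain ⟨t, ht, htc⟩ := Finset.exists_subset_card_eq hc
  let e := t.equivFin
  refine hHaar ⟨fun i => (e.symm (Fin.cast htc.symm i) : B), ?_, ?_⟩
  · intro a b hab
    have := e.symm.injective (Subtype.val_injective hab)
    exact Fin.ext (by simpa using congrArg Fin.val this)
  · intro i
    have : ((e.symm (Fin.cast htc.symm i)) : B) ∈ t := (e.symm (Fin.cast htc.symm i)).2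
    have := hfin.mem_toFinset.mp (ht this)
    exact this

/-- Haar interpolation: at `n` distinct points, members of `M` attain arbitrary values. -/
lemma aux_interp (n : ℕ) (M : Submodule ℝ C(B, ℝ)) (hdim : finrank ℝ M = n)
    [FiniteDimensional ℝ M]
    (hHaar : ∀ m ∈ M, m ≠ 0 →
      ¬ ∃ x : Fin n → B, Function.Injective x ∧ ∀ i, m (x i) = 0)
    (W : Finset B) (hW : W.card = n) (v : B → ℝ) :
    ∃ u ∈ M, ∀ x ∈ W, u x = v x := by
  classical
  let T : M →ₗ[ℝ] ({x // x ∈ W} → ℝ) :=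
    { toFun := fun u => fun x => (u : C(B, ℝ)) x.val
      map_add' := fun u v => by funext x; simp
      map_smul' := fun c u => by funext x; simp }
  have hTinj : Function.Injective T := by
    rw [injective_iff_map_eq_zero]
    intro u hu
    by_contra hu0
    have huC : (u : C(B, ℝ)) ≠ 0 := by
      simpa [Submodule.coe_eq_zero] using hu0
    let e := W.equivFin
    refine hHaar u u.2 huC ⟨fun i => (e.symm (Fin.cast hW.symm i) : B), ?_, ?_⟩
    · intro a b hab
      have := e.symm.injective (Subtype.val_injective hab)
      exact Fin.ext (by simpa using congrArg Fin.val this)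
    · intro i
      exact congrFun hu (e.symm (Fin.cast hW.symm i))
  have hrange : LinearMap.range T = ⊤ := by
    apply Submodule.eq_top_of_finrank_eq
    rw [LinearMap.finrank_range_of_inj hTinj, hdim,
      Module.finrank_fintype_fun_eq_card, Fintype.card_coe, hW]
  obtain ⟨u, hu⟩ := (LinearMap.range_eq_top.mp hrange) (fun x => v x.val)
  exact ⟨u, u.2, fun x hx => congrFun hu ⟨x, hx⟩⟩



lemma aux_extremal (E : C(B, ℝ)) (he : 0 < ‖E‖) : ∃ x : B, |E x| = ‖E‖ := by
  have hEne : E ≠ 0 := by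
    intro h; rw [h, norm_zero] at he; exact lt_irrefl 0 he
  have hBne : Nonempty B := by
    by_contra hB
    exact hEne (ContinuousMap.ext fun x => ((not_nonempty_iff.mp hB).false x).elim)
  obtain ⟨x₀, -, hx₀⟩ := isCompact_univ.exists_isMaxOn Set.univ_nonempty
    (E.continuous.abs.continuousOn (s := Set.univ))
  refine ⟨x₀, le_antisymm ?_ ?_⟩
  · simpa [Real.norm_eq_abs] using E.norm_coe_le_norm x₀
  · refine (ContinuousMap.norm_le E (abs_nonneg _)).mpr fun x => ?_
    simpa [Real.norm_eq_abs] using hx₀ (Set.mem_univ x)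

/-- Kolmogorov criterion: if `mstar` is a best approximation to `f` and `m ∈ M`,
then `(f - mstar) x * m x` cannot be positive on the whole critical set. -/
lemma aux_kolmogorov (M : Submodule ℝ C(B, ℝ)) (f mstar : C(B, ℝ)) (hmem : mstar ∈ M)
    (hbest : ∀ m ∈ M, ‖f - mstar‖ ≤ ‖f - m‖) (m : C(B, ℝ)) (hm : m ∈ M)
    (he : 0 < ‖f - mstar‖)
    (hpos : ∀ x : B, |(f - mstar) x| = ‖f - mstar‖ → 0 < (f - mstar) x * m x) :
    False := by
  classical
  set E : C(B, ℝ) := f - mstar with hE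
  set e : ℝ := ‖E‖ with he'
  set A : Set B := {x | |E x| = e} with hA
  have hAclosed : IsClosed A := isClosed_eq (E.continuous.abs) continuous_const
  have hAcpt : IsCompact A := hAclosed.isCompact
  have hAne : A.Nonempty := aux_extremal E he
  set g : B → ℝ := fun x => E x * m x with hg
  have hgc : Continuous g := E.continuous.mul m.continuous
  obtain ⟨x₁, hx₁A, hx₁⟩ := hAcpt.exists_isMinOn hAne hgc.continuousOn
  set δ : ℝ := g x₁ with hδ
  have hδpos : 0 < δ := hpos x₁ hx₁A
  set K : Set B := {x | g x ≤ δ / 2} with hK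
  have hKcpt : IsCompact K := (isClosed_le hgc continuous_const).isCompact
  have hKA : ∀ x ∈ K, x ∉ A := by
    intro x hxK hxA
    have h1 : δ ≤ g x := hx₁ hxA
    have h2 : g x ≤ δ / 2 := hxK
    linarith
  -- bound on K
  have hEb : ∀ x : B, |E x| ≤ e := fun x => by
    simpa [Real.norm_eq_abs] using E.norm_coe_le_norm x
  have he1 : ∃ e₁ : ℝ, 0 ≤ e₁ ∧ e₁ < e ∧ ∀ x ∈ K, |E x| ≤ e₁ := by
    rcases K.eq_empty_or_nonempty with hKe | hKne
    · exact ⟨0, le_refl 0, he, fun x hx => by rw [hKe] at hx; exact hx.elim⟩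
    · obtain ⟨x₂, hx₂K, hx₂⟩ := hKcpt.exists_isMaxOn hKne (E.continuous.abs.continuousOn)
      refine ⟨|E x₂|, abs_nonneg _, ?_, fun x hx => hx₂ hx⟩
      exact lt_of_le_of_ne (hEb x₂) (fun h => hKA x₂ hx₂K h)
  obtain ⟨e₁, he₁0, he₁e, he₁K⟩ := he1
  have hm0 : m ≠ 0 := by
    intro h
    have := hpos x₁ hx₁A
    rw [h] at this
    simp at this
  set N : ℝ := ‖m‖ with hN
  have hNpos : 0 < N := norm_pos_iff.mpr hm0
  set lam : ℝ := min ((e - e₁) / (2 * N)) (δ / (2 * N ^ 2)) with hlam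
  have hlampos : 0 < lam := lt_min (div_pos (by linarith) (by positivity)) (by positivity)
  have hmb : ∀ x : B, |m x| ≤ N := fun x => by
    simpa [Real.norm_eq_abs] using m.norm_coe_le_norm x
  set c : ℝ := max ((e + e₁) / 2) (Real.sqrt (e ^ 2 - lam * δ / 2)) with hc
  have hcse : Real.sqrt (e ^ 2 - lam * δ / 2) < e := by
    rw [Real.sqrt_lt' he]
    nlinarith
  have hclt : c < e := max_lt (by linarith) hcse
  have hc0 : 0 ≤ c := le_trans (by linarith) (le_max_left _ _)
  have hbound : ∀ x : B, |E x - lam * m x| ≤ c := by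
    intro x
    by_cases hx : g x ≤ δ / 2
    · -- x ∈ K
      have h1 : |E x| ≤ e₁ := he₁K x hx
      have h2 : lam * |m x| ≤ lam * N := by
        exact mul_le_mul_of_nonneg_left (hmb x) hlampos.le
      have h3 : lam * N ≤ (e - e₁) / 2 := by
        have : lam ≤ (e - e₁) / (2 * N) := min_le_left _ _
        calc lam * N ≤ ((e - e₁) / (2 * N)) * N := mul_le_mul_of_nonneg_right this hNpos.le
          _ = (e - e₁) / 2 := by field_simp
      calc |E x - lam * m x| ≤ |E x| + |lam * m x| := abs_sub _ _
        _ = |E x| + lam * |m x| := by rw [abs_mul, abs_of_pos hlampos]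
        _ ≤ e₁ + (e - e₁) / 2 := by linarith
        _ = (e + e₁) / 2 := by ring
        _ ≤ c := le_max_left _ _
    · push_neg at hx
      have hsq : (E x - lam * m x) ^ 2 ≤ e ^ 2 - lam * δ / 2 := by
        have h1 : (E x) ^ 2 ≤ e ^ 2 := by
          have := abs_le.mp (hEb x); nlinarith
        have h2 : lam ^ 2 * (m x) ^ 2 ≤ lam * δ / 2 := by
          have hl2 : lam ≤ δ / (2 * N ^ 2) := min_le_right _ _
          have hm2 : (m x) ^ 2 ≤ N ^ 2 := by
            have := abs_le.mp (hmb x); nlinarith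
          have ha : lam ^ 2 ≤ lam * (δ / (2 * N ^ 2)) := by nlinarith
          calc lam ^ 2 * (m x) ^ 2 ≤ (lam * (δ / (2 * N ^ 2))) * N ^ 2 :=
                mul_le_mul ha hm2 (sq_nonneg _) (by positivity)
            _ = lam * δ / 2 := by field_simp
        have hx' : δ / 2 < E x * m x := hx
        nlinarith [mul_lt_mul_of_pos_left hx' hlampos]
      calc |E x - lam * m x| = Real.sqrt ((E x - lam * m x) ^ 2) := (Real.sqrt_sq_eq_abs _).symm
        _ ≤ Real.sqrt (e ^ 2 - lam * δ / 2) := Real.sqrt_le_sqrt hsq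
        _ ≤ c := le_max_right _ _
  have hmem2 : mstar + lam • m ∈ M := M.add_mem hmem (M.smul_mem lam hm)
  have hnorm : ‖f - (mstar + lam • m)‖ ≤ c := by
    refine (ContinuousMap.norm_le _ hc0).mpr fun x => ?_
    have : (f - (mstar + lam • m)) x = E x - lam * m x := by
      simp [hE, sub_add_eq_sub_sub]
    rw [this, Real.norm_eq_abs]
    exact hbound x
  have := hbest (mstar + lam • m) hmem2
  linarith

end Aux

set_option maxHeartbeats 2000000 in
/-- (Newman–Shapiro.)  If `M` is an `n`-dimensional Haar subspace
of `C(B)` (`B` compact Hausdorff; no nonzero `m ∈ M` has `n` distinct zeros) and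
`m* ∈ M` is a best approximant to `f ∈ C(B)`, then `m*` is a strongly unique best
approximant: there is `γ > 0` with `‖f − m‖ − ‖f − m*‖ ≥ γ‖m − m*‖` for all
`m ∈ M`. -/
theorem stmt_10 {B : Type*} [TopologicalSpace B] [CompactSpace B] [T2Space B]
    (n : ℕ) (M : Submodule ℝ C(B, ℝ)) (hdim : Module.finrank ℝ M = n)
    (hHaar : ∀ m ∈ M, m ≠ 0 →
      ¬ ∃ x : Fin n → B, Function.Injective x ∧ ∀ i, m (x i) = 0)
    (f : C(B, ℝ)) (mstar : C(B, ℝ)) (hmem : mstar ∈ M)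
    (hbest : ∀ m ∈ M, ‖f - mstar‖ ≤ ‖f - m‖) :
    ∃ γ : ℝ, 0 < γ ∧ ∀ m ∈ M, γ * ‖m - mstar‖ ≤ ‖f - m‖ - ‖f - mstar‖ := by
  classical
  -- trivial case: M = ⊥
  by_cases hMbot : M = ⊥
  · refine ⟨1, one_pos, fun m hm => ?_⟩
    rw [hMbot, Submodule.mem_bot] at hmem
    rw [hMbot, Submodule.mem_bot] at hm
    subst hmem; subst hm
    simp
  -- trivial case: f = mstar
  by_cases h0 : ‖f - mstar‖ = 0
  · have hf : f = mstar := by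
      have := norm_eq_zero.mp h0
      rwa [sub_eq_zero] at this
    refine ⟨1, one_pos, fun m hm => ?_⟩
    subst hf
    rw [h0, one_mul, norm_sub_rev]
    simp
  -- main case
  have he : 0 < ‖f - mstar‖ := lt_of_le_of_ne (norm_nonneg _) (Ne.symm h0)
  have hn : 0 < n := by
    rcases Nat.eq_zero_or_pos n with h | h
    · exfalso
      obtain ⟨m₀, hm₀M, hm₀⟩ := Submodule.exists_mem_ne_zero_of_ne_bot hMbot
      subst h
      exact hHaar m₀ hm₀M hm₀ ⟨Fin.elim0, fun a => a.elim0, fun i => i.elim0⟩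
    · exact h
  have hFD : FiniteDimensional ℝ M := Module.finite_of_finrank_pos (hdim ▸ hn)
  set E : C(B, ℝ) := f - mstar with hE
  set e : ℝ := ‖E‖ with he'
  set A : Set B := {x | |E x| = e} with hA
  have hAclosed : IsClosed A := isClosed_eq (E.continuous.abs) continuous_const
  have hAcpt : IsCompact A := hAclosed.isCompact
  have hAne : A.Nonempty := aux_extremal E he
  have hEb : ∀ x : B, |E x| ≤ e := fun x => by
    simpa [Real.norm_eq_abs] using E.norm_coe_le_norm x
  have hEA : ∀ x ∈ A, E x ≠ 0 := by
    intro x hx hc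
    have hx' : |E x| = e := hx
    rw [hc, abs_zero] at hx'
    linarith
  -- THE KEY CLAIM: every nonzero element of M is positively correlated with E
  -- somewhere on the critical set A
  have claim : ∀ m₀ : C(B, ℝ), m₀ ∈ M → m₀ ≠ 0 → ∃ x ∈ A, 0 < E x * m₀ x := by
    intro m₀ hm₀M hm₀
    by_contra hcon
    push_neg at hcon
    obtain ⟨T, hT, hTcard⟩ := aux_zeros n m₀ (hHaar m₀ hm₀M hm₀)
    obtain ⟨W, hTW, hWcard⟩ := aux_superset n M hdim (n - T.card) T (by omega)
    obtain ⟨p, hpM, hp⟩ := aux_interp n M hdim hHaar W hWcard (fun x => E x)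
    set A' : Set B := {x | |E x| = e ∧ E x * p x ≤ 0} with hA'
    have hA'cpt : IsCompact A' :=
      (((isClosed_eq (E.continuous.abs) continuous_const).inter
        (isClosed_le (E.continuous.mul p.continuous) continuous_const))).isCompact
    have hA'pos : ∀ x ∈ A', 0 < E x * (-m₀ x) := by
      intro x hx
      have hxA : x ∈ A := hx.1
      have h1 : E x * m₀ x ≤ 0 := hcon x hxA
      have hEx : E x ≠ 0 := hEA x hxA
      have hm₀x : m₀ x ≠ 0 := by
        intro h
        have hxW : x ∈ W := hTW (hT x h)
        have h2 := hx.2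
        rw [hp x hxW] at h2
        nlinarith [mul_self_pos.mpr hEx]
      have : E x * m₀ x < 0 := lt_of_le_of_ne h1 (mul_ne_zero hEx hm₀x)
      nlinarith
    -- uniform lower bound δ on A'
    have hδ : ∃ δ : ℝ, 0 < δ ∧ ∀ x ∈ A', δ ≤ E x * (-m₀ x) := by
      rcases A'.eq_empty_or_nonempty with h | hA'ne
      · exact ⟨1, one_pos, fun x hx => by rw [h] at hx; exact hx.elim⟩
      · obtain ⟨x₂, hx₂A, hx₂⟩ := hA'cpt.exists_isMinOn hA'ne
          ((E.continuous.mul (m₀.continuous.neg)).continuousOn)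
        exact ⟨E x₂ * (-m₀ x₂), hA'pos x₂ hx₂A, fun x hx => hx₂ hx⟩
    obtain ⟨δ, hδpos, hδA'⟩ := hδ
    set ε : ℝ := δ / (2 * (e * ‖p‖ + 1)) with hε
    have hεpos : 0 < ε := by positivity
    -- apply the Kolmogorov lemma to ε • p - m₀
    have hmemK : ε • p - m₀ ∈ M := M.sub_mem (M.smul_mem ε hpM) hm₀M
    refine aux_kolmogorov M f mstar hmem hbest (ε • p - m₀) hmemK he ?_
    intro x hx
    have hxA : x ∈ A := hx
    have hval : (ε • p - m₀) x = ε * p x - m₀ x := by simp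
    rw [hval]
    have h1 : E x * m₀ x ≤ 0 := hcon x hxA
    have hexp : E x * (ε * p x - m₀ x) = ε * (E x * p x) + E x * (-m₀ x) := by ring
    rw [hexp]
    by_cases hxV : 0 < E x * p x
    · nlinarith
    · push_neg at hxV
      have hxA' : x ∈ A' := ⟨hxA, hxV⟩
      have h2 : δ ≤ E x * (-m₀ x) := hδA' x hxA'
      have h3 : |E x * p x| ≤ e * ‖p‖ := by
        rw [abs_mul]
        have := hEb x
        have hpx : |p x| ≤ ‖p‖ := by
          simpa [Real.norm_eq_abs] using p.norm_coe_le_norm x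
        have h0e : (0:ℝ) ≤ e := le_of_lt he
        exact mul_le_mul this hpx (abs_nonneg _) h0e
      have h4 : ε * (e * ‖p‖) ≤ δ / 2 := by
        rw [hε]
        rw [div_mul_eq_mul_div, div_le_div_iff₀ (by positivity) (by norm_num)]
        nlinarith [norm_nonneg p, he]
      have h5 : -(δ/2) ≤ ε * (E x * p x) := by
        have := abs_le.mp h3
        nlinarith
      linarith
  -- the minimum of the correlation functional on the unit sphere of M
  set Φ : C(B, ℝ) → ℝ := fun u => sSup ((fun x => E x * u x) '' A) with hΦ
  have himg_ne : ∀ u : C(B, ℝ), ((fun x => E x * u x) '' A).Nonempty :=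
    fun u => hAne.image _
  have hbddA : ∀ u : C(B, ℝ), BddAbove ((fun x => E x * u x) '' A) := by
    intro u
    exact (hAcpt.image (E.continuous.mul u.continuous)).bddAbove
  have hΦle : ∀ (u : C(B, ℝ)) (c : ℝ), (∀ x ∈ A, E x * u x ≤ c) → Φ u ≤ c := by
    intro u c h
    exact csSup_le (himg_ne u) (by rintro y ⟨x, hx, rfl⟩; exact h x hx)
  have hleΦ : ∀ (u : C(B, ℝ)) (x : B), x ∈ A → E x * u x ≤ Φ u := by
    intro u x hx
    exact le_csSup (hbddA u) ⟨x, hx, rfl⟩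
  have hΦlip : LipschitzWith ⟨e, he.le⟩ Φ := by
    apply LipschitzWith.of_dist_le_mul
    intro u v
    have key : ∀ u v : C(B, ℝ), Φ u - Φ v ≤ e * dist u v := by
      intro u v
      rw [sub_le_iff_le_add]
      apply hΦle
      intro x hx
      have h1 : E x * u x = E x * v x + E x * (u x - v x) := by ring
      have h2 : E x * v x ≤ Φ v := hleΦ v x hx
      have h3 : E x * (u x - v x) ≤ e * dist u v := by
        calc E x * (u x - v x) ≤ |E x * (u x - v x)| := le_abs_self _
          _ = |E x| * |u x - v x| := abs_mul _ _
          _ ≤ e * dist u v := by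
            apply mul_le_mul (hEb x) ?_ (abs_nonneg _) he.le
            rw [← Real.dist_eq]
            exact ContinuousMap.dist_apply_le_dist x
      linarith
    rw [Real.dist_eq]
    rw [abs_sub_le_iff]
    exact ⟨key u v, by rw [dist_comm]; exact key v u⟩
  -- minimize over the unit sphere of M
  have hnt : Nontrivial M := Submodule.nontrivial_iff_ne_bot.mpr hMbot
  have hsph_ne : (Metric.sphere (0 : M) 1).Nonempty :=
    NormedSpace.sphere_nonempty.mpr zero_le_one
  have hsph_cpt : IsCompact (Metric.sphere (0 : M) 1) := isCompact_sphere 0 1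
  have hcont : Continuous (fun u : M => Φ (u : C(B, ℝ))) :=
    hΦlip.continuous.comp continuous_subtype_val
  obtain ⟨u₁, hu₁sph, hu₁min⟩ := hsph_cpt.exists_isMinOn hsph_ne hcont.continuousOn
  have hu₁norm : ‖u₁‖ = 1 := by simpa using hu₁sph
  set γ₀ : ℝ := Φ (u₁ : C(B, ℝ)) with hγ₀
  have hγ₀pos : 0 < γ₀ := by
    have hu₁ne : (u₁ : C(B, ℝ)) ≠ 0 := by
      intro h
      have : u₁ = 0 := by exact_mod_cast Submodule.coe_eq_zero.mp h
      rw [this] at hu₁norm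
      simp at hu₁norm
    obtain ⟨x, hxA, hx⟩ := claim (u₁ : C(B, ℝ)) u₁.2 hu₁ne
    exact lt_of_lt_of_le hx (hleΦ _ x hxA)
  refine ⟨γ₀ / e, by positivity, fun m hm => ?_⟩
  by_cases hmeq : m = mstar
  · rw [hmeq]
    have h7 : ‖f - mstar‖ = e := rfl
    simp [h7]
  -- normalize mstar - m
  set u : M := ⟨mstar - m, M.sub_mem hmem hm⟩ with hu
  have huC : (u : C(B, ℝ)) = mstar - m := rfl
  have hune : u ≠ 0 := by
    intro h
    apply hmeq
    have : mstar - m = 0 := by rw [← huC, h]; rfl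
    have := sub_eq_zero.mp this
    exact this.symm
  set t : ℝ := ‖u‖ with ht
  have htpos : 0 < t := norm_pos_iff.mpr hune
  set u' : M := t⁻¹ • u with hu'
  have hu'sph : u' ∈ Metric.sphere (0 : M) 1 := by
    rw [mem_sphere_zero_iff_norm, hu']
    have hns : ‖t⁻¹ • u‖ = ‖t⁻¹‖ * ‖u‖ := norm_smul t⁻¹ (u : C(B, ℝ))
    refine hns.trans ?_
    rw [norm_inv,
      Real.norm_eq_abs, abs_of_pos htpos]
    exact inv_mul_cancel₀ htpos.ne'
  have hγ₀le : γ₀ ≤ Φ (u' : C(B, ℝ)) := hu₁min hu'sph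
  -- the sup for u' is attained
  obtain ⟨x₃, hx₃A, hx₃⟩ := hAcpt.exists_isMaxOn hAne
    ((E.continuous.mul (u' : C(B, ℝ)).continuous).continuousOn)
  have hΦu' : Φ (u' : C(B, ℝ)) ≤ E x₃ * (u' : C(B, ℝ)) x₃ := by
    apply hΦle
    intro x hx
    exact hx₃ hx
  have hu'val : ∀ x : B, (u' : C(B, ℝ)) x = t⁻¹ * (mstar x - m x) := by
    intro x
    rw [hu']
    simp [huC]
  have hmain : γ₀ * t ≤ E x₃ * (mstar x₃ - m x₃) := by
    have h1 : γ₀ ≤ E x₃ * (t⁻¹ * (mstar x₃ - m x₃)) := by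
      rw [← hu'val x₃]
      exact le_trans hγ₀le hΦu'
    calc γ₀ * t ≤ (E x₃ * (t⁻¹ * (mstar x₃ - m x₃))) * t :=
          mul_le_mul_of_nonneg_right h1 htpos.le
      _ = E x₃ * (mstar x₃ - m x₃) := by field_simp
  -- final computation
  have hx₃e : |E x₃| = e := hx₃A
  have hfm : e + γ₀ * t / e ≤ ‖f - m‖ := by
    have h1 : (E x₃ / e) * (f x₃ - m x₃) ≤ |f x₃ - m x₃| := by
      have habs : |E x₃ / e| = 1 := by
        rw [abs_div, hx₃e, abs_of_pos he, div_self he.ne']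
      calc (E x₃ / e) * (f x₃ - m x₃) ≤ |(E x₃ / e) * (f x₃ - m x₃)| := le_abs_self _
        _ = |E x₃ / e| * |f x₃ - m x₃| := abs_mul _ _
        _ = |f x₃ - m x₃| := by rw [habs, one_mul]
    have hEx3 : E x₃ = f x₃ - mstar x₃ := by rw [hE]; simp
    have h2 : (E x₃ / e) * (f x₃ - m x₃) = (E x₃ * E x₃) / e + (E x₃ * (mstar x₃ - m x₃)) / e := by
      rw [hEx3]; ring
    have h3 : E x₃ * E x₃ = e ^ 2 := by
      have : (E x₃) ^ 2 = |E x₃| ^ 2 := (sq_abs _).symm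
      rw [hx₃e] at this
      nlinarith [this]
    have h4 : |f x₃ - m x₃| ≤ ‖f - m‖ := by
      have : f x₃ - m x₃ = (f - m) x₃ := by simp
      rw [this]
      simpa [Real.norm_eq_abs] using (f - m).norm_coe_le_norm x₃
    have h5 : e ^ 2 / e = e := by field_simp
    have h3' : (E x₃ * E x₃) / e = e := by rw [h3]; exact h5
    have h6 : γ₀ * t / e ≤ (E x₃ * (mstar x₃ - m x₃)) / e := by gcongr
    linarith [h1, h2, h3', h4, h6]
  have htval : t = ‖m - mstar‖ := by
    rw [ht]
    have : ‖u‖ = ‖(u : C(B, ℝ))‖ := rfl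
    rw [this, huC, norm_sub_rev]
  rw [htval] at hfm
  have : γ₀ / e * ‖m - mstar‖ = γ₀ * ‖m - mstar‖ / e := by ring
  rw [this]
  linarith
end

section
/- Let B be a compact Hausdorff space, let n ≥ 1, let M be an n-dimensional Haar subspace of C(B), let f ∈ C(B) with f ∉ M, and let m* ∈ M be the best approximant to f from M. Suppose the set A_{f−m*} = {x ∈ B : |(f−m*)(x)| = ‖f−m*‖} consists of exactly n+1 points. Then every γ > 0 satisfying ‖f − m‖ − ‖f − m*‖ ≥ γ‖m − m*‖ for all m ∈ M satisfies γ ≤ 1/n; in other words, the optimal strong uniqueness constant of f is at most 1/n. -/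
open Set

/-- Local bound near a point where `e` attains its norm with positive sign. -/
lemma su_loc_max {B : Type*} [TopologicalSpace B] [CompactSpace B] (e g : C(B, ℝ))
    (hE : 0 < ‖e‖) (b : B) (hb : e b = ‖e‖) (hgb : g b ≤ 1)
    (ε : ℝ) (hε : 0 < ε) :
    ∃ U ∈ nhds b, ∃ t₀ > (0:ℝ), ∀ y ∈ U, ∀ t : ℝ, 0 < t → t ≤ t₀ →
      |e y + t * g y| ≤ ‖e‖ + t * (1 + ε) := by
  refine ⟨{y | ‖e‖ / 2 < e y} ∩ {y | g y < 1 + ε}, ?_, ‖e‖ / (2 * (‖g‖ + 1)),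
    by positivity, ?_⟩
  · apply Filter.inter_mem
    · exact (isOpen_lt continuous_const e.continuous).mem_nhds
        (by simp only [mem_setOf_eq]; linarith)
    · exact (isOpen_lt g.continuous continuous_const).mem_nhds
        (by simp only [mem_setOf_eq]; linarith)
  · rintro y ⟨hy1, hy2⟩ t ht ht0
    simp only [mem_setOf_eq] at hy1 hy2
    have hey : e y ≤ ‖e‖ := by
      have := e.norm_coe_le_norm y
      rw [Real.norm_eq_abs] at this
      exact le_trans (le_abs_self _) this
    have hgy : -‖g‖ ≤ g y := by
      have := g.norm_coe_le_norm y
      rw [Real.norm_eq_abs, abs_le] at this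
      exact this.1
    have hg0 : (0:ℝ) ≤ ‖g‖ := norm_nonneg g
    have h2 : t * (2 * (‖g‖ + 1)) ≤ ‖e‖ := by
      rw [← le_div_iff₀ (by positivity)]; exact ht0
    rw [abs_le]
    constructor
    · nlinarith
    · nlinarith

/-- Local bound near an arbitrary point. -/
lemma su_loc_pt {B : Type*} [TopologicalSpace B] [CompactSpace B] (e g : C(B, ℝ))
    (hE : 0 < ‖e‖) (b : B)
    (hg : ∀ y, |e y| = ‖e‖ → e y * g y ≤ ‖e‖)
    (ε : ℝ) (hε : 0 < ε) :
    ∃ U ∈ nhds b, ∃ t₀ > (0:ℝ), ∀ y ∈ U, ∀ t : ℝ, 0 < t → t ≤ t₀ →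
      |e y + t * g y| ≤ ‖e‖ + t * (1 + ε) := by
  by_cases hb : |e b| = ‖e‖
  · rcases (abs_eq (norm_nonneg e)).mp hb with h1 | h1
    · have hgb : g b ≤ 1 := by
        have := hg b hb
        rw [h1] at this
        nlinarith
      exact su_loc_max e g hE b h1 hgb ε hε
    · have hgb : (-g) b ≤ 1 := by
        have := hg b hb
        rw [h1] at this
        simp only [ContinuousMap.neg_apply]
        nlinarith
      have hEn : 0 < ‖-e‖ := by rwa [norm_neg]
      have hbe : (-e) b = ‖-e‖ := by
        simp only [ContinuousMap.neg_apply, norm_neg, h1, neg_neg]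
      obtain ⟨U, hU, t₀, ht₀, H⟩ := su_loc_max (-e) (-g) hEn b hbe hgb ε hε
      refine ⟨U, hU, t₀, ht₀, fun y hy t ht htt => ?_⟩
      have h := H y hy t ht htt
      simp only [ContinuousMap.neg_apply, norm_neg] at h
      calc |e y + t * g y| = |(-(e y)) + t * (-(g y))| := by
            rw [← abs_neg]; ring_nf
        _ ≤ ‖e‖ + t * (1 + ε) := h
  · have hlt : |e b| < ‖e‖ := by
      have := e.norm_coe_le_norm b
      rw [Real.norm_eq_abs] at this
      exact lt_of_le_of_ne this hb
    have habs0 : (0:ℝ) ≤ |e b| := abs_nonneg _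
    refine ⟨{y | |e y| < (|e b| + ‖e‖) / 2}, ?_,
      (‖e‖ - |e b|) / 2 / (‖g‖ + 1),
      div_pos (by linarith) (by positivity), ?_⟩
    · exact (isOpen_lt (continuous_abs.comp e.continuous) continuous_const).mem_nhds
        (by simp only [mem_setOf_eq, Function.comp]; linarith)
    · intro y hy t ht htt
      simp only [mem_setOf_eq] at hy
      have h2 : t * (‖g‖ + 1) ≤ (‖e‖ - |e b|) / 2 := by
        rw [← le_div_iff₀ (by positivity)]; exact htt
      have h3 : |t * g y| ≤ t * ‖g‖ := by
        rw [abs_mul, abs_of_pos ht]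
        have := g.norm_coe_le_norm y
        rw [Real.norm_eq_abs] at this
        nlinarith
      calc |e y + t * g y| ≤ |e y| + |t * g y| := abs_add_le _ _
        _ ≤ ‖e‖ + t * (1 + ε) := by nlinarith

/-- Key analytic estimate: if `e·g ≤ ‖e‖` on the extreme set, then for small `t > 0`
the norm of `e + t • g` exceeds `‖e‖` by at most `t(1+ε)`. -/
lemma su_aux_analytic {B : Type*} [TopologicalSpace B] [CompactSpace B] [Nonempty B]
    (e g : C(B, ℝ)) (hE : 0 < ‖e‖)
    (hg : ∀ b, |e b| = ‖e‖ → e b * g b ≤ ‖e‖)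
    (ε : ℝ) (hε : 0 < ε) :
    ∃ t : ℝ, 0 < t ∧ ‖e + t • g‖ ≤ ‖e‖ + t * (1 + ε) := by
  choose U hU t₀ ht₀ H using fun b => su_loc_pt e g hE b hg ε hε
  obtain ⟨s, -, hs⟩ := isCompact_univ.elim_nhds_subcover U (fun b _ => hU b)
  have hsne : s.Nonempty := by
    rcases Finset.eq_empty_or_nonempty s with h | h
    · exfalso
      have := hs (mem_univ (Classical.arbitrary B))
      simp [h] at this
    · exact h
  set t := s.inf' hsne t₀ with htdef
  have htpos : 0 < t := by
    rw [htdef, Finset.lt_inf'_iff]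
    exact fun b _ => ht₀ b
  refine ⟨t, htpos, ?_⟩
  rw [ContinuousMap.norm_le _ (by positivity)]
  intro y
  have hy : y ∈ ⋃ b ∈ s, U b := hs (mem_univ y)
  simp only [mem_iUnion, exists_prop] at hy
  obtain ⟨b, hb, hyb⟩ := hy
  have := H b y hyb t htpos (Finset.inf'_le t₀ hb)
  simpa [Real.norm_eq_abs] using this

/-- Interpolation lemma: using the Haar property one can find `g ∈ M` of norm `≥ n`
whose `σ`-twisted values at the `n+1` points are all `≤ 1`. -/
lemma su_interp {B : Type*} [TopologicalSpace B] [CompactSpace B]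
    (n : ℕ) (hn : 1 ≤ n) (M : Submodule ℝ C(B, ℝ)) (hdim : Module.finrank ℝ M = n)
    (hvan : ∀ m ∈ M, ∀ z : Fin n → B, Function.Injective z → (∀ k, m (z k) = 0) → m = 0)
    (x : Fin (n+1) → B) (hxinj : Function.Injective x)
    (σ : Fin (n+1) → ℝ) (hσ : ∀ i, σ i = 1 ∨ σ i = -1) :
    ∃ g ∈ M, (n:ℝ) ≤ ‖g‖ ∧ ∀ i, σ i * g (x i) ≤ 1 := by
  classical
  have hn1 : (1:ℝ) ≤ (n:ℝ) := by exact_mod_cast hn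
  have hσ0 : ∀ i, σ i ≠ 0 := fun i => by rcases hσ i with h | h <;> rw [h] <;> norm_num
  have hσabs : ∀ i, |σ i| = 1 := fun i => by rcases hσ i with h | h <;> rw [h] <;> norm_num
  haveI : FiniteDimensional ℝ M := FiniteDimensional.of_finrank_pos (by rw [hdim]; omega)
  let Slm : M →ₗ[ℝ] (Fin n → ℝ) :=
    { toFun := fun m k => σ k.castSucc * (m : C(B, ℝ)) (x k.castSucc)
      map_add' := fun a b => by
        funext k
        simp [mul_add]
      map_smul' := fun c a => by
        funext k
        simp [ContinuousMap.smul_apply]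
        ring }
  have hSinj : Function.Injective Slm := by
    rw [injective_iff_map_eq_zero]
    intro m hm
    have hz : ∀ k : Fin n, (m : C(B, ℝ)) (x k.castSucc) = 0 := by
      intro k
      have h := congrFun hm k
      simp only [Slm, LinearMap.coe_mk, AddHom.coe_mk, Pi.zero_apply] at h
      exact (mul_eq_zero.mp h).resolve_left (hσ0 _)
    have h0 : (m : C(B, ℝ)) = 0 :=
      hvan m m.2 (fun k => x k.castSucc) (hxinj.comp (Fin.castSucc_injective n)) hz
    exact Subtype.ext h0
  have hSsurj : Function.Surjective Slm :=
    (LinearMap.injective_iff_surjective_of_finrank_eq_finrank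
      (by rw [hdim, Module.finrank_fin_fun])).mp hSinj
  let Seq : M ≃ₗ[ℝ] (Fin n → ℝ) := LinearEquiv.ofBijective Slm ⟨hSinj, hSsurj⟩
  let Φ : M →ₗ[ℝ] ℝ :=
    { toFun := fun m => σ (Fin.last n) * (m : C(B, ℝ)) (x (Fin.last n))
      map_add' := fun a b => by simp [mul_add]
      map_smul' := fun c a => by simp [ContinuousMap.smul_apply]; ring }
  let Ψ : (Fin n → ℝ) →ₗ[ℝ] ℝ := Φ ∘ₗ (Seq.symm : (Fin n → ℝ) ≃ₗ[ℝ] M).toLinearMap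
  let d : Fin n → ℝ := fun k => Ψ (fun j => if k = j then 1 else 0)
  have hΨ : ∀ w, Ψ w = ∑ k, w k * d k := by
    intro w
    rw [LinearMap.pi_apply_eq_sum_univ]
    simp [d, smul_eq_mul]
  have hval : ∀ (w : Fin n → ℝ) (k : Fin n),
      σ k.castSucc * ((Seq.symm w : M) : C(B, ℝ)) (x k.castSucc) = w k := by
    intro w k
    have h : Slm (Seq.symm w) = w := Seq.apply_symm_apply w
    exact congrFun h k
  have hlast : ∀ (w : Fin n → ℝ),
      σ (Fin.last n) * ((Seq.symm w : M) : C(B, ℝ)) (x (Fin.last n)) = Ψ w :=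
    fun w => rfl
  have habs : ∀ (m : M) (i : Fin (n+1)),
      |σ i * (m : C(B, ℝ)) (x i)| ≤ ‖(m : C(B, ℝ))‖ := by
    intro m i
    rw [abs_mul, hσabs, one_mul]
    have := (m : C(B, ℝ)).norm_coe_le_norm (x i)
    rwa [Real.norm_eq_abs] at this
  -- each dual coefficient is nonzero
  have hd0 : ∀ k, d k ≠ 0 := by
    intro k hk
    have hm0 : ((Seq.symm (fun j => if k = j then (1:ℝ) else 0) : M) : C(B, ℝ)) = 0 := by
      apply hvan _ (Seq.symm (fun j => if k = j then (1:ℝ) else 0)).2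
        (fun j => x ((k.castSucc).succAbove j))
        (hxinj.comp (Fin.succAbove_right_injective))
      intro j
      by_cases hj : (k.castSucc).succAbove j = Fin.last n
      · have h1 := hlast (fun j => if k = j then (1:ℝ) else 0)
        rw [hΨ] at h1
        have h2 : (∑ j, (if k = j then (1:ℝ) else 0) * d j) = d k := by simp
        rw [h2, hk] at h1
        have := (mul_eq_zero.mp h1).resolve_left (hσ0 _)
        rwa [hj]
      · obtain ⟨j', hj'⟩ := Fin.exists_castSucc_eq.mpr hj
        have hne : j' ≠ k := by
          intro h
          subst h
          exact Fin.succAbove_ne _ j hj'.symm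
        have h1 := hval (fun j => if k = j then (1:ℝ) else 0) j'
        rw [if_neg (Ne.symm hne)] at h1
        have := (mul_eq_zero.mp h1).resolve_left (hσ0 _)
        rw [← hj']
        exact this
    have h1 := hval (fun j => if k = j then (1:ℝ) else 0) k
    rw [hm0] at h1
    simp at h1
  by_cases hcase : ∃ k, 0 < d k
  · -- some coefficient positive
    obtain ⟨k, hk⟩ := hcase
    refine ⟨((Seq.symm (fun j => if k = j then -(n:ℝ) else 0) : M) : C(B, ℝ)),
      (Seq.symm _).2, ?_, ?_⟩
    · have h1 := hval (fun j => if k = j then -(n:ℝ) else 0) k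
      rw [if_pos rfl] at h1
      calc (n:ℝ) = |(-(n:ℝ))| := by rw [abs_neg, abs_of_nonneg (by linarith)]
        _ = |σ k.castSucc * ((Seq.symm (fun j => if k = j then -(n:ℝ) else 0) : M) : C(B, ℝ))
              (x k.castSucc)| := by rw [h1]
        _ ≤ _ := habs _ _
    · intro i
      induction i using Fin.lastCases with
      | last =>
        rw [hlast, hΨ]
        have h2 : (∑ j, (if k = j then -(n:ℝ) else 0) * d j) = -(n:ℝ) * d k := by simp
        rw [h2]
        nlinarith
      | cast j =>
        rw [hval]
        by_cases hj : k = j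
        · rw [if_pos hj]; linarith
        · rw [if_neg hj]; norm_num
  · -- all coefficients negative
    push_neg at hcase
    have hdneg : ∀ k, d k < 0 := fun k => lt_of_le_of_ne (hcase k) (hd0 k)
    set p : Fin (n+1) → ℝ := fun i => Fin.lastCases 1 (fun k => -d k) i with hp
    have hplast : p (Fin.last n) = 1 := by simp [hp]
    have hpcast : ∀ k : Fin n, p k.castSucc = -d k := by
      intro k; simp [hp]
    have hppos : ∀ i, 0 < p i := by
      intro i
      induction i using Fin.lastCases with
      | last => rw [hplast]; norm_num
      | cast k => rw [hpcast]; linarith [hdneg k]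
    obtain ⟨j, -, hjmin⟩ := Finset.exists_min_image Finset.univ p ⟨0, Finset.mem_univ 0⟩
    set T := ∑ i, p i with hT
    have hTsum : T = ∑ k : Fin n, p k.castSucc + 1 := by
      rw [hT, Fin.sum_univ_castSucc, hplast]
    have hTcard : ((n:ℝ) + 1) * p j ≤ T := by
      have := Finset.card_nsmul_le_sum Finset.univ p (p j)
        (fun i _ => hjmin i (Finset.mem_univ i))
      simp only [Finset.card_univ, Fintype.card_fin, nsmul_eq_mul] at this
      push_cast at this
      linarith
    have hpj : 0 < p j := hppos j
    have hD : (n:ℝ) * p j ≤ T - p j := by linarith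
    have hDpos : 0 < T - p j := by nlinarith
    set c := (n:ℝ) * p j / (T - p j) with hc
    have hcpos : 0 < c := div_pos (by nlinarith) hDpos
    have hc1 : c ≤ 1 := (div_le_one hDpos).mpr hD
    have hcD : c * (T - p j) = (n:ℝ) * p j := div_mul_cancel₀ _ (ne_of_gt hDpos)
    set w : Fin n → ℝ := fun k => if k.castSucc = j then -(n:ℝ) else c with hw
    have hsumd : ∑ k : Fin n, d k = -(T - 1) := by
      have h1 : ∑ k : Fin n, d k = -∑ k : Fin n, p k.castSucc := by
        rw [← Finset.sum_neg_distrib]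
        exact Finset.sum_congr rfl fun k _ => by rw [hpcast]; ring
      have h2 : ∑ k : Fin n, p k.castSucc = T - 1 := by rw [hTsum]; ring
      rw [h1, h2]
    have hΨw : Ψ w = if j = Fin.last n then -(n:ℝ) else c := by
      rw [hΨ]
      by_cases hj : j = Fin.last n
      · rw [if_pos hj]
        have hwc : ∀ k : Fin n, w k = c := by
          intro k
          rw [hw]
          refine if_neg ?_
          rw [hj]
          exact (Fin.castSucc_lt_last k).ne
        have heq : ∑ k : Fin n, w k * d k = c * ∑ k : Fin n, d k := by
          rw [Finset.mul_sum]
          exact Finset.sum_congr rfl fun k _ => by rw [hwc]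
        rw [heq, hsumd]
        have hpj1 : p j = 1 := by rw [hj, hplast]
        rw [hpj1] at hcD
        linear_combination -hcD
      · obtain ⟨m', hm'⟩ := Fin.exists_castSucc_eq.mpr hj
        have hsplit : ∀ k : Fin n, w k * d k =
            c * d k + (if k = m' then (-(n:ℝ) - c) * d k else 0) := by
          intro k
          by_cases hk : k = m'
          · subst hk
            have h1 : w k = -(n:ℝ) := by rw [hw]; exact if_pos hm'
            rw [h1, if_pos rfl]
            ring
          · have hne : k.castSucc ≠ j := by
              rw [← hm']
              exact fun h => hk (Fin.castSucc_injective n h)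
            have h1 : w k = c := by rw [hw]; exact if_neg hne
            rw [h1, if_neg hk]
            ring
        have heq : ∑ k : Fin n, w k * d k
            = c * (∑ k : Fin n, d k) + (-(n:ℝ) - c) * d m' := by
          rw [Finset.sum_congr rfl fun k _ => hsplit k, Finset.sum_add_distrib,
            ← Finset.mul_sum, Finset.sum_ite_eq' Finset.univ m'
              (fun k => (-(n:ℝ) - c) * d k)]
          rw [if_pos (Finset.mem_univ m')]
        have hdm' : d m' = -p j := by rw [← hm', hpcast, neg_neg]
        rw [heq, hsumd, hdm', if_neg hj]
        linear_combination -hcD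
    refine ⟨((Seq.symm w : M) : C(B, ℝ)), (Seq.symm w).2, ?_, ?_⟩
    · by_cases hj : j = Fin.last n
      · calc (n:ℝ) = |Ψ w| := by
              rw [hΨw, if_pos hj, abs_neg, abs_of_nonneg (by linarith)]
          _ = |σ (Fin.last n) * ((Seq.symm w : M) : C(B, ℝ)) (x (Fin.last n))| := by
              rw [hlast]
          _ ≤ _ := habs _ _
      · obtain ⟨m', hm'⟩ := Fin.exists_castSucc_eq.mpr hj
        have h1 := hval w m'
        have h2 : w m' = -(n:ℝ) := by rw [hw]; exact if_pos hm'
        rw [h2] at h1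
        calc (n:ℝ) = |(-(n:ℝ))| := by rw [abs_neg, abs_of_nonneg (by linarith)]
          _ = |σ m'.castSucc * ((Seq.symm w : M) : C(B, ℝ)) (x m'.castSucc)| := by rw [h1]
          _ ≤ _ := habs _ _
    · intro i
      induction i using Fin.lastCases with
      | last =>
        rw [hlast, hΨw]
        by_cases hj : j = Fin.last n
        · rw [if_pos hj]; linarith
        · rw [if_neg hj]; exact hc1
      | cast k =>
        rw [hval]
        by_cases hk : k.castSucc = j
        · have : w k = -(n:ℝ) := by rw [hw]; exact if_pos hk
          rw [this]; linarith
        · have : w k = c := by rw [hw]; exact if_neg hk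
          rw [this]; exact hc1

/-- Let `M` be an `n`-dimensional Haar subspace of `C(B)`
(`n ≥ 1`), `f ∉ M`, and `m*` the best approximant to `f` from `M`.  If the extreme
set `A_{f−m*} = {x : |(f−m*)(x)| = ‖f−m*‖}` has exactly `n+1` points, then every
strong uniqueness constant `γ > 0` for `f` satisfies `γ ≤ 1/n`. -/
theorem stmt_11 {B : Type*} [TopologicalSpace B] [CompactSpace B] [T2Space B]
    (n : ℕ) (hn : 1 ≤ n)
    (M : Submodule ℝ C(B, ℝ)) (hdim : Module.finrank ℝ M = n)
    (hHaar : ∀ m ∈ M, m ≠ 0 →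
      ¬ ∃ x : Fin n → B, Function.Injective x ∧ ∀ i, m (x i) = 0)
    (f : C(B, ℝ)) (hf : f ∉ M) (mstar : C(B, ℝ)) (hmem : mstar ∈ M)
    (hbest : ∀ m ∈ M, ‖f - mstar‖ ≤ ‖f - m‖)
    (hA : {x : B | |(f - mstar) x| = ‖f - mstar‖}.ncard = n + 1)
    (γ : ℝ) (hγ : 0 < γ)
    (hsu : ∀ m ∈ M, γ * ‖m - mstar‖ ≤ ‖f - m‖ - ‖f - mstar‖) :
    γ ≤ 1 / n := by
  classical
  set e : C(B, ℝ) := f - mstar with he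
  have hE : 0 < ‖e‖ := by
    rcases eq_or_lt_of_le (norm_nonneg e) with h | h
    · exfalso
      have he0 : e = 0 := norm_eq_zero.mp h.symm
      have hfm : f = mstar := sub_eq_zero.mp (he ▸ he0)
      exact hf (hfm ▸ hmem)
    · exact h
  have hfin : {x : B | |e x| = ‖e‖}.Finite := by
    by_contra h
    have hinf : {x : B | |e x| = ‖e‖}.Infinite := h
    rw [hinf.ncard] at hA
    omega
  haveI := hfin.fintype
  have hcard : Fintype.card {x : B | |e x| = ‖e‖} = n + 1 := by
    rw [← Nat.card_eq_fintype_card, Nat.card_coe_set_eq, hA]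
  let eqv := Fintype.equivFinOfCardEq hcard
  set x : Fin (n+1) → B := fun i => (eqv.symm i : B) with hx
  have hxinj : Function.Injective x := fun i j hij =>
    eqv.symm.injective (Subtype.coe_injective hij)
  have hxmem : ∀ i, |e (x i)| = ‖e‖ := fun i => (eqv.symm i).2
  have hxall : ∀ b, |e b| = ‖e‖ → ∃ i, x i = b := fun b hb =>
    ⟨eqv ⟨b, hb⟩, by simp [hx]⟩
  set σ : Fin (n+1) → ℝ := fun i => if 0 ≤ e (x i) then 1 else -1 with hσdef
  have hσpm : ∀ i, σ i = 1 ∨ σ i = -1 := by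
    intro i
    by_cases h : 0 ≤ e (x i)
    · left; simp [hσdef, h]
    · right; simp [hσdef, h]
  have hσe : ∀ i, σ i * e (x i) = ‖e‖ := by
    intro i
    have hmemi := hxmem i
    by_cases h : 0 ≤ e (x i)
    · have hσi : σ i = 1 := by simp [hσdef, h]
      rw [hσi, one_mul, ← hmemi, abs_of_nonneg h]
    · have hσi : σ i = -1 := by simp [hσdef, h]
      push_neg at h
      rw [abs_of_neg h] at hmemi
      rw [hσi]
      linarith
  have hvan : ∀ m ∈ M, ∀ z : Fin n → B, Function.Injective z →
      (∀ k, m (z k) = 0) → m = 0 := by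
    intro m hm z hz h0
    by_contra hne
    exact hHaar m hm hne ⟨z, hz, h0⟩
  obtain ⟨g, hgM, hgn, hgle⟩ := su_interp n hn M hdim hvan x hxinj σ hσpm
  haveI : Nonempty B := ⟨x 0⟩
  have hgcond : ∀ b, |e b| = ‖e‖ → e b * g b ≤ ‖e‖ := by
    intro b hb
    obtain ⟨i, rfl⟩ := hxall b hb
    have h1 := hgle i
    have h2 := hσe i
    rcases hσpm i with h | h <;> rw [h] at h1 h2 <;> nlinarith
  have hkey : γ * ‖g‖ ≤ 1 := by
    apply le_of_forall_pos_le_add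
    intro ε hε
    obtain ⟨t, ht, hbound⟩ := su_aux_analytic e g hE hgcond ε hε
    have hmm : mstar - t • g ∈ M := Submodule.sub_mem M hmem (Submodule.smul_mem M t hgM)
    have h1 := hsu _ hmm
    have h2 : (mstar - t • g) - mstar = -(t • g) := by abel
    have h3 : f - (mstar - t • g) = e + t • g := by rw [he]; abel
    rw [h2, h3, norm_neg] at h1
    have h4 : ‖t • g‖ = t * ‖g‖ := by
      rw [norm_smul t g, Real.norm_eq_abs, abs_of_pos ht]
    rw [h4] at h1
    have h5 : t * (γ * ‖g‖) ≤ t * (1 + ε) := by nlinarith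
    exact le_of_mul_le_mul_left h5 ht
  have hng : (0:ℝ) < (n:ℝ) := by
    have : (1:ℝ) ≤ (n:ℝ) := by exact_mod_cast hn
    linarith
  rw [le_div_iff₀ hng]
  have hγn : γ * (n:ℝ) ≤ γ * ‖g‖ := mul_le_mul_of_nonneg_left hgn hγ.le
  linarith
end

section
/- Let a < b, let m, n be nonnegative integers, and let R_{m,n} be the set of functions on [a,b] of the form x ↦ p(x)/q(x) where p is a real polynomial of degree at most m and q is a real polynomial of degree at most n with q(x) > 0 for all x ∈ [a,b]. Then every f ∈ C[a,b] possesses a best uniform approximant from R_{m,n}: there exist such polynomials p, q with sup_{x∈[a,b]} |f(x) − p(x)/q(x)| ≤ sup_{x∈[a,b]} |f(x) − p'(x)/q'(x)| for every pair of real polynomials p', q' with deg p' ≤ m, deg q' ≤ n and q'(x) > 0 on [a,b]. -/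
open Polynomial Set Filter Topology

lemma dense_le {a b : ℝ} (hab : a < b) (q : Polynomial ℝ) (hq : q ≠ 0)
    {g h : ↥(Set.Icc a b) → ℝ} (hg : Continuous g) (hh : Continuous h)
    (H : ∀ x : ↥(Set.Icc a b), q.eval ↑x ≠ 0 → g x ≤ h x) :
    ∀ x, g x ≤ h x := by
  by_contra hc
  push_neg at hc
  obtain ⟨x0, hx0⟩ := hc
  have hU : IsOpen {x : ↥(Set.Icc a b) | h x < g x} := isOpen_lt hh hg
  rw [isOpen_induced_iff] at hU
  obtain ⟨V, hV, hVeq⟩ := hU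
  have hx0V : (x0 : ℝ) ∈ V := by
    have : x0 ∈ Subtype.val ⁻¹' V := by rw [hVeq]; exact hx0
    exact this
  obtain ⟨ε, hε, hball⟩ := Metric.isOpen_iff.1 hV _ hx0V
  set l := max a ((x0 : ℝ) - ε) with hl
  set u := min b ((x0 : ℝ) + ε) with hu
  have hx0a : a ≤ (x0 : ℝ) := x0.2.1
  have hx0b : (x0 : ℝ) ≤ b := x0.2.2
  have hlu : l < u := by
    apply max_lt <;> apply lt_min
    · exact hab
    · linarith
    · linarith
    · linarith
  have hinf : (Set.Ioo l u).Infinite := Set.Ioo_infinite hlu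
  obtain ⟨y, hy⟩ := (hinf.diff (q.finite_setOf_isRoot hq)).nonempty
  obtain ⟨⟨hyl, hyu⟩, hyr⟩ := hy
  have hyIcc : y ∈ Set.Icc a b := ⟨(le_max_left _ _).trans hyl.le, hyu.le.trans (min_le_left _ _)⟩
  have hyV : y ∈ V := by
    apply hball
    rw [Metric.mem_ball, Real.dist_eq, abs_sub_lt_iff]
    constructor
    · have := hyu.trans_le (min_le_right _ _); linarith
    · have := (le_max_right a _).trans_lt hyl; linarith
  have h1 : h ⟨y, hyIcc⟩ < g ⟨y, hyIcc⟩ := by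
    have h1' : (⟨y, hyIcc⟩ : ↥(Set.Icc a b)) ∈ Subtype.val ⁻¹' V := hyV
    rw [hVeq] at h1'
    exact h1'
  have h2 : g ⟨y, hyIcc⟩ ≤ h ⟨y, hyIcc⟩ := H _ (by simpa using hyr)
  linarith

lemma cancel {a b : ℝ} (hab : a < b) (C : ℝ) :
    ∀ N : ℕ, ∀ q p : Polynomial ℝ, q.natDegree ≤ N → q ≠ 0 →
      (∀ x ∈ Set.Icc a b, |p.eval x| ≤ C * |q.eval x|) →
      ∃ P Q : Polynomial ℝ, P.natDegree ≤ p.natDegree ∧ Q.natDegree ≤ q.natDegree ∧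
        (∀ x ∈ Set.Icc a b, Q.eval x ≠ 0) ∧ p * Q = P * q := by
  intro N
  induction N with
  | zero =>
    intro q p hdeg hq _
    refine ⟨p, q, le_rfl, le_rfl, fun x _ hx => ?_, by ring⟩
    apply hq
    have hc : q = Polynomial.C (q.coeff 0) := q.eq_C_of_natDegree_eq_zero (Nat.le_zero.1 hdeg)
    rw [hc] at hx
    simp only [eval_C] at hx
    rw [hc, hx]; simp
  | succ N ih =>
    intro q p hdeg hq hpq
    by_cases hroot : ∃ r ∈ Set.Icc a b, q.eval r = 0
    · obtain ⟨r, hr, hqr⟩ := hroot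
      have hpr : p.eval r = 0 := by
        have h := hpq r hr
        rw [hqr] at h
        simp only [abs_zero, mul_zero] at h
        have := abs_nonneg (p.eval r)
        have : |p.eval r| = 0 := le_antisymm h this
        exact abs_eq_zero.1 this
      obtain ⟨q1, hq1⟩ := (dvd_iff_isRoot.2 hqr)
      obtain ⟨p1, hp1⟩ := (dvd_iff_isRoot.2 hpr)
      have hq1ne : q1 ≠ 0 := by rintro rfl; rw [mul_zero] at hq1; exact hq hq1
      have hXr : (X - Polynomial.C r : Polynomial ℝ) ≠ 0 := X_sub_C_ne_zero r
      have hdq : q.natDegree = q1.natDegree + 1 := by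
        rw [hq1, natDegree_mul hXr hq1ne, natDegree_X_sub_C]; ring
      have key : ∀ x : ↥(Set.Icc a b), |p1.eval ↑x| ≤ C * |q1.eval ↑x| := by
        apply dense_le hab (X - Polynomial.C r) hXr
        · exact (continuous_abs.comp (p1.continuous.comp continuous_subtype_val))
        · exact (continuous_const.mul (continuous_abs.comp (q1.continuous.comp continuous_subtype_val)))
        · intro x hx
          simp only [eval_sub, eval_X, eval_C, sub_ne_zero] at hx
          have h := hpq x x.2
          rw [hp1, hq1] at h
          simp only [eval_mul, eval_sub, eval_X, eval_C, abs_mul] at h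
          have habs : 0 < |(x : ℝ) - r| := abs_pos.2 (sub_ne_zero.2 hx)
          rw [mul_left_comm] at h
          exact le_of_mul_le_mul_left h habs
      obtain ⟨P, Q, hP, hQ, hQne, hrel⟩ := ih q1 p1 (by omega) hq1ne (fun x hx => key ⟨x, hx⟩)
      refine ⟨P, Q, ?_, ?_, hQne, ?_⟩
      · rcases eq_or_ne p1 0 with h0 | h0
        · rw [h0] at hP; simpa using hP.trans (Nat.zero_le _)
        · rw [hp1, natDegree_mul hXr h0, natDegree_X_sub_C]
          omega
      · rw [hdq]; omega
      · rw [hp1, hq1]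
        linear_combination (X - Polynomial.C r) * hrel
    · push_neg at hroot
      exact ⟨p, q, le_rfl, le_rfl, hroot, by ring⟩

lemma pos_on {a b : ℝ} (Q : Polynomial ℝ)
    (hQne : ∀ x ∈ Set.Icc a b, Q.eval x ≠ 0) (ha0 : 0 < Q.eval a) :
    ∀ x ∈ Set.Icc a b, 0 < Q.eval x := by
  intro x hx
  rcases (hQne x hx).lt_or_gt with hneg | hpos
  · exfalso
    have hax : a ≤ x := hx.1
    have hsub : Set.Icc a x ⊆ Set.Icc a b := Set.Icc_subset_Icc le_rfl hx.2
    have hiv := intermediate_value_Icc' hax (Q.continuous.continuousOn)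
    obtain ⟨z, hz, hz0⟩ := hiv ⟨hneg.le, ha0.le⟩
    exact hQne z (hsub hz) hz0
  · exact hpos

lemma normsmulC {α : Type*} [TopologicalSpace α] [CompactSpace α] (r : ℝ) (g : C(α, ℝ)) :
    ‖r • g‖ = |r| * ‖g‖ := norm_smul r g

set_option maxHeartbeats 1000000 in
/-- (Existence of best rational approximation.)  Every
`f ∈ C[a,b]` possesses a best uniform approximant from
`R_{m,n} = { p/q : deg p ≤ m, deg q ≤ n, q > 0 on [a,b] }`. -/
theorem stmt_14 (a b : ℝ) (hab : a < b) (m n : ℕ) (f : C(↥(Set.Icc a b), ℝ)) :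
    ∃ p q : Polynomial ℝ, p.natDegree ≤ m ∧ q.natDegree ≤ n ∧
      (∀ x ∈ Set.Icc a b, 0 < q.eval x) ∧
      ∀ p' q' : Polynomial ℝ, p'.natDegree ≤ m → q'.natDegree ≤ n →
        (∀ x ∈ Set.Icc a b, 0 < q'.eval x) →
        (⨆ x : Set.Icc a b, |f x - p.eval ↑x / q.eval ↑x|) ≤
          ⨆ x : Set.Icc a b, |f x - p'.eval ↑x / q'.eval ↑x| := by
  have haIcc : a ∈ Set.Icc a b := Set.left_mem_Icc.2 hab.le
  haveI : Nonempty ↥(Set.Icc a b) := ⟨⟨a, haIcc⟩⟩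
  -- bddAbove of the error function
  have hbdd : ∀ p q : Polynomial ℝ, (∀ x ∈ Set.Icc a b, 0 < q.eval x) →
      BddAbove (Set.range fun x : ↥(Set.Icc a b) => |f x - p.eval ↑x / q.eval ↑x|) := by
    intro p q hqpos
    have hc : Continuous fun x : ↥(Set.Icc a b) => |f x - p.eval ↑x / q.eval ↑x| := by
      apply Continuous.abs
      exact f.continuous.sub ((p.continuous.comp continuous_subtype_val).div
        (q.continuous.comp continuous_subtype_val) (fun x => (hqpos x x.2).ne'))
    exact (isCompact_range hc).bddAbove
  set S : Set ℝ := {e | ∃ p q : Polynomial ℝ, p.natDegree ≤ m ∧ q.natDegree ≤ n ∧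
      (∀ x ∈ Set.Icc a b, 0 < q.eval x) ∧
      e = ⨆ x : Set.Icc a b, |f x - p.eval ↑x / q.eval ↑x|} with hS
  have hSne : S.Nonempty := ⟨_, 0, 1, by simp, by simp, by simp, rfl⟩
  have hSnonneg : ∀ e ∈ S, (0:ℝ) ≤ e := by
    rintro e ⟨p, q, _, _, _, rfl⟩
    exact Real.iSup_nonneg fun x => abs_nonneg _
  have hSbdd : BddBelow S := ⟨0, fun e he => hSnonneg e he⟩
  set ρ := sInf S with hρ
  have hρ0 : (0:ℝ) ≤ ρ := le_csInf hSne hSnonneg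
  -- minimizing sequence
  have hseq : ∀ k : ℕ, ∃ p q : Polynomial ℝ, p.natDegree ≤ m ∧ q.natDegree ≤ n ∧
      (∀ x ∈ Set.Icc a b, 0 < q.eval x) ∧
      (⨆ x : Set.Icc a b, |f x - p.eval ↑x / q.eval ↑x|) < ρ + 1/(k+1) := by
    intro k
    have hlt : sInf S < ρ + 1/(k+1) := by
      have : (0:ℝ) < 1/(k+1) := by positivity
      rw [← hρ]; linarith
    obtain ⟨e, he, helt⟩ := (csInf_lt_iff hSbdd hSne).1 hlt
    obtain ⟨p, q, h1, h2, h3, rfl⟩ := he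
    exact ⟨p, q, h1, h2, h3, helt⟩
  choose p0 q0 hpm hqn hqpos herr using hseq
  set L := (Polynomial.toContinuousMapOnAlgHom (Set.Icc a b)).toLinearMap with hL
  have hLapp : ∀ (p : Polynomial ℝ) (x : ↥(Set.Icc a b)), (L p) x = p.eval ↑x := fun p x => rfl
  set c : ℕ → ℝ := fun k => ‖L (q0 k)‖ with hc
  have hcpos : ∀ k, 0 < c k := by
    intro k
    rw [hc]
    apply norm_pos_iff.2
    intro h0
    have h1 : (L (q0 k)) ⟨a, haIcc⟩ = 0 := by rw [h0]; rfl
    rw [hLapp] at h1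
    exact (hqpos k a haIcc).ne' h1
  set p1 : ℕ → Polynomial ℝ := fun k => (c k)⁻¹ • p0 k with hp1def
  set q1 : ℕ → Polynomial ℝ := fun k => (c k)⁻¹ • q0 k with hq1def
  have hq1pos : ∀ k, ∀ x ∈ Set.Icc a b, 0 < (q1 k).eval x := by
    intro k x hx
    rw [hq1def]
    simp only [eval_smul, smul_eq_mul]
    exact mul_pos (inv_pos.2 (hcpos k)) (hqpos k x hx)
  have hLsmul : ∀ k, L (q1 k) = (c k)⁻¹ • L (q0 k) := fun k => map_smul L _ _
  have hq1norm : ∀ k, ‖L (q1 k)‖ = 1 := by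
    intro k
    calc ‖L (q1 k)‖ = ‖(c k)⁻¹ • L (q0 k)‖ := by rw [hLsmul k]
      _ = |(c k)⁻¹| * ‖L (q0 k)‖ := normsmulC _ _
      _ = 1 := by
          rw [abs_of_pos (inv_pos.2 (hcpos k))]
          exact inv_mul_cancel₀ (hcpos k).ne'
  have hq1le1 : ∀ k, ∀ x : ↥(Set.Icc a b), (q1 k).eval ↑x ≤ 1 := by
    intro k x
    have := (L (q1 k)).norm_coe_le_norm x
    rw [hq1norm k, Real.norm_eq_abs, hLapp] at this
    exact (le_abs_self _).trans this
  -- key pointwise inequality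
  have hkey : ∀ k, ∀ x : ↥(Set.Icc a b),
      |f x * (q1 k).eval ↑x - (p1 k).eval ↑x| ≤ (ρ + 1/(k+1)) * (q1 k).eval ↑x := by
    intro k x
    have h1 : |f x - (p0 k).eval ↑x / (q0 k).eval ↑x| ≤ ρ + 1/(k+1) :=
      (le_ciSup (hbdd (p0 k) (q0 k) (hqpos k)) x).trans (herr k).le
    have hval : (p1 k).eval ↑x / (q1 k).eval ↑x = (p0 k).eval ↑x / (q0 k).eval ↑x := by
      rw [hp1def, hq1def]
      simp only [eval_smul, smul_eq_mul]
      rw [mul_div_mul_left _ _ (inv_pos.2 (hcpos k)).ne']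
    have hq1x : 0 < (q1 k).eval ↑x := hq1pos k ↑x x.2
    have heq : f x * (q1 k).eval ↑x - (p1 k).eval ↑x
        = (f x - (p1 k).eval ↑x / (q1 k).eval ↑x) * (q1 k).eval ↑x := by
      rw [sub_mul, div_mul_cancel₀ _ hq1x.ne']
    rw [heq, abs_mul, abs_of_pos hq1x, hval]
    exact mul_le_mul_of_nonneg_right h1 hq1x.le
  -- norm bound on p1
  have hp1norm : ∀ k, ‖L (p1 k)‖ ≤ ‖f‖ + (ρ + 1) := by
    intro k
    rw [ContinuousMap.norm_le _ (by positivity)]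
    intro x
    have hq1x : 0 < (q1 k).eval ↑x := hq1pos k ↑x x.2
    have h1 := hkey k x
    have hfx : |f x| ≤ ‖f‖ := by
      have := f.norm_coe_le_norm x; rwa [Real.norm_eq_abs] at this
    have hek : ρ + 1/((k:ℝ)+1) ≤ ρ + 1 := by
      have : 1/((k:ℝ)+1) ≤ 1 := by
        rw [div_le_one (by positivity)]; linarith [Nat.cast_nonneg (α := ℝ) k]
      linarith
    have h2 : |(p1 k).eval ↑x| ≤ |f x * (q1 k).eval ↑x - (p1 k).eval ↑x| + |f x| * (q1 k).eval ↑x := by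
      have habs : |f x * (q1 k).eval ↑x| = |f x| * (q1 k).eval ↑x := by
        rw [abs_mul, abs_of_pos hq1x]
      calc |(p1 k).eval ↑x|
          = |(f x * (q1 k).eval ↑x - (p1 k).eval ↑x) - f x * (q1 k).eval ↑x| := by
            rw [show (f x * (q1 k).eval ↑x - (p1 k).eval ↑x) - f x * (q1 k).eval ↑x
              = -((p1 k).eval ↑x) by ring, abs_neg]
        _ ≤ |f x * (q1 k).eval ↑x - (p1 k).eval ↑x| + |f x * (q1 k).eval ↑x| := abs_sub _ _
        _ = |f x * (q1 k).eval ↑x - (p1 k).eval ↑x| + |f x| * (q1 k).eval ↑x := by rw [habs]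
    have hle1 := hq1le1 k x
    rw [hLapp, Real.norm_eq_abs]
    calc |(p1 k).eval ↑x| ≤ (ρ + 1/(k+1)) * (q1 k).eval ↑x + |f x| * (q1 k).eval ↑x := by linarith
      _ ≤ (ρ + 1) * 1 + ‖f‖ * 1 := by
          apply add_le_add
          · exact mul_le_mul hek hle1 hq1x.le (by positivity)
          · exact mul_le_mul hfx hle1 hq1x.le (norm_nonneg f)
      _ = ‖f‖ + (ρ + 1) := by ring
  -- finite dimensional submodules
  haveI hfd1 : Module.Finite ℝ (Polynomial.degreeLT ℝ (m+1)) :=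
    Module.Finite.equiv (Polynomial.degreeLTEquiv ℝ (m+1)).symm
  haveI hfd2 : Module.Finite ℝ (Polynomial.degreeLT ℝ (n+1)) :=
    Module.Finite.equiv (Polynomial.degreeLTEquiv ℝ (n+1)).symm
  set W1 := Submodule.map L (Polynomial.degreeLT ℝ (m+1)) with hW1
  set W2 := Submodule.map L (Polynomial.degreeLT ℝ (n+1)) with hW2
  haveI : Module.Finite ℝ W1 := Module.Finite.map _ L
  haveI : Module.Finite ℝ W2 := Module.Finite.map _ L
  have hmemdeg : ∀ (p : Polynomial ℝ) (N : ℕ), p.natDegree ≤ N → p ∈ Polynomial.degreeLT ℝ (N+1) := by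
    intro p N hpN
    rw [Polynomial.mem_degreeLT]
    calc p.degree ≤ (p.natDegree : WithBot ℕ) := Polynomial.degree_le_natDegree
      _ < ((N+1 : ℕ) : WithBot ℕ) := by exact_mod_cast Nat.lt_succ_of_le hpN
  have hmem1 : ∀ k, L (p1 k) ∈ W1 := by
    intro k
    exact ⟨p1 k, hmemdeg _ _ ((Polynomial.natDegree_smul_le _ _).trans (hpm k)), rfl⟩
  have hmem2 : ∀ k, L (q1 k) ∈ W2 := by
    intro k
    exact ⟨q1 k, hmemdeg _ _ ((Polynomial.natDegree_smul_le _ _).trans (hqn k)), rfl⟩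
  set v : ℕ → ↥W1 × ↥W2 := fun k => (⟨L (p1 k), hmem1 k⟩, ⟨L (q1 k), hmem2 k⟩) with hv
  have hKc : IsCompact ((Metric.closedBall (0:↥W1) (‖f‖ + (ρ+1))) ×ˢ (Metric.closedBall (0:↥W2) 1)) :=
    (isCompact_closedBall _ _).prod (isCompact_closedBall _ _)
  have hvmem : ∀ k, v k ∈ (Metric.closedBall (0:↥W1) (‖f‖ + (ρ+1))) ×ˢ (Metric.closedBall (0:↥W2) 1) := by
    intro k
    constructor
    · rw [mem_closedBall_zero_iff]
      exact hp1norm k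
    · rw [mem_closedBall_zero_iff]
      exact (hq1norm k).le
  obtain ⟨w, hwK, φ, hφ, hconv⟩ := hKc.tendsto_subseq hvmem
  obtain ⟨ps, hpsmem, hpse⟩ := w.1.2
  obtain ⟨qs, hqsmem, hqse⟩ := w.2.2
  have hpsm : ps.natDegree ≤ m := by
    rcases eq_or_ne ps 0 with h0 | h0
    · rw [h0]; simp
    · have := Polynomial.mem_degreeLT.1 hpsmem
      have := (Polynomial.natDegree_lt_iff_degree_lt h0).2 this
      omega
  have hqsn : qs.natDegree ≤ n := by
    rcases eq_or_ne qs 0 with h0 | h0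
    · rw [h0]; simp
    · have := Polynomial.mem_degreeLT.1 hqsmem
      have := (Polynomial.natDegree_lt_iff_degree_lt h0).2 this
      omega
  -- pointwise convergence
  have hpconv : ∀ x : ↥(Set.Icc a b),
      Tendsto (fun k => (p1 (φ k)).eval ↑x) atTop (𝓝 (ps.eval ↑x)) := by
    intro x
    have hcont : Continuous (fun w : ↥W1 × ↥W2 => ((w.1 : C(↥(Set.Icc a b), ℝ))) x) :=
      (continuous_eval_const x).comp (continuous_subtype_val.comp continuous_fst)
    have := (hcont.tendsto w).comp hconv
    simp only [Function.comp_def] at this ⊢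
    convert this using 2
    · rfl
    rw [← hpse, hLapp]
  have hqconv : ∀ x : ↥(Set.Icc a b),
      Tendsto (fun k => (q1 (φ k)).eval ↑x) atTop (𝓝 (qs.eval ↑x)) := by
    intro x
    have hcont : Continuous (fun w : ↥W1 × ↥W2 => ((w.2 : C(↥(Set.Icc a b), ℝ))) x) :=
      (continuous_eval_const x).comp (continuous_subtype_val.comp continuous_snd)
    have := (hcont.tendsto w).comp hconv
    simp only [Function.comp_def] at this ⊢
    convert this using 2
    · rfl
    rw [← hqse, hLapp]
  have heconv : Tendsto (fun k => ρ + 1/((φ k : ℝ)+1)) atTop (𝓝 ρ) := by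
    have h1 : Tendsto (fun k : ℕ => 1/((k:ℝ)+1)) atTop (𝓝 0) :=
      tendsto_one_div_add_atTop_nhds_zero_nat
    have h2 := h1.comp hφ.tendsto_atTop
    have := tendsto_const_nhds (x := ρ) (f := atTop (α := ℕ)) |>.add h2
    simpa using this
  -- the limit inequality
  have hstar : ∀ x : ↥(Set.Icc a b), |f x * qs.eval ↑x - ps.eval ↑x| ≤ ρ * qs.eval ↑x := by
    intro x
    have hlhs : Tendsto (fun k => |f x * (q1 (φ k)).eval ↑x - (p1 (φ k)).eval ↑x|) atTop
        (𝓝 (|f x * qs.eval ↑x - ps.eval ↑x|)) :=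
      (((hqconv x).const_mul (f x)).sub (hpconv x)).abs
    have hrhs : Tendsto (fun k => (ρ + 1/((φ k : ℝ)+1)) * (q1 (φ k)).eval ↑x) atTop
        (𝓝 (ρ * qs.eval ↑x)) := heconv.mul (hqconv x)
    exact le_of_tendsto_of_tendsto' hlhs hrhs (fun k => hkey (φ k) x)
  have hqs_nonneg : ∀ x : ↥(Set.Icc a b), 0 ≤ qs.eval ↑x := fun x =>
    le_of_tendsto_of_tendsto' tendsto_const_nhds (hqconv x) (fun k => (hq1pos (φ k) ↑x x.2).le)
  have hqsne : qs ≠ 0 := by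
    intro h0
    have h1 : Tendsto (fun k => ‖(v (φ k)).2‖) atTop (𝓝 ‖w.2‖) :=
      ((continuous_norm.comp continuous_snd).tendsto w).comp hconv
    have h2 : ∀ k, ‖(v (φ k)).2‖ = 1 := by
      intro k; rw [Submodule.coe_norm]; exact hq1norm (φ k)
    have h3 : ‖w.2‖ = 1 := by
      have h4 : Tendsto (fun _ : ℕ => (1:ℝ)) atTop (𝓝 ‖w.2‖) := by
        simpa [Function.comp, h2] using h1
      exact tendsto_nhds_unique h4 tendsto_const_nhds
    rw [Submodule.coe_norm, ← hqse, h0, map_zero, norm_zero] at h3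
    exact one_ne_zero h3.symm
  -- the |ps| ≤ C |qs| bound
  have hCbound : ∀ x ∈ Set.Icc a b, |ps.eval x| ≤ (‖f‖ + ρ) * |qs.eval x| := by
    intro x hx
    have h1 : |f ⟨x, hx⟩ * qs.eval x - ps.eval x| ≤ ρ * qs.eval x := hstar ⟨x, hx⟩
    have hfx : |f ⟨x, hx⟩| ≤ ‖f‖ := by
      have := f.norm_coe_le_norm ⟨x, hx⟩; rwa [Real.norm_eq_abs] at this
    have hq : 0 ≤ qs.eval x := hqs_nonneg ⟨x, hx⟩
    have habs : |f ⟨x, hx⟩ * qs.eval x| = |f ⟨x, hx⟩| * qs.eval x := by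
      rw [abs_mul, abs_of_nonneg hq]
    have h2 : |ps.eval x| ≤ |f ⟨x, hx⟩ * qs.eval x - ps.eval x| + |f ⟨x, hx⟩| * qs.eval x := by
      calc |ps.eval x|
          = |(f ⟨x, hx⟩ * qs.eval x - ps.eval x) - f ⟨x, hx⟩ * qs.eval x| := by
            rw [show (f ⟨x, hx⟩ * qs.eval x - ps.eval x) - f ⟨x, hx⟩ * qs.eval x
              = -(ps.eval x) by ring, abs_neg]
        _ ≤ |f ⟨x, hx⟩ * qs.eval x - ps.eval x| + |f ⟨x, hx⟩ * qs.eval x| := abs_sub _ _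
        _ = |f ⟨x, hx⟩ * qs.eval x - ps.eval x| + |f ⟨x, hx⟩| * qs.eval x := by rw [habs]
    rw [abs_of_nonneg hq]
    have h3 : |f ⟨x, hx⟩| * qs.eval x ≤ ‖f‖ * qs.eval x := mul_le_mul_of_nonneg_right hfx hq
    calc |ps.eval x| ≤ |f ⟨x, hx⟩ * qs.eval x - ps.eval x| + |f ⟨x, hx⟩| * qs.eval x := h2
      _ ≤ ρ * qs.eval x + ‖f‖ * qs.eval x := add_le_add h1 h3
      _ = (‖f‖ + ρ) * qs.eval x := by ring
  obtain ⟨P0, Q0, hP0d, hQ0d, hQ0ne, hrel0⟩ :=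
    cancel hab (‖f‖ + ρ) qs.natDegree qs ps le_rfl hqsne hCbound
  -- fix the sign
  have hfinal : ∃ P Q : Polynomial ℝ, P.natDegree ≤ m ∧ Q.natDegree ≤ n ∧
      (∀ x ∈ Set.Icc a b, 0 < Q.eval x) ∧ ps * Q = P * qs := by
    rcases (hQ0ne a haIcc).lt_or_gt with hneg | hpos
    · refine ⟨-P0, -Q0, ?_, ?_, ?_, ?_⟩
      · rw [Polynomial.natDegree_neg]; exact hP0d.trans hpsm
      · rw [Polynomial.natDegree_neg]; exact hQ0d.trans hqsn
      · have := pos_on (-Q0) (fun x hx => by simp only [eval_neg, ne_eq, neg_eq_zero]; exact hQ0ne x hx)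
          (by simp only [eval_neg]; linarith)
        intro x hx; exact this x hx
      · linear_combination -hrel0
    · exact ⟨P0, Q0, hP0d.trans hpsm, hQ0d.trans hqsn, pos_on Q0 hQ0ne hpos, hrel0⟩
  obtain ⟨P, Q, hPm, hQn, hQpos, hrel⟩ := hfinal
  refine ⟨P, Q, hPm, hQn, hQpos, ?_⟩
  intro p' q' hp' hq' hq'pos
  have hmemS : (⨆ x : Set.Icc a b, |f x - p'.eval ↑x / q'.eval ↑x|) ∈ S :=
    ⟨p', q', hp', hq', hq'pos, rfl⟩
  refine le_trans ?_ (csInf_le hSbdd hmemS)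
  apply ciSup_le
  have hptwise : ∀ x : ↥(Set.Icc a b), |f x - P.eval ↑x / Q.eval ↑x| ≤ ρ := by
    apply dense_le hab qs hqsne
    · apply Continuous.abs
      exact f.continuous.sub ((P.continuous.comp continuous_subtype_val).div
        (Q.continuous.comp continuous_subtype_val) (fun x => (hQpos ↑x x.2).ne'))
    · exact continuous_const
    · intro x hx
      have hqx : 0 < qs.eval ↑x := (hqs_nonneg x).lt_of_ne (Ne.symm hx)
      have hQx : Q.eval ↑x ≠ 0 := (hQpos ↑x x.2).ne'
      have hPQ : P.eval ↑x / Q.eval ↑x = ps.eval ↑x / qs.eval ↑x := by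
        rw [div_eq_div_iff hQx hx]
        have := congrArg (Polynomial.eval (↑x : ℝ)) hrel
        simp only [eval_mul] at this
        linarith
      rw [hPQ]
      have heq : f x - ps.eval ↑x / qs.eval ↑x = (f x * qs.eval ↑x - ps.eval ↑x) / qs.eval ↑x := by
        rw [sub_div, mul_div_cancel_right₀ _ hx]
      rw [heq, abs_div, abs_of_pos hqx, div_le_iff₀ hqx]
      exact hstar x
  exact hptwise
end

section
/- Let a < b and let m, n be nonnegative integers. Every f ∈ C[a,b] has a unique best uniform approximant from R_{m,n}: if p₁/q₁ and p₂/q₂, with p_i real polynomials of degree at most m and q_i real polynomials of degree at most n satisfying q_i(x) > 0 on [a,b], both minimize sup_{x∈[a,b]} |f(x) − p(x)/q(x)| over all such pairs (p,q), then p₁(x)/q₁(x) = p₂(x)/q₂(x) for all x ∈ [a,b]. -/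
open Polynomial

/-- On a nonempty compact space, a continuous real function attains its max. -/
lemma stmt15_exists_max {α : Type*} [TopologicalSpace α] [CompactSpace α] [Nonempty α]
    {φ : α → ℝ} (hφ : Continuous φ) : ∃ x₀, ∀ x, φ x ≤ φ x₀ := by
  obtain ⟨x₀, -, h⟩ := isCompact_univ.exists_isMaxOn Set.univ_nonempty hφ.continuousOn
  exact ⟨x₀, fun x => isMaxOn_iff.mp h x (Set.mem_univ x)⟩

lemma stmt15_bdd {α : Type*} [TopologicalSpace α] [CompactSpace α] [Nonempty α]
    {φ : α → ℝ} (hφ : Continuous φ) : BddAbove (Set.range φ) := by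
  obtain ⟨x₀, h⟩ := stmt15_exists_max hφ
  exact ⟨φ x₀, by rintro y ⟨x, rfl⟩; exact h x⟩

lemma stmt15_combine_le {t A₁ A₂ E : ℝ} (ht0 : 0 < t) (ht1 : t < 1)
    (h1 : |A₁| ≤ E) (h2 : |A₂| ≤ E) : |t * A₁ + (1 - t) * A₂| ≤ E := by
  have k1 := le_abs_self A₁; have k2 := neg_abs_le A₁
  have k3 := le_abs_self A₂; have k4 := neg_abs_le A₂
  rcases abs_cases (t * A₁ + (1 - t) * A₂) with ⟨hS, -⟩ | ⟨hS, -⟩ <;> rw [hS] <;> nlinarith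

lemma stmt15_combine_eq {t A₁ A₂ E : ℝ} (ht0 : 0 < t) (ht1 : t < 1)
    (h1 : |A₁| ≤ E) (h2 : |A₂| ≤ E) (heq : |t * A₁ + (1 - t) * A₂| = E) : A₁ = A₂ := by
  have k1 := le_abs_self A₁; have k2 := neg_abs_le A₁
  have k3 := le_abs_self A₂; have k4 := neg_abs_le A₂
  rcases abs_cases (t * A₁ + (1 - t) * A₂) with ⟨hS, -⟩ | ⟨hS, -⟩ <;> rw [hS] at heq
  · have e1 : E ≤ A₁ := by nlinarith
    have e2 : E ≤ A₂ := by nlinarith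
    linarith
  · have e1 : A₁ ≤ -E := by nlinarith
    have e2 : A₂ ≤ -E := by nlinarith
    linarith

lemma stmt15_abs_sub_same_sign {A B : ℝ} (h : 0 < A * B) (hle : |B| ≤ |A|) :
    |A - B| = |A| - |B| := by
  rcases lt_trichotomy A 0 with hA | hA | hA
  · have hB : B < 0 := by nlinarith
    rw [abs_of_neg hA, abs_of_neg hB] at *
    rw [abs_of_nonpos (by linarith)]
    ring
  · simp [hA] at h
  · have hB : 0 < B := by nlinarith
    rw [abs_of_pos hA, abs_of_pos hB] at *
    rw [abs_of_nonneg (by linarith)]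

/-- One-sided version: if `deg h ≤ m + deg Q`, write `h = u Q - v P`. -/
lemma stmt15_oneside (P Q h : ℝ[X]) (hP : P ≠ 0) (hQ : Q ≠ 0) (hcop : IsCoprime P Q)
    (m n : ℕ) (hPm : P.natDegree ≤ m) (hQn : Q.natDegree ≤ n)
    (hh : h.natDegree ≤ m + Q.natDegree) :
    ∃ u v : ℝ[X], u.natDegree ≤ m ∧ v.natDegree ≤ n ∧ u * Q - v * P = h := by
  obtain ⟨α, β, hab⟩ := hcop
  have hQm : (Q * C Q.leadingCoeff⁻¹).Monic := monic_mul_leadingCoeff_inv hQ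
  set ρ := (h * α) %ₘ (Q * C Q.leadingCoeff⁻¹) with hρdef
  set c := (h * α) /ₘ (Q * C Q.leadingCoeff⁻¹) with hcdef
  have hdiv : ρ + (Q * C Q.leadingCoeff⁻¹) * c = h * α := modByMonic_add_div _ _
  -- ρ is small
  have hρQ : ρ = 0 ∨ ρ.natDegree < Q.natDegree := by
    have hd : ρ.degree < (Q * C Q.leadingCoeff⁻¹).degree := degree_modByMonic_lt _ hQm
    have hdQ : (Q * C Q.leadingCoeff⁻¹).degree = Q.degree := by
      rw [degree_mul, degree_C (by simp [leadingCoeff_ne_zero.mpr hQ])]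
      exact add_zero _
    rw [hdQ] at hd
    by_cases h0 : ρ = 0
    · exact Or.inl h0
    · exact Or.inr (natDegree_lt_natDegree h0 hd)
  refine ⟨C Q.leadingCoeff⁻¹ * c * P + h * β, -ρ, ?_, ?_, ?_⟩
  · -- natDegree u ≤ m
    set u : ℝ[X] := C Q.leadingCoeff⁻¹ * c * P + h * β with hudef
    have huQ : u * Q = h - ρ * P := by
      linear_combination P * hdiv + h * hab
    by_cases hu0 : u = 0
    · simp [hu0]
    · have h1 : u.natDegree + Q.natDegree = (h - ρ * P).natDegree := by
        rw [← natDegree_mul hu0 hQ, huQ]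
      have h2 : (h - ρ * P).natDegree ≤ m + Q.natDegree := by
        refine (natDegree_sub_le _ _).trans ?_
        have h3 : (ρ * P).natDegree ≤ m + Q.natDegree := by
          refine (natDegree_mul_le).trans ?_
          rcases hρQ with h4 | h4
          · simp [h4]; omega
          · omega
        exact sup_le hh h3
      omega
  · -- natDegree v ≤ n
    rw [natDegree_neg]
    rcases hρQ with h4 | h4
    · simp [h4]
    · omega
  · linear_combination P * hdiv + h * hab

lemma stmt15_interp (P Q h : ℝ[X]) (hP : P ≠ 0) (hQ : Q ≠ 0) (hcop : IsCoprime P Q)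
    (m n : ℕ) (hPm : P.natDegree ≤ m) (hQn : Q.natDegree ≤ n)
    (hh : h.natDegree ≤ max (m + Q.natDegree) (n + P.natDegree)) :
    ∃ u v : ℝ[X], u.natDegree ≤ m ∧ v.natDegree ≤ n ∧ u * Q - v * P = h := by
  rcases le_or_gt h.natDegree (m + Q.natDegree) with hc | hc
  · exact stmt15_oneside P Q h hP hQ hcop m n hPm hQn hc
  · have hh2 : h.natDegree ≤ n + P.natDegree := by
      rcases max_cases (m + Q.natDegree) (n + P.natDegree) with ⟨he, -⟩ | ⟨he, -⟩ <;> omega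
    obtain ⟨u', v', hu', hv', heq⟩ :=
      stmt15_oneside Q P h hQ hP hcop.symm n m hQn hPm hh2
    exact ⟨-v', -u', by simpa using hv', by simpa using hu', by linear_combination heq⟩

set_option maxHeartbeats 1600000 in
lemma stmt15_improve {a b : ℝ} (hab : a < b) (f : C(↥(Set.Icc a b), ℝ)) (P Q u v : ℝ[X])
    (hQpos : ∀ x ∈ Set.Icc a b, 0 < Q.eval x) {E : ℝ} (hE : 0 < E)
    (hle : ∀ x : Set.Icc a b, |f x - P.eval ↑x / Q.eval ↑x| ≤ E)
    (hA : ∀ x : Set.Icc a b, |f x - P.eval ↑x / Q.eval ↑x| = E →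
      0 < (f x - P.eval ↑x / Q.eval ↑x) * (u.eval ↑x * Q.eval ↑x - v.eval ↑x * P.eval ↑x)) :
    ∃ ε : ℝ, 0 < ε ∧ (∀ x ∈ Set.Icc a b, 0 < (Q + C ε * v).eval x) ∧
      ∃ E', E' < E ∧
        ∀ x : Set.Icc a b, |f x - (P + C ε * u).eval ↑x / (Q + C ε * v).eval ↑x| ≤ E' := by
  haveI : Nonempty ↥(Set.Icc a b) := ⟨⟨a, le_refl a, hab.le⟩⟩
  haveI : CompactSpace ↥(Set.Icc a b) := isCompact_iff_compactSpace.mp isCompact_Icc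
  set g : ↥(Set.Icc a b) → ℝ := fun x => f x - P.eval ↑x / Q.eval ↑x with hgdef
  set w : ↥(Set.Icc a b) → ℝ := fun x => u.eval ↑x * Q.eval ↑x - v.eval ↑x * P.eval ↑x with hwdef
  have hQne : ∀ x : Set.Icc a b, Q.eval ↑x ≠ 0 := fun x => ne_of_gt (hQpos _ x.2)
  have hgcont : Continuous g := f.continuous.sub
    ((P.continuous.comp continuous_subtype_val).div
      (Q.continuous.comp continuous_subtype_val) hQne)
  have hwcont : Continuous w :=
    (((u.continuous.comp continuous_subtype_val).mul (Q.continuous.comp continuous_subtype_val)).sub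
      ((v.continuous.comp continuous_subtype_val).mul (P.continuous.comp continuous_subtype_val)))
  -- extremal constants
  obtain ⟨xq, hxq⟩ := stmt15_exists_max (φ := fun x : Set.Icc a b => -Q.eval ↑x)
    ((Q.continuous.comp continuous_subtype_val).neg)
  set qm : ℝ := Q.eval ↑xq with hqmdef
  have hqm : 0 < qm := hQpos _ xq.2
  have hq : ∀ x : Set.Icc a b, qm ≤ Q.eval ↑x := fun x => by have := hxq x; simp at this; linarith
  obtain ⟨xQ, hxQ⟩ := stmt15_exists_max (φ := fun x : Set.Icc a b => Q.eval ↑x)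
    (Q.continuous.comp continuous_subtype_val)
  set QM : ℝ := Q.eval ↑xQ with hQMdef
  have hQMq : qm ≤ QM := hq xQ
  have hQM : ∀ x : Set.Icc a b, Q.eval ↑x ≤ QM := hxQ
  obtain ⟨xv, hxv⟩ := stmt15_exists_max (φ := fun x : Set.Icc a b => |v.eval ↑x|)
    (v.continuous.comp continuous_subtype_val).abs
  set VM : ℝ := |v.eval ↑xv| with hVMdef
  have hVM0 : 0 ≤ VM := abs_nonneg _
  have hVM : ∀ x : Set.Icc a b, |v.eval ↑x| ≤ VM := hxv
  obtain ⟨xw, hxw⟩ := stmt15_exists_max (φ := fun x : Set.Icc a b => |w x|) hwcont.abs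
  set WM : ℝ := |w xw| with hWMdef
  have hWM0 : 0 ≤ WM := abs_nonneg _
  have hWM : ∀ x : Set.Icc a b, |w x| ≤ WM := hxw
  set Δ : ℝ := WM / (qm * (qm / 2)) + 1 with hΔdef
  have hΔ0 : 0 < Δ := by positivity
  have hΔW : WM / (qm * (qm / 2)) ≤ Δ := by linarith
  -- the η step
  obtain ⟨η, hη0, hηE, hη⟩ : ∃ η : ℝ, 0 < η ∧ η ≤ E / 2 ∧
      ∀ x : Set.Icc a b, E - η ≤ |g x| → 0 < g x * w x := by
    by_cases hK : {x : Set.Icc a b | g x * w x ≤ 0}.Nonempty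
    · have hKcl : IsClosed {x : Set.Icc a b | g x * w x ≤ 0} :=
        isClosed_le (hgcont.mul hwcont) continuous_const
      obtain ⟨z, hzK, hz⟩ := hKcl.isCompact.exists_isMaxOn hK hgcont.abs.continuousOn
      have hzE : |g z| < E := by
        rcases lt_or_eq_of_le (hle z) with h | h
        · exact h
        · exact absurd (hA z h) (not_lt.2 hzK)
      refine ⟨(E - |g z|) / 2, by linarith, by have := abs_nonneg (g z); linarith, ?_⟩
      intro x hx
      by_contra hc
      have hmem : x ∈ {x : Set.Icc a b | g x * w x ≤ 0} := not_lt.1 hc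
      have := isMaxOn_iff.mp hz x hmem
      linarith
    · exact ⟨E / 2, by linarith, le_refl _,
        fun x _ => by
          by_contra hc
          exact hK ⟨x, not_lt.1 hc⟩⟩
  -- choose ε
  set εa : ℝ := qm / (2 * (VM + 1)) with hεadef
  set ε : ℝ := min (min εa 1) (min (η / (2 * Δ)) ((E - η) / Δ)) with hεdef
  have hε0 : 0 < ε := by
    have h1 : 0 < εa := by positivity
    have h2 : 0 < η / (2 * Δ) := by positivity
    have h3 : 0 < (E - η) / Δ := by
      have : 0 < E - η := by linarith
      positivity
    simp only [hεdef, lt_min_iff]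
    exact ⟨⟨h1, one_pos⟩, h2, h3⟩
  have hεa : ε ≤ εa := le_trans (min_le_left _ _) (min_le_left _ _)
  have hε1 : ε ≤ 1 := le_trans (min_le_left _ _) (min_le_right _ _)
  have hεc : ε ≤ η / (2 * Δ) := le_trans (min_le_right _ _) (min_le_left _ _)
  have hεb : ε ≤ (E - η) / Δ := le_trans (min_le_right _ _) (min_le_right _ _)
  have hεΔc : ε * Δ ≤ η / 2 := by
    have h' := (le_div_iff₀ (by positivity : (0:ℝ) < 2 * Δ)).mp hεc
    have h'' : ε * (2 * Δ) = 2 * (ε * Δ) := by ring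
    rw [h''] at h'
    clear_value ε Δ
    linarith
  have hεΔb : ε * Δ ≤ E - η := (le_div_iff₀ hΔ0).mp hεb
  -- denominator bounds
  have hQεlb : ∀ x : Set.Icc a b, qm / 2 ≤ Q.eval ↑x + ε * v.eval ↑x := by
    intro x
    have h1 : ε * |v.eval ↑x| ≤ εa * (VM + 1) := by
      apply mul_le_mul hεa (by linarith [hVM x]) (abs_nonneg _) (by positivity)
    have h2 : εa * (VM + 1) = qm / 2 := by
      rw [hεadef]; field_simp
    have h3 := neg_abs_le (v.eval ↑x)
    have h4 : -(qm / 2) ≤ ε * v.eval ↑x := by nlinarith [hε0.le]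
    linarith [hq x]
  have hQεub : ∀ x : Set.Icc a b, Q.eval ↑x + ε * v.eval ↑x ≤ QM + VM := by
    intro x
    have h1 : ε * v.eval ↑x ≤ 1 * VM := by
      calc ε * v.eval ↑x ≤ ε * |v.eval ↑x| :=
            mul_le_mul_of_nonneg_left (le_abs_self _) hε0.le
        _ ≤ 1 * VM := mul_le_mul hε1 (hVM x) (abs_nonneg _) zero_le_one
    linarith [hQM x]
  have hQεpos : ∀ x ∈ Set.Icc a b, 0 < (Q + C ε * v).eval x := by
    intro x hx
    have := hQεlb ⟨x, hx⟩
    simp only [eval_add, eval_mul, eval_C]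
    simp at this
    linarith
  refine ⟨ε, hε0, hQεpos, ?_⟩
  -- exact identity
  have hid : ∀ x : Set.Icc a b, f x - (P + C ε * u).eval ↑x / (Q + C ε * v).eval ↑x
      = g x - ε * w x / (Q.eval ↑x * (Q.eval ↑x + ε * v.eval ↑x)) := by
    intro x
    have h1 : Q.eval ↑x ≠ 0 := hQne x
    have h2 : Q.eval ↑x + ε * v.eval ↑x ≠ 0 :=
      ne_of_gt (lt_of_lt_of_le (by positivity) (hQεlb x))
    simp only [hgdef, hwdef, eval_add, eval_mul, eval_C]
    field_simp
    ring
  -- bound on the perturbation term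
  have hDlb : ∀ x : Set.Icc a b, qm * (qm / 2) ≤ Q.eval ↑x * (Q.eval ↑x + ε * v.eval ↑x) := by
    intro x
    have := hq x; have := hQεlb x
    nlinarith [hqm]
  have hDub : ∀ x : Set.Icc a b, Q.eval ↑x * (Q.eval ↑x + ε * v.eval ↑x) ≤ QM * (QM + VM) := by
    intro x
    have h1 := hq x; have h2 := hQεlb x; have h3 := hQM x; have h4 := hQεub x
    nlinarith [hqm]
  have habs : ∀ x : Set.Icc a b, |ε * w x / (Q.eval ↑x * (Q.eval ↑x + ε * v.eval ↑x))|
      = ε * |w x| / (Q.eval ↑x * (Q.eval ↑x + ε * v.eval ↑x)) := by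
    intro x
    have hD : 0 < Q.eval ↑x * (Q.eval ↑x + ε * v.eval ↑x) := lt_of_lt_of_le (by positivity) (hDlb x)
    rw [abs_div, abs_mul, abs_of_pos hε0, abs_of_pos hD]
  have hub : ∀ x : Set.Icc a b, ε * |w x| / (Q.eval ↑x * (Q.eval ↑x + ε * v.eval ↑x)) ≤ ε * Δ := by
    intro x
    have hD : 0 < qm * (qm / 2) := by positivity
    calc ε * |w x| / (Q.eval ↑x * (Q.eval ↑x + ε * v.eval ↑x))
        ≤ ε * WM / (qm * (qm / 2)) := by
          apply div_le_div₀ (by positivity) (mul_le_mul_of_nonneg_left (hWM x) hε0.le) hD (hDlb x)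
      _ = ε * (WM / (qm * (qm / 2))) := by ring
      _ ≤ ε * Δ := mul_le_mul_of_nonneg_left hΔW hε0.le
  -- final case split
  by_cases hAη : ∃ x : Set.Icc a b, E - η ≤ |g x|
  · -- nonempty extreme region: get uniform positivity constant
    have hclosed : IsClosed {x : Set.Icc a b | E - η ≤ |g x|} := isClosed_le continuous_const hgcont.abs
    obtain ⟨xc, hxcmem, hxc⟩ := hclosed.isCompact.exists_isMinOn hAη
      (hgcont.mul hwcont).continuousOn
    set cc : ℝ := g xc * w xc with hccdef
    have hc0 : 0 < cc := hη xc hxcmem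
    have hcx : ∀ x : Set.Icc a b, E - η ≤ |g x| → cc ≤ g x * w x := fun x hx => isMinOn_iff.mp hxc x hx
    set δ₀ : ℝ := ε * (cc / E) / (QM * (QM + VM)) with hδ₀def
    have hQM0 : 0 < QM := lt_of_lt_of_le hqm hQMq
    have hδ₀0 : 0 < δ₀ := by positivity
    refine ⟨max (E - η / 2) (E - δ₀), max_lt (by linarith) (by linarith), ?_⟩
    intro x
    rw [hid x]
    by_cases hx : E - η ≤ |g x|
    · -- extreme region: strict decrease
      have hgw : 0 < g x * w x := hη x hx
      set d : ℝ := ε * w x / (Q.eval ↑x * (Q.eval ↑x + ε * v.eval ↑x)) with hddef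
      have hD : 0 < Q.eval ↑x * (Q.eval ↑x + ε * v.eval ↑x) :=
        lt_of_lt_of_le (by positivity) (hDlb x)
      have hsign : 0 < g x * d := by
        rw [hddef]
        calc (0:ℝ) < ε * (g x * w x) / (Q.eval ↑x * (Q.eval ↑x + ε * v.eval ↑x)) := by positivity
          _ = g x * (ε * w x / (Q.eval ↑x * (Q.eval ↑x + ε * v.eval ↑x))) := by ring
      have hdle : |d| ≤ |g x| := by
        rw [hddef, habs x]
        calc ε * |w x| / (Q.eval ↑x * (Q.eval ↑x + ε * v.eval ↑x)) ≤ ε * Δ := hub x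
          _ ≤ E - η := hεΔb
          _ ≤ |g x| := hx
      have hdlb : δ₀ ≤ |d| := by
        rw [hddef, habs x]
        have hwlb : cc / E ≤ |w x| := by
          rw [div_le_iff₀ hE]
          calc cc ≤ g x * w x := hcx x hx
            _ ≤ |g x * w x| := le_abs_self _
            _ = |g x| * |w x| := abs_mul _ _
            _ ≤ E * |w x| := mul_le_mul_of_nonneg_right (hle x) (abs_nonneg _)
            _ = |w x| * E := by ring
        rw [hδ₀def]
        apply div_le_div₀ (by positivity) (mul_le_mul_of_nonneg_left hwlb hε0.le)
          (lt_of_lt_of_le (by positivity) (hDlb x)) (hDub x)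
      calc |g x - d| = |g x| - |d| := stmt15_abs_sub_same_sign hsign hdle
        _ ≤ E - δ₀ := by have := hle x; linarith
        _ ≤ max (E - η / 2) (E - δ₀) := le_max_right _ _
    · -- off the extreme region
      push_neg at hx
      calc |g x - ε * w x / (Q.eval ↑x * (Q.eval ↑x + ε * v.eval ↑x))|
          ≤ |g x| + |ε * w x / (Q.eval ↑x * (Q.eval ↑x + ε * v.eval ↑x))| := abs_sub _ _
        _ ≤ (E - η) + ε * Δ := by
            rw [habs x]
            exact add_le_add hx.le (hub x)
        _ ≤ E - η / 2 := by linarith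
        _ ≤ max (E - η / 2) (E - δ₀) := le_max_left _ _
  · -- sup already < E - η
    push_neg at hAη
    refine ⟨E - η / 2, by linarith, ?_⟩
    intro x
    rw [hid x]
    calc |g x - ε * w x / (Q.eval ↑x * (Q.eval ↑x + ε * v.eval ↑x))|
        ≤ |g x| + |ε * w x / (Q.eval ↑x * (Q.eval ↑x + ε * v.eval ↑x))| := abs_sub _ _
      _ ≤ (E - η) + ε * Δ := add_le_add (hAη x).le (by rw [habs x]; exact hub x)
      _ ≤ E - η / 2 := by linarith
set_option maxHeartbeats 1600000 in
/-- (Uniqueness of best rational approximation.)  If `p₁/q₁` and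
`p₂/q₂` (with `deg pᵢ ≤ m`, `deg qᵢ ≤ n`, `qᵢ > 0` on `[a,b]`) both minimize
`sup_{x∈[a,b]} |f(x) − p(x)/q(x)|` over `R_{m,n}`, then `p₁/q₁ = p₂/q₂` on
`[a,b]`. -/
theorem stmt_15 (a b : ℝ) (hab : a < b) (m n : ℕ) (f : C(↥(Set.Icc a b), ℝ))
    (p₁ q₁ p₂ q₂ : Polynomial ℝ)
    (hp₁ : p₁.natDegree ≤ m) (hq₁ : q₁.natDegree ≤ n)
    (hq₁pos : ∀ x ∈ Set.Icc a b, 0 < q₁.eval x)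
    (hp₂ : p₂.natDegree ≤ m) (hq₂ : q₂.natDegree ≤ n)
    (hq₂pos : ∀ x ∈ Set.Icc a b, 0 < q₂.eval x)
    (hmin₁ : ∀ p q : Polynomial ℝ, p.natDegree ≤ m → q.natDegree ≤ n →
      (∀ x ∈ Set.Icc a b, 0 < q.eval x) →
      (⨆ x : Set.Icc a b, |f x - p₁.eval ↑x / q₁.eval ↑x|) ≤
        ⨆ x : Set.Icc a b, |f x - p.eval ↑x / q.eval ↑x|)
    (hmin₂ : ∀ p q : Polynomial ℝ, p.natDegree ≤ m → q.natDegree ≤ n →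
      (∀ x ∈ Set.Icc a b, 0 < q.eval x) →
      (⨆ x : Set.Icc a b, |f x - p₂.eval ↑x / q₂.eval ↑x|) ≤
        ⨆ x : Set.Icc a b, |f x - p.eval ↑x / q.eval ↑x|) :
    ∀ x ∈ Set.Icc a b, p₁.eval x / q₁.eval x = p₂.eval x / q₂.eval x := by
  classical
  haveI hne : Nonempty ↥(Set.Icc a b) := ⟨⟨a, le_refl a, hab.le⟩⟩
  haveI : CompactSpace ↥(Set.Icc a b) := isCompact_iff_compactSpace.mp isCompact_Icc
  have hcontF : ∀ (P Q : ℝ[X]), (∀ x ∈ Set.Icc a b, 0 < Q.eval x) →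
      Continuous (fun x : Set.Icc a b => |f x - P.eval ↑x / Q.eval ↑x|) := fun P Q hQ =>
    (f.continuous.sub ((P.continuous.comp continuous_subtype_val).div
      (Q.continuous.comp continuous_subtype_val) (fun x => ne_of_gt (hQ _ x.2)))).abs
  set E := ⨆ x : Set.Icc a b, |f x - p₁.eval ↑x / q₁.eval ↑x| with hEdef
  have hE2 : E = ⨆ x : Set.Icc a b, |f x - p₂.eval ↑x / q₂.eval ↑x| :=
    le_antisymm (hmin₁ p₂ q₂ hp₂ hq₂ hq₂pos) (hmin₂ p₁ q₁ hp₁ hq₁ hq₁pos)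
  have hle₁ : ∀ x : Set.Icc a b, |f x - p₁.eval ↑x / q₁.eval ↑x| ≤ E :=
    fun x => le_ciSup (stmt15_bdd (hcontF p₁ q₁ hq₁pos)) x
  have hle₂ : ∀ x : Set.Icc a b, |f x - p₂.eval ↑x / q₂.eval ↑x| ≤ E := by
    intro x
    rw [hE2]
    exact le_ciSup (stmt15_bdd (hcontF p₂ q₂ hq₂pos)) x
  have hE0 : 0 ≤ E := le_trans (abs_nonneg _) (hle₁ ⟨a, le_refl a, hab.le⟩)
  rcases eq_or_lt_of_le hE0 with hE | hE
  · -- E = 0 : both are equal to f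
    intro x hx
    have h1 := hle₁ ⟨x, hx⟩
    have h2 := hle₂ ⟨x, hx⟩
    rw [← hE] at h1 h2
    have h1' := abs_eq_zero.mp (le_antisymm h1 (abs_nonneg _))
    have h2' := abs_eq_zero.mp (le_antisymm h2 (abs_nonneg _))
    simp only [Set.mem_Icc] at h1' h2'
    linarith
  -- E > 0 : main case
  set Pb := p₁ + p₂ with hPbdef
  set Qb := q₁ + q₂ with hQbdef
  have hQbpos : ∀ x ∈ Set.Icc a b, 0 < Qb.eval x := by
    intro x hx
    rw [hQbdef, Polynomial.eval_add]
    exact add_pos (hq₁pos x hx) (hq₂pos x hx)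
  have hPbdeg : Pb.natDegree ≤ m := (Polynomial.natDegree_add_le _ _).trans (max_le hp₁ hp₂)
  have hQbdeg : Qb.natDegree ≤ n := (Polynomial.natDegree_add_le _ _).trans (max_le hq₁ hq₂)
  have hid : ∀ x : Set.Icc a b, f x - Pb.eval ↑x / Qb.eval ↑x =
      (q₁.eval ↑x / Qb.eval ↑x) * (f x - p₁.eval ↑x / q₁.eval ↑x)
      + (1 - q₁.eval ↑x / Qb.eval ↑x) * (f x - p₂.eval ↑x / q₂.eval ↑x) := by
    intro x
    have h1 : q₁.eval ↑x ≠ 0 := ne_of_gt (hq₁pos _ x.2)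
    have h2 : q₂.eval ↑x ≠ 0 := ne_of_gt (hq₂pos _ x.2)
    have h3 : Qb.eval ↑x ≠ 0 := ne_of_gt (hQbpos _ x.2)
    simp only [hQbdef, hPbdef, Polynomial.eval_add] at h3 ⊢
    field_simp
    ring
  have ht0 : ∀ x : Set.Icc a b, 0 < q₁.eval ↑x / Qb.eval ↑x :=
    fun x => div_pos (hq₁pos _ x.2) (hQbpos _ x.2)
  have ht1 : ∀ x : Set.Icc a b, q₁.eval ↑x / Qb.eval ↑x < 1 := by
    intro x
    rw [div_lt_one (hQbpos _ x.2), hQbdef, Polynomial.eval_add]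
    linarith [hq₂pos _ x.2]
  have hgle : ∀ x : Set.Icc a b, |f x - Pb.eval ↑x / Qb.eval ↑x| ≤ E := by
    intro x
    rw [hid x]
    exact stmt15_combine_le (ht0 x) (ht1 x) (hle₁ x) (hle₂ x)
  have hcrit : ∀ x : Set.Icc a b, |f x - Pb.eval ↑x / Qb.eval ↑x| = E →
      (p₁ * q₂ - p₂ * q₁).eval ↑x = 0 := by
    intro x hx
    rw [hid x] at hx
    have h4 := stmt15_combine_eq (ht0 x) (ht1 x) (hle₁ x) (hle₂ x) hx
    have h1 : q₁.eval ↑x ≠ 0 := ne_of_gt (hq₁pos _ x.2)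
    have h2 : q₂.eval ↑x ≠ 0 := ne_of_gt (hq₂pos _ x.2)
    have h5 : p₁.eval ↑x / q₁.eval ↑x = p₂.eval ↑x / q₂.eval ↑x := by linarith
    rw [div_eq_div_iff h1 h2] at h5
    rw [Polynomial.eval_sub, Polynomial.eval_mul, Polynomial.eval_mul]
    linarith
  -- factor out the gcd of Pb and Qb
  have hQb0 : Qb ≠ 0 := by
    intro h0
    have := hQbpos a (Set.left_mem_Icc.mpr hab.le)
    rw [h0] at this
    simp at this
  obtain ⟨G, P', Q', D, hfP, hfQ, hsdeg, hinterp⟩ : ∃ (G P' Q' : ℝ[X]) (D : ℕ),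
      Pb = G * P' ∧ Qb = G * Q' ∧ (p₁ * Q' - q₁ * P').natDegree ≤ D ∧
      ∀ h : ℝ[X], h.natDegree ≤ D → ∃ u v : ℝ[X], u.natDegree ≤ m ∧ v.natDegree ≤ n ∧
        u * Qb - v * Pb = G * h := by
    by_cases hPb0 : Pb = 0
    · refine ⟨Qb, 0, 1, m, by simp [hPb0], (mul_one _).symm, by simpa using hp₁, ?_⟩
      intro h hh
      exact ⟨h, 0, hh, by simp, by rw [hPb0]; ring⟩
    · have hG0 : GCDMonoid.gcd Pb Qb ≠ 0 := gcd_ne_zero_of_left hPb0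
      refine ⟨GCDMonoid.gcd Pb Qb, Pb / GCDMonoid.gcd Pb Qb, Qb / GCDMonoid.gcd Pb Qb,
        max (m + (Qb / GCDMonoid.gcd Pb Qb).natDegree) (n + (Pb / GCDMonoid.gcd Pb Qb).natDegree),
        ?_, ?_, ?_, ?_⟩
      · exact (EuclideanDomain.mul_div_cancel' hG0 (gcd_dvd_left _ _)).symm
      · exact (EuclideanDomain.mul_div_cancel' hG0 (gcd_dvd_right _ _)).symm
      · refine (Polynomial.natDegree_sub_le _ _).trans (max_le ?_ ?_)
        · exact Polynomial.natDegree_mul_le.trans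
            (le_trans (Nat.add_le_add_right hp₁ _) (le_max_left _ _))
        · exact Polynomial.natDegree_mul_le.trans
            (le_trans (Nat.add_le_add_right hq₁ _) (le_max_right _ _))
      · intro h hh
        have hP'0 : Pb / GCDMonoid.gcd Pb Qb ≠ 0 := left_div_gcd_ne_zero hPb0
        have hQ'0 : Qb / GCDMonoid.gcd Pb Qb ≠ 0 := right_div_gcd_ne_zero hQb0
        have hcop : IsCoprime (Pb / GCDMonoid.gcd Pb Qb) (Qb / GCDMonoid.gcd Pb Qb) :=
          isCoprime_div_gcd_div_gcd hQb0
        have hfP' : Pb = GCDMonoid.gcd Pb Qb * (Pb / GCDMonoid.gcd Pb Qb) :=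
          (EuclideanDomain.mul_div_cancel' hG0 (gcd_dvd_left _ _)).symm
        have hfQ' : Qb = GCDMonoid.gcd Pb Qb * (Qb / GCDMonoid.gcd Pb Qb) :=
          (EuclideanDomain.mul_div_cancel' hG0 (gcd_dvd_right _ _)).symm
        have hP'm : (Pb / GCDMonoid.gcd Pb Qb).natDegree ≤ m := by
          have := Polynomial.natDegree_mul hG0 hP'0
          rw [← hfP'] at this
          omega
        have hQ'n : (Qb / GCDMonoid.gcd Pb Qb).natDegree ≤ n := by
          have := Polynomial.natDegree_mul hG0 hQ'0
          rw [← hfQ'] at this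
          omega
        obtain ⟨u, v, hu, hv, heq⟩ := stmt15_interp _ _ h hP'0 hQ'0 hcop m n hP'm hQ'n hh
        refine ⟨u, v, hu, hv, ?_⟩
        calc u * Qb - v * Pb
            = u * (GCDMonoid.gcd Pb Qb * (Qb / GCDMonoid.gcd Pb Qb))
              - v * (GCDMonoid.gcd Pb Qb * (Pb / GCDMonoid.gcd Pb Qb)) := by rw [← hfP', ← hfQ']
          _ = GCDMonoid.gcd Pb Qb *
              (u * (Qb / GCDMonoid.gcd Pb Qb) - v * (Pb / GCDMonoid.gcd Pb Qb)) := by ring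
          _ = GCDMonoid.gcd Pb Qb * h := by rw [heq]
  have hGne : ∀ x : Set.Icc a b, G.eval ↑x ≠ 0 := by
    intro x h0
    have := hQbpos ↑x x.2
    rw [hfQ, Polynomial.eval_mul, h0, zero_mul] at this
    exact lt_irrefl _ this
  have hkey : p₁ * q₂ - p₂ * q₁ = G * (p₁ * Q' - q₁ * P') := by
    have h1 : p₁ * q₂ - p₂ * q₁ = p₁ * Qb - q₁ * Pb := by rw [hPbdef, hQbdef]; ring
    rw [h1, hfP, hfQ]; ring
  suffices hs' : p₁ * Q' - q₁ * P' = 0 by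
    intro x hx
    have h6 : (p₁ * q₂ - p₂ * q₁).eval x = 0 := by
      rw [hkey, hs', mul_zero, Polynomial.eval_zero]
    rw [div_eq_div_iff (ne_of_gt (hq₁pos x hx)) (ne_of_gt (hq₂pos x hx))]
    rw [Polynomial.eval_sub, Polynomial.eval_mul, Polynomial.eval_mul] at h6
    linarith
  by_contra hs'0
  set T : Finset ℝ := (p₁ * Q' - q₁ * P').roots.toFinset with hTdef
  have hTcard : T.card ≤ D :=
    le_trans (Multiset.toFinset_card_le _) (le_trans (Polynomial.card_roots' _) hsdeg)
  set vals : ℝ → ℝ := fun t => if ht : t ∈ Set.Icc a b then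
      (f ⟨t, ht⟩ - Pb.eval t / Qb.eval t) / G.eval t else 0 with hvalsdef
  set h := Lagrange.interpolate T id vals with hhdef
  have hhdeg : h.natDegree ≤ D := by
    by_cases h0 : h = 0
    · simp [h0]
    · have hd := Lagrange.degree_interpolate_lt vals (Set.injOn_id (T : Set ℝ))
      rw [← hhdef, Polynomial.degree_eq_natDegree h0] at hd
      have : h.natDegree < T.card := by exact_mod_cast hd
      omega
  obtain ⟨u, v, hu, hv, heq⟩ := hinterp h hhdeg
  have hAcond : ∀ x : Set.Icc a b, |f x - Pb.eval ↑x / Qb.eval ↑x| = E →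
      0 < (f x - Pb.eval ↑x / Qb.eval ↑x) * (u.eval ↑x * Qb.eval ↑x - v.eval ↑x * Pb.eval ↑x) := by
    intro x hxE
    have hroot : (p₁ * Q' - q₁ * P').eval ↑x = 0 := by
      have h6 := hcrit x hxE
      rw [hkey, Polynomial.eval_mul] at h6
      exact (mul_eq_zero.mp h6).resolve_left (hGne x)
    have hxT : (↑x : ℝ) ∈ T := by
      rw [hTdef, Multiset.mem_toFinset, Polynomial.mem_roots hs'0]
      exact hroot
    have h8 : h.eval ↑x = vals ↑x := by
      have h9 := Lagrange.eval_interpolate_at_node vals (Set.injOn_id (T : Set ℝ)) hxT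
      rw [← hhdef] at h9
      simpa using h9
    have hwx : u.eval ↑x * Qb.eval ↑x - v.eval ↑x * Pb.eval ↑x
        = f x - Pb.eval ↑x / Qb.eval ↑x := by
      have h7 : (u * Qb - v * Pb).eval ↑x = (G * h).eval ↑x := by rw [heq]
      rw [Polynomial.eval_sub, Polynomial.eval_mul, Polynomial.eval_mul,
        Polynomial.eval_mul] at h7
      rw [h8, hvalsdef] at h7
      simp only [dif_pos x.2] at h7
      rw [h7, mul_comm, div_mul_cancel₀ _ (hGne x)]
    rw [hwx]
    have hgn0 : f x - Pb.eval ↑x / Qb.eval ↑x ≠ 0 := by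
      intro h0
      rw [h0, abs_zero] at hxE
      linarith
    exact mul_self_pos.mpr hgn0
  obtain ⟨ε, hε0, hQεpos, E', hE'E, hbound⟩ :=
    stmt15_improve hab f Pb Qb u v hQbpos hE hgle hAcond
  have hdeg1 : (Pb + Polynomial.C ε * u).natDegree ≤ m :=
    (Polynomial.natDegree_add_le _ _).trans
      (max_le hPbdeg ((Polynomial.natDegree_C_mul_le _ _).trans hu))
  have hdeg2 : (Qb + Polynomial.C ε * v).natDegree ≤ n :=
    (Polynomial.natDegree_add_le _ _).trans
      (max_le hQbdeg ((Polynomial.natDegree_C_mul_le _ _).trans hv))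
  have hfin := hmin₁ (Pb + Polynomial.C ε * u) (Qb + Polynomial.C ε * v) hdeg1 hdeg2 hQεpos
  have hsup : (⨆ x : Set.Icc a b,
      |f x - (Pb + Polynomial.C ε * u).eval ↑x / (Qb + Polynomial.C ε * v).eval ↑x|) ≤ E' :=
    ciSup_le hbound
  linarith
end

section
/- Let X be a real normed linear space and define its modulus of convexity by δ(ε) := inf { 1 − ‖u + v‖/2 : u, v ∈ X, ‖u‖ ≤ 1, ‖v‖ ≤ 1, ‖u − v‖ ≥ ε } for ε ∈ (0, 2]. Let M be a linear subspace of X, let m* ∈ M be a best approximant to f ∈ X from M, and let m ∈ M with m ≠ m* and f ≠ m. Then ‖f − m‖ − ‖f − m*‖ ≥ ‖f − m‖ · δ( ‖m − m*‖ / ‖f − m‖ ). -/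
/-- The modulus of convexity of a normed space `X`:
`δ(ε) = inf { 1 − ‖u + v‖/2 : ‖u‖ ≤ 1, ‖v‖ ≤ 1, ‖u − v‖ ≥ ε }`. -/
noncomputable def modulusOfConvexity (X : Type*) [NormedAddCommGroup X] (ε : ℝ) : ℝ :=
  sInf {d : ℝ | ∃ u v : X, ‖u‖ ≤ 1 ∧ ‖v‖ ≤ 1 ∧ ε ≤ ‖u - v‖ ∧ d = 1 - ‖u + v‖ / 2}

/-- (Björnestål.)  If `m*` is a best approximant to `f` from a
linear subspace `M` of a real normed space `X`, then for every `m ∈ M` with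
`m ≠ m*` and `f ≠ m`,
`‖f − m‖ − ‖f − m*‖ ≥ ‖f − m‖ · δ(‖m − m*‖ / ‖f − m‖)`,
where `δ` is the modulus of convexity of `X`. -/
theorem stmt_16 {X : Type*} [NormedAddCommGroup X] [NormedSpace ℝ X]
    (M : Submodule ℝ X) (f mstar : X) (hmem : mstar ∈ M)
    (hbest : ∀ m ∈ M, ‖f - mstar‖ ≤ ‖f - m‖)
    (m : X) (hm : m ∈ M) (hne : m ≠ mstar) (hfm : f ≠ m) :
    ‖f - m‖ * modulusOfConvexity X (‖m - mstar‖ / ‖f - m‖) ≤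
      ‖f - m‖ - ‖f - mstar‖ := by
  have hpos : (0:ℝ) < ‖f - m‖ := by
    rw [norm_pos_iff, sub_ne_zero]; exact hfm
  set r : ℝ := ‖f - m‖ with hr
  set u : X := (r⁻¹) • (f - m) with hu
  set v : X := (r⁻¹) • (f - mstar) with hv
  have hrne : r ≠ 0 := ne_of_gt hpos
  have hnu : ‖u‖ ≤ 1 := by
    rw [hu, norm_smul, norm_inv, Real.norm_eq_abs, abs_of_pos hpos,
      inv_mul_cancel₀ hrne]
  have hnv : ‖v‖ ≤ 1 := by
    rw [hv, norm_smul, norm_inv, Real.norm_eq_abs, abs_of_pos hpos]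
    rw [inv_mul_le_iff₀ hpos, mul_one]
    exact hbest m hm
  have huv : ‖m - mstar‖ / r ≤ ‖u - v‖ := by
    rw [hu, hv, ← smul_sub, norm_smul, norm_inv, Real.norm_eq_abs, abs_of_pos hpos]
    have : f - m - (f - mstar) = -(m - mstar) := by abel
    rw [this, norm_neg, div_eq_inv_mul]
  -- midpoint bound
  have hmid : (2:ℝ)⁻¹ • (m + mstar) ∈ M := M.smul_mem _ (M.add_mem hm hmem)
  have hsum : 2 * ‖f - mstar‖ / r ≤ ‖u + v‖ := by
    have h1 : ‖f - mstar‖ ≤ ‖f - (2:ℝ)⁻¹ • (m + mstar)‖ := hbest _ hmid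
    have h2 : u + v = (r⁻¹ * 2) • (f - (2:ℝ)⁻¹ • (m + mstar)) := by
      rw [hu, hv, ← smul_add]
      module
    rw [h2, norm_smul, Real.norm_eq_abs, abs_of_pos (by positivity)]
    rw [div_le_iff₀ hpos]
    have := mul_le_mul_of_nonneg_left h1 (by positivity : (0:ℝ) ≤ r⁻¹ * 2)
    calc 2 * ‖f - mstar‖ = r⁻¹ * 2 * ‖f - mstar‖ * r := by
          field_simp
      _ ≤ r⁻¹ * 2 * ‖f - (2:ℝ)⁻¹ • (m + mstar)‖ * r := by
          apply mul_le_mul_of_nonneg_right this (le_of_lt hpos)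
  have hδ : modulusOfConvexity X (‖m - mstar‖ / r) ≤ 1 - ‖u + v‖ / 2 := by
    apply csInf_le
    · refine ⟨0, ?_⟩
      rintro d ⟨a, b, ha, hb, _, rfl⟩
      have : ‖a + b‖ ≤ 2 := (norm_add_le a b).trans (by linarith)
      linarith
    · exact ⟨u, v, hnu, hnv, huv, rfl⟩
  have : r * modulusOfConvexity X (‖m - mstar‖ / r) ≤ r * (1 - ‖u + v‖ / 2) :=
    mul_le_mul_of_nonneg_left hδ (le_of_lt hpos)
  refine this.trans ?_
  have : r * (2 * ‖f - mstar‖ / r) ≤ r * ‖u + v‖ :=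
    mul_le_mul_of_nonneg_left hsum (le_of_lt hpos)
  rw [mul_div_cancel₀ _ hrne] at this
  nlinarith
end

section
/- Let X be a real normed linear space whose modulus of convexity δ(ε) := inf { 1 − ‖u + v‖/2 : ‖u‖ ≤ 1, ‖v‖ ≤ 1, ‖u − v‖ ≥ ε } satisfies δ(ε) ≥ C·ε^q for all ε ∈ (0, 2], where C > 0 and q ≥ 1. Let M be a linear subspace of X and let m* ∈ M be a best approximant to f ∈ X from M. Then for every m ∈ M one has ‖f − m‖^q − ‖f − m*‖^q ≥ C·‖m − m*‖^q. -/
/-- Suppose the modulus of convexity of `X` satisfies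
`δ(ε) ≥ C·ε^q` for all `ε ∈ (0, 2]`, with `C > 0`, `q ≥ 1`.  If `m*` is a best
approximant to `f` from a linear subspace `M`, then for every `m ∈ M`,
`‖f − m‖^q − ‖f − m*‖^q ≥ C·‖m − m*‖^q`. -/
theorem stmt_17 {X : Type*} [NormedAddCommGroup X] [NormedSpace ℝ X]
    (C q : ℝ) (hC : 0 < C) (hq : 1 ≤ q)
    (hδ : ∀ ε : ℝ, 0 < ε → ε ≤ 2 → C * ε ^ q ≤ modulusOfConvexity X ε)
    (M : Submodule ℝ X) (f mstar : X) (hmem : mstar ∈ M)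
    (hbest : ∀ m ∈ M, ‖f - mstar‖ ≤ ‖f - m‖) :
    ∀ m ∈ M, C * ‖m - mstar‖ ^ q ≤ ‖f - m‖ ^ q - ‖f - mstar‖ ^ q := by
  intro m hm
  have hq0 : (0:ℝ) < q := lt_of_lt_of_le one_pos hq
  have hr0 : (0:ℝ) ≤ ‖f - mstar‖ := norm_nonneg _
  have hrR : ‖f - mstar‖ ≤ ‖f - m‖ := hbest m hm
  rcases eq_or_lt_of_le (norm_nonneg (f - m)) with hR0 | hR0
  · -- degenerate case R = 0
    have hfm : f - m = 0 := norm_eq_zero.mp hR0.symm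
    have hfs : f - mstar = 0 := norm_eq_zero.mp (le_antisymm (hR0 ▸ hrR) hr0)
    have hms : m - mstar = 0 := by
      have : m - mstar = (f - mstar) - (f - m) := by abel
      rw [this, hfm, hfs, sub_zero]
    rw [hms, hfm, hfs]
    simp [Real.zero_rpow hq0.ne']
  · by_cases hmm : m = mstar
    · rw [hmm, sub_self, norm_zero, Real.zero_rpow hq0.ne', mul_zero]
      simp
    · set r := ‖f - mstar‖ with hrdef
      set R := ‖f - m‖ with hRdef
      set ε := ‖m - mstar‖ / R with hεdef
      have hms0 : 0 < ‖m - mstar‖ := norm_pos_iff.mpr (sub_ne_zero.mpr hmm)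
      have hε0 : 0 < ε := div_pos hms0 hR0
      have hε2 : ε ≤ 2 := by
        rw [div_le_iff₀ hR0]
        have h1 : ‖m - mstar‖ ≤ ‖m - f‖ + ‖f - mstar‖ := by
          calc ‖m - mstar‖ = ‖(m - f) + (f - mstar)‖ := by abel_nf
            _ ≤ ‖m - f‖ + ‖f - mstar‖ := norm_add_le _ _
        have h2 : ‖m - f‖ = R := norm_sub_rev m f
        linarith
      -- the witnesses
      set u := R⁻¹ • (f - m) with hu
      set v := R⁻¹ • (f - mstar) with hv
      have hRinv : (0:ℝ) < R⁻¹ := inv_pos.mpr hR0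
      have hnu : ‖u‖ = 1 := by
        rw [hu, norm_smul, Real.norm_eq_abs, abs_of_pos hRinv, ← hRdef,
          inv_mul_cancel₀ hR0.ne']
      have hnv : ‖v‖ ≤ 1 := by
        rw [hv, norm_smul, Real.norm_eq_abs, abs_of_pos hRinv, ← hrdef]
        calc R⁻¹ * r ≤ R⁻¹ * R := by
              exact mul_le_mul_of_nonneg_left hrR hRinv.le
          _ = 1 := inv_mul_cancel₀ hR0.ne'
      have hnuv : ε ≤ ‖u - v‖ := by
        have : u - v = R⁻¹ • (mstar - m) := by
          rw [hu, hv, ← smul_sub]; congr 1; abel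
        rw [this, norm_smul, Real.norm_eq_abs, abs_of_pos hRinv,
          norm_sub_rev, hεdef, div_eq_inv_mul]
      have hbdd : BddBelow {d : ℝ | ∃ u v : X, ‖u‖ ≤ 1 ∧ ‖v‖ ≤ 1 ∧ ε ≤ ‖u - v‖ ∧
          d = 1 - ‖u + v‖ / 2} := by
        refine ⟨0, fun d hd => ?_⟩
        obtain ⟨a, b, ha, hb, -, hd⟩ := hd
        have := norm_add_le a b
        rw [hd]; linarith
      have hδle : modulusOfConvexity X ε ≤ 1 - ‖u + v‖ / 2 :=
        csInf_le hbdd ⟨u, v, hnu.le, hnv, hnuv, rfl⟩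
      -- lower bound on ‖u + v‖ from midpoint
      have hmid : ((2:ℝ)⁻¹ • (m + mstar)) ∈ M := M.smul_mem _ (M.add_mem hm hmem)
      have hmidle : r ≤ ‖f - (2:ℝ)⁻¹ • (m + mstar)‖ := hbest _ hmid
      have huv : ‖u + v‖ = R⁻¹ * (2 * ‖f - (2:ℝ)⁻¹ • (m + mstar)‖) := by
        have h1 : u + v = R⁻¹ • ((2:ℝ) • (f - (2:ℝ)⁻¹ • (m + mstar))) := by
          rw [hu, hv, ← smul_add]; congr 1
          module
        rw [h1, norm_smul, norm_smul, Real.norm_eq_abs, Real.norm_eq_abs,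
          abs_of_pos hRinv]
        norm_num
      have huvge : 2 * (r / R) ≤ ‖u + v‖ := by
        rw [huv]
        rw [div_eq_inv_mul]
        calc 2 * (R⁻¹ * r) ≤ 2 * (R⁻¹ * ‖f - (2:ℝ)⁻¹ • (m + mstar)‖) := by
              have := mul_le_mul_of_nonneg_left hmidle hRinv.le
              linarith
          _ = R⁻¹ * (2 * ‖f - (2:ℝ)⁻¹ • (m + mstar)‖) := by ring
      have hkey : C * ε ^ q ≤ 1 - r / R := by
        have := hδ ε hε0 hε2
        have h2 : 1 - ‖u + v‖ / 2 ≤ 1 - r / R := by linarith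
        linarith
      -- now multiply by R^q
      have hRq : (0:ℝ) < R ^ q := Real.rpow_pos_of_pos hR0 q
      have hmul : C * ‖m - mstar‖ ^ q ≤ (1 - r / R) * R ^ q := by
        have hεR : ‖m - mstar‖ = ε * R := by
          rw [hεdef, div_mul_cancel₀ _ hR0.ne']
        rw [hεR, Real.mul_rpow hε0.le hR0.le]
        calc C * (ε ^ q * R ^ q) = (C * ε ^ q) * R ^ q := by ring
          _ ≤ (1 - r / R) * R ^ q := mul_le_mul_of_nonneg_right hkey hRq.le
      have hfinal : (1 - r / R) * R ^ q ≤ R ^ q - r ^ q := by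
        have hRsplit : R ^ q = R * R ^ (q - 1) := by
          rw [← Real.rpow_one_add' hR0.le (by linarith : 1 + (q-1) ≠ 0)]
          norm_num
        have hrq : r ^ q ≤ r * R ^ (q - 1) := by
          rcases eq_or_lt_of_le hr0 with hr | hr
          · rw [← hr, Real.zero_rpow hq0.ne', zero_mul]
          · have h1 : r ^ q = r * r ^ (q - 1) := by
              rw [← Real.rpow_one_add' hr0 (by linarith : 1 + (q-1) ≠ 0)]
              norm_num
            rw [h1]
            exact mul_le_mul_of_nonneg_left
              (Real.rpow_le_rpow hr0 hrR (by linarith)) hr0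
        have h2 : (1 - r / R) * R ^ q = R ^ q - r * R ^ (q - 1) := by
          rw [hRsplit]; field_simp
        rw [h2]
        linarith
      linarith
end
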